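/- arXiv:1405.4880 — 9 statements merged into one kernel-verified Lean document; each statement's English description precedes it below -/
import Mathlib

section
/- Let G = (V,E) be a connected bipartite simple graph and O an acyclic orientation of G that is not one of the two bipartite orientations. Then the number of linear extensions of the poset induced by O is strictly less than the number of linear extensions of the poset induced by a bipartite orientation of G. -/
/-- An orientation of a simple graph `G`: a choice of direction for each edge. -/
structure GraphOrientation {V : Type*} (G : SimpleGraph V) where
  dir : V → V → Prop
  dir_adj : ∀ u v, dir u v → G.Adj u v
  adj_dir : ∀ u v, G.Adj u v → dir u v ∨ dir v u
  asymm : ∀ u v, dir u v → ¬ dir v u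

/-- An orientation is acyclic if there is no directed cycle. -/
def GraphOrientation.Acyclic {V : Type*} {G : SimpleGraph V} (O : GraphOrientation G) : Prop :=
  ∀ v, ¬ Relation.TransGen O.dir v v

/-- Linear extensions of the poset induced (by reachability) by an orientation:
bijective labelings of the vertices by `Fin (card V)` compatible with directed paths. -/
def GraphOrientation.LinExt {V : Type*} [Fintype V] {G : SimpleGraph V} (O : GraphOrientation G) :
    Type _ :=
  {f : V ≃ Fin (Fintype.card V) // ∀ u v, Relation.TransGen O.dir u v → f u < f v}

/-- The number of linear extensions of the poset induced by an orientation. -/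
noncomputable def GraphOrientation.numLinExt {V : Type*} [Fintype V] {G : SimpleGraph V}
    (O : GraphOrientation G) : ℕ :=
  Nat.card O.LinExt

/-!
Count the labelings `V → {1, …, m}` that strictly increase along the arcs of an orientation `O`:
the injective ones number `e(O) · C(m, n)`, the others `O(m ^ (n - 1))`. Subtracting from each
label the largest label of an in-neighbour embeds them (for acyclic `O`) into the labelings whose
edge sums are at most `m`; adding to each label on the sink side of the bipartition the largest
label of a neighbour embeds those into the strict labelings of the bipartite orientation `Ob`.
If `O` has a directed path `u → v → w` and `m = 6k`, the first embedding misses the `k ^ n`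
labelings with values in `(2k, 3k]`, whose sum on `u, v, w` exceeds `m`. Hence
`e(O) · C(m, n) + k ^ n ≤ e(Ob) · C(m, n) + O(m ^ (n - 1))`, and large `k` forces `e(O) < e(Ob)`.
Every orientation of a connected bipartite graph other than the two bipartite ones has such a path.
-/

section

open Finset Function

variable {V : Type*} {G : SimpleGraph V}

lemma lt_of_transGen {α : Type*} [Preorder α] {r : V → V → Prop} {φ : V → α}
    (hφ : ∀ u v, r u v → φ u < φ v) {u v : V} (h : Relation.TransGen r u v) : φ u < φ v := by
  have := h.lift φ hφ
  rwa [Relation.transGen_eq_self] at this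

lemma finite_of_forall_le [Finite V] {m : ℕ} {P : (V → ℕ) → Prop}
    (h : ∀ f, P f → ∀ v, f v ≤ m) : Finite {f : V → ℕ // P f} :=
  Finite.of_injective (fun f v => (⟨f.1 v, Nat.lt_succ_of_le (h f.1 f.2 v)⟩ : Fin (m + 1)))
    fun _ _ hfg => Subtype.ext <| funext fun v => congrArg Fin.val (congrFun hfg v)

lemma card_not_injective_le {W : Type*} [Fintype V] [Fintype W] :
    Nat.card {f : V → W // ¬ Injective f} ≤
      Fintype.card V ^ 2 * Fintype.card W ^ (Fintype.card V - 1) := by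
  classical
  let Collision := {p : V × V × (V → W) // p.1 ≠ p.2.1 ∧ p.2.2 p.1 = p.2.2 p.2.1}
  have h₁ : Nat.card {f : V → W // ¬ Injective f} ≤ Nat.card Collision := by
    refine Nat.card_le_card_of_injective (fun f =>
      have hf := not_injective_iff.1 f.2
      ⟨(hf.choose, hf.choose_spec.choose, f.1), hf.choose_spec.choose_spec.2,
        hf.choose_spec.choose_spec.1⟩) ?_
    exact fun f g hfg => Subtype.ext (congrArg (·.1.2.2) hfg)
  have h₂ : Nat.card Collision ≤ Nat.card (Σ b : V, V × ({x // x ≠ b} → W)) := by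
    refine Nat.card_le_card_of_injective (fun p => ⟨p.1.2.1, p.1.1, fun x => p.1.2.2 x⟩) ?_
    intro ⟨⟨a, b, f⟩, hab, hf⟩ ⟨⟨a', b', g⟩, _, hg⟩ h
    dsimp only at hab hf hg h
    obtain ⟨rfl, h⟩ := Sigma.mk.inj_iff.1 h
    obtain ⟨rfl, h⟩ := Prod.ext_iff.1 (eq_of_heq h)
    have hx (x : V) (hx : x ≠ b) : f x = g x := congrFun h ⟨x, hx⟩
    suffices f = g by subst this; rfl
    funext x
    by_cases hxb : x = b
    · subst hxb
      rw [← hf, ← hg, hx a hab]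
    · exact hx x hxb
  calc _ ≤ _ := h₁.trans h₂
    _ = _ := by
      simp [Nat.card_eq_fintype_card, Fintype.card_sigma, Fintype.card_subtype_compl]
      ring

lemma exists_mul_pow_lt_pow (a c : ℕ) {n : ℕ} (hn : 0 < n) :
    ∃ k, c * (a * k + 1) ^ (n - 1) < k ^ n := by
  set k := c * (a + 1) ^ (n - 1) + 1
  refine ⟨k, ?_⟩
  calc c * (a * k + 1) ^ (n - 1) ≤ c * ((a + 1) * k) ^ (n - 1) := by
        gcongr
        rw [add_mul, one_mul]
        omega
    _ = c * (a + 1) ^ (n - 1) * k ^ (n - 1) := by rw [mul_pow, mul_assoc]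
    _ < k * k ^ (n - 1) := Nat.mul_lt_mul_of_pos_right (by omega) (by positivity)
    _ = k ^ n := by rw [← pow_succ', Nat.sub_add_cancel hn]

lemma SimpleGraph.mem_iff_notMem_of_adj {S T : Set V} (hST : Disjoint S T)
    (hbip : ∀ u v, G.Adj u v → (u ∈ S ∧ v ∈ T) ∨ (u ∈ T ∧ v ∈ S)) {u v : V} (h : G.Adj u v) :
    u ∈ S ↔ v ∉ S := by
  have hu : u ∈ S → u ∉ T := fun h => Set.disjoint_left.1 hST h
  have hv : v ∈ S → v ∉ T := fun h => Set.disjoint_left.1 hST h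
  rcases hbip u v h with h | h <;> tauto

lemma GraphOrientation.exists_dir_dir (hconn : G.Preconnected) {V1 V2 : Set V}
    (hdisj : Disjoint V1 V2)
    (hbip : ∀ u v, G.Adj u v → (u ∈ V1 ∧ v ∈ V2) ∨ (u ∈ V2 ∧ v ∈ V1)) (O : GraphOrientation G)
    (hnotbip : ¬ (∀ u v, O.dir u v → u ∈ V1 ∧ v ∈ V2) ∧
      ¬ (∀ u v, O.dir u v → u ∈ V2 ∧ v ∈ V1)) :
    ∃ u v w, O.dir u v ∧ O.dir v w := by
  by_contra! hpath
  let IsSource (v : V) : Prop := ∃ w, O.dir v w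
  -- Without directed paths of length two, sources and sinks alternate along edges, as do the sides.
  have hadj (u v : V) (huv : G.Adj u v) :
      ((u ∈ V1 ↔ IsSource u) ↔ (v ∈ V1 ↔ IsSource v)) := by
    have := SimpleGraph.mem_iff_notMem_of_adj hdisj hbip huv
    rcases O.adj_dir u v huv with h | h
    · have : ¬ IsSource v := fun ⟨w, hw⟩ => hpath u v w h hw
      have : IsSource u := ⟨v, h⟩
      tauto
    · have : ¬ IsSource u := fun ⟨w, hw⟩ => hpath v u w h hw
      have : IsSource v := ⟨u, h⟩
      tauto
  have hconst (u v : V) : (u ∈ V1 ↔ IsSource u) ↔ (v ∈ V1 ↔ IsSource v) := by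
    obtain ⟨p⟩ := hconn u v
    induction p with
    | nil => rfl
    | cons h _ ih => exact (hadj _ _ h).trans ih
  obtain ⟨a, b, hab, hab'⟩ : ∃ a b, O.dir a b ∧ ¬ (a ∈ V1 ∧ b ∈ V2) := by
    simpa using hnotbip.1
  obtain ⟨c, d, hcd, hcd'⟩ : ∃ c d, O.dir c d ∧ ¬ (c ∈ V2 ∧ d ∈ V1) := by
    simpa using hnotbip.2
  have ha : a ∉ V1 := fun ha => by
    rcases hbip a b (O.dir_adj a b hab) with h | h
    · exact hab' h
    · exact Set.disjoint_left.1 hdisj ha h.1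
  have hc : c ∈ V1 := by
    rcases hbip c d (O.dir_adj c d hcd) with h | h
    · exact h.1
    · exact absurd h hcd'
  exact ha (((hconst a c).2 (iff_of_true hc ⟨d, hcd⟩)).2 ⟨b, hab⟩)

section predSup

variable [Fintype V] {r : V → V → Prop} {f g : V → ℕ} {u v : V}

open Classical

noncomputable def predSup (r : V → V → Prop) (f : V → ℕ) (v : V) : ℕ :=
  (univ.filter (r · v)).sup f

lemma le_predSup (h : r u v) : f u ≤ predSup r f v :=
  Finset.le_sup (mem_filter.2 ⟨mem_univ u, h⟩)

lemma predSup_le {c : ℕ} (h : ∀ u, r u v → f u ≤ c) : predSup r f v ≤ c :=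
  Finset.sup_le fun u hu => h u (mem_filter.1 hu).2

lemma predSup_lt {c : ℕ} (hc : 0 < c) (h : ∀ u, r u v → f u < c) : predSup r f v < c :=
  (Finset.sup_lt_iff hc).2 fun u hu => h u (mem_filter.1 hu).2

lemma predSup_congr (h : ∀ u, r u v → f u = g u) : predSup r f v = predSup r g v :=
  Finset.sup_congr rfl fun u hu => h u (mem_filter.1 hu).2

end predSup

def GraphOrientation.StrictLabeling (O : GraphOrientation G) (m : ℕ) : Type _ :=
  {f : V → ℕ // (∀ v, 1 ≤ f v ∧ f v ≤ m) ∧ ∀ u v, O.dir u v → f u < f v}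

def SimpleGraph.EdgeSumLabeling (G : SimpleGraph V) (m : ℕ) : Type _ :=
  {f : V → ℕ // (∀ v, 1 ≤ f v ∧ f v ≤ m) ∧ ∀ u v, G.Adj u v → f u + f v ≤ m}

instance [Finite V] (O : GraphOrientation G) (m : ℕ) : Finite (O.StrictLabeling m) :=
  finite_of_forall_le fun _ hf v => (hf.1 v).2

instance [Finite V] (m : ℕ) : Finite (G.EdgeSumLabeling m) :=
  finite_of_forall_le fun _ hf v => (hf.1 v).2

namespace GraphOrientation

variable [Fintype V] {O : GraphOrientation G} {m : ℕ}

def StrictLabeling.ofLinExt (e : O.LinExt) (s : powersetCard (Fintype.card V) (Icc 1 m)) :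
    O.StrictLabeling m :=
  ⟨fun v => s.1.orderEmbOfFin (mem_powersetCard.1 s.2).2 (e.1 v),
    fun _ => mem_Icc.1 ((mem_powersetCard.1 s.2).1 (orderEmbOfFin_mem _ _ _)),
    fun u v h => (orderEmbOfFin _ _).strictMono (e.2 u v (.single h))⟩

lemma StrictLabeling.injective_ofLinExt (e : O.LinExt)
    (s : powersetCard (Fintype.card V) (Icc 1 m)) : Injective (ofLinExt e s).1 :=
  (orderEmbOfFin _ _).injective.comp e.1.injective

lemma StrictLabeling.image_ofLinExt (e : O.LinExt) (s : powersetCard (Fintype.card V) (Icc 1 m)) :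
    univ.image (ofLinExt e s).1 = s.1 := by
  rw [← coe_inj, coe_image, coe_univ, Set.image_univ]
  exact (e.1.surjective.range_comp _).trans (range_orderEmbOfFin _ _)

lemma StrictLabeling.ofLinExt_injective :
    Injective fun p : O.LinExt × powersetCard (Fintype.card V) (Icc 1 m) => ofLinExt p.1 p.2 := by
  rintro ⟨e₁, s₁⟩ ⟨e₂, s₂⟩ h
  obtain rfl : s₁ = s₂ := Subtype.ext <| by
    simpa only [image_ofLinExt] using congrArg (fun f : O.StrictLabeling m => univ.image f.1) h
  obtain rfl : e₁ = e₂ := Subtype.ext <| Equiv.ext fun v =>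
    (orderEmbOfFin _ _).injective (congrFun (congrArg Subtype.val h) v)
  rfl

lemma StrictLabeling.exists_ofLinExt_eq (f : O.StrictLabeling m) (hf : Injective f.1) :
    ∃ e s, ofLinExt (O := O) e s = f := by
  classical
  set s := univ.image f.1
  have hs : s.card = Fintype.card V := by rw [card_image_of_injective _ hf, card_univ]
  let toS : V ≃ s := Equiv.ofBijective (fun v => ⟨f.1 v, mem_image_of_mem _ (mem_univ v)⟩)
    ⟨fun u v h => hf (congrArg Subtype.val h), fun ⟨x, hx⟩ => by
      obtain ⟨v, -, rfl⟩ := mem_image.1 hx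
      exact ⟨v, rfl⟩⟩
  let e : V ≃ Fin (Fintype.card V) := toS.trans (s.orderIsoOfFin hs).symm.toEquiv
  have he : ∀ u v, Relation.TransGen O.dir u v → e u < e v := fun u v h =>
    (s.orderIsoOfFin hs).symm.strictMono (lt_of_transGen (φ := f.1) f.2.2 h)
  have hsub : s ∈ powersetCard (Fintype.card V) (Icc 1 m) :=
    mem_powersetCard.2 ⟨fun x hx => by
      obtain ⟨v, -, rfl⟩ := mem_image.1 hx
      exact mem_Icc.2 (f.2.1 v), hs⟩
  refine ⟨⟨e, he⟩, ⟨s, hsub⟩, Subtype.ext (funext fun v => ?_)⟩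
  exact congrArg Subtype.val ((s.orderIsoOfFin hs).apply_symm_apply (toS v))

lemma card_injective_strictLabeling :
    Nat.card {f : O.StrictLabeling m // Injective f.1} =
      O.numLinExt * m.choose (Fintype.card V) := by
  rw [← Nat.card_eq_of_bijective
    (fun p : O.LinExt × powersetCard (Fintype.card V) (Icc 1 m) =>
      (⟨StrictLabeling.ofLinExt p.1 p.2, StrictLabeling.injective_ofLinExt p.1 p.2⟩ :
        {f : O.StrictLabeling m // Injective f.1}))
    ⟨fun p q h => StrictLabeling.ofLinExt_injective (congrArg Subtype.val h),
      fun ⟨f, hf⟩ => by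
        obtain ⟨e, s, rfl⟩ := StrictLabeling.exists_ofLinExt_eq f hf
        exact ⟨(e, s), rfl⟩⟩]
  rw [Nat.card_prod, Nat.card_eq_fintype_card (α := powersetCard _ _), Fintype.card_coe,
    card_powersetCard, Nat.card_Icc, Nat.add_sub_cancel]
  rfl

lemma card_strictLabeling_le :
    Nat.card (O.StrictLabeling m) ≤
      O.numLinExt * m.choose (Fintype.card V) +
        Fintype.card V ^ 2 * (m + 1) ^ (Fintype.card V - 1) := by
  have hnoninj : Nat.card {f : O.StrictLabeling m // ¬ Injective f.1} ≤
      Nat.card {g : V → Fin (m + 1) // ¬ Injective g} :=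
    Nat.card_le_card_of_injective
      (fun f => ⟨fun v => ⟨f.1.1 v, Nat.lt_succ_of_le (f.1.2.1 v).2⟩,
        fun hg => f.2 fun _ _ h => hg (Fin.ext h)⟩)
      fun _ _ h => Subtype.ext <| Subtype.ext <| funext fun v =>
        congrArg Fin.val (congrFun (congrArg Subtype.val h) v)
  have := card_not_injective_le (V := V) (W := Fin (m + 1))
  rw [Fintype.card_fin] at this
  rw [← Nat.card_congr (Equiv.sumCompl fun f : O.StrictLabeling m => Injective f.1),
    Nat.card_sum, card_injective_strictLabeling]
  omega

end GraphOrientation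

namespace GraphOrientation.StrictLabeling

variable [Fintype V] {O : GraphOrientation G} {m : ℕ} {u v w : V}

lemma predSup_lt_self (f : O.StrictLabeling m) (v : V) : predSup O.dir f.1 v < f.1 v :=
  predSup_lt (f.2.1 v).1 fun u h => f.2.2 u v h

lemma sub_predSup_le (f : O.StrictLabeling m) (h : O.dir u v) :
    f.1 v - predSup O.dir f.1 v ≤ f.1 v - f.1 u :=
  Nat.sub_le_sub_left (le_predSup h) _

noncomputable def drop (f : O.StrictLabeling m) : G.EdgeSumLabeling m :=
  ⟨fun v => f.1 v - predSup O.dir f.1 v, fun v => by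
    dsimp only
    have := f.predSup_lt_self v
    have := f.2.1 v
    omega, fun u v huv => by
    dsimp only
    rcases O.adj_dir u v huv with h | h
    · have := f.sub_predSup_le h
      have := f.2.2 u v h
      have := f.2.1 v
      omega
    · have := f.sub_predSup_le h
      have := f.2.2 v u h
      have := f.2.1 u
      omega⟩

lemma drop_add_add_le (f : O.StrictLabeling m) (huv : O.dir u v) (hvw : O.dir v w) :
    f.drop.1 u + f.drop.1 v + f.drop.1 w ≤ m := by
  have := f.sub_predSup_le huv
  have := f.sub_predSup_le hvw
  have := f.2.2 u v huv
  have := f.2.2 v w hvw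
  have := f.2.1 w
  simp only [drop]
  omega

lemma drop_injective (hO : O.Acyclic) : Injective (drop (O := O) (m := m)) := by
  intro f g hfg
  have hwf : WellFounded (Relation.TransGen O.dir) :=
    haveI : Std.Irrefl (Relation.TransGen O.dir) := ⟨hO⟩
    Finite.wellFounded_of_trans_of_irrefl _
  apply Subtype.ext
  funext v
  induction v using hwf.induction with
  | _ v ih =>
    have hpred : predSup O.dir f.1 v = predSup O.dir g.1 v :=
      predSup_congr fun u h => ih u (.single h)
    have hv := congrFun (congrArg Subtype.val hfg) v
    have := f.predSup_lt_self v
    have := g.predSup_lt_self v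
    simp only [drop] at hv
    omega

end GraphOrientation.StrictLabeling

section Bipartite

variable [Fintype V] {m : ℕ} {S : Set V}

open Classical in
noncomputable def SimpleGraph.EdgeSumLabeling.raise (S : Set V) (g : G.EdgeSumLabeling m) :
    V → ℕ :=
  fun v => if v ∈ S then g.1 v else g.1 v + predSup G.Adj g.1 v

lemma SimpleGraph.EdgeSumLabeling.raise_injective
    (hS : ∀ u v, G.Adj u v → (u ∈ S ↔ v ∉ S)) :
    Injective (raise (G := G) (m := m) S) := by
  intro g₁ g₂ h
  have hagree : ∀ u ∈ S, g₁.1 u = g₂.1 u := fun u hu => by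
    simpa [raise, hu] using congrFun h u
  apply Subtype.ext
  funext v
  by_cases hv : v ∈ S
  · exact hagree v hv
  · have hpred : predSup G.Adj g₁.1 v = predSup G.Adj g₂.1 v :=
      predSup_congr fun u huv => hagree u ((hS u v huv).2 hv)
    have := congrFun h v
    simp only [raise, hv, if_false, hpred] at this
    omega

lemma card_edgeSumLabeling_le (hS : ∀ u v, G.Adj u v → (u ∈ S ↔ v ∉ S))
    {Ob : GraphOrientation G} (hOb : ∀ u v, Ob.dir u v → u ∈ S) :
    Nat.card (G.EdgeSumLabeling m) ≤ Nat.card (Ob.StrictLabeling m) := by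
  refine Nat.card_le_card_of_injective (fun g => ⟨g.raise S, fun v => ?_, fun u v huv => ?_⟩)
    fun g₁ g₂ h => SimpleGraph.EdgeSumLabeling.raise_injective hS (congrArg Subtype.val h)
  · have hle : predSup G.Adj g.1 v ≤ m - g.1 v :=
      predSup_le fun u huv => by have := g.2.2 u v huv; omega
    have := g.2.1 v
    by_cases hv : v ∈ S <;> simp only [SimpleGraph.EdgeSumLabeling.raise, hv, if_true,
      if_false] <;> omega
  · have hu := hOb u v huv
    have hv := (hS u v (Ob.dir_adj u v huv)).1 hu
    have := le_predSup (f := g.1) (Ob.dir_adj u v huv)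
    have := g.2.1 v
    simp only [SimpleGraph.EdgeSumLabeling.raise, hu, hv, if_true, if_false]
    omega

end Bipartite

lemma SimpleGraph.pow_le_card_edgeSumLabeling_sum_gt [Fintype V] (u v w : V) (k : ℕ) :
    k ^ Fintype.card V ≤
      Nat.card {g : G.EdgeSumLabeling (6 * k) // 6 * k < g.1 u + g.1 v + g.1 w} := by
  have hval (p : V → Fin k) (x : V) : 2 * k + 1 ≤ 2 * k + 1 + (p x : ℕ) ∧
      2 * k + 1 + (p x : ℕ) ≤ 3 * k := by
    have := (p x).2
    omega
  let toLabeling (p : V → Fin k) :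
      {g : G.EdgeSumLabeling (6 * k) // 6 * k < g.1 u + g.1 v + g.1 w} :=
    ⟨⟨fun x => 2 * k + 1 + p x, fun x => by dsimp only; have := hval p x; omega,
      fun x y _ => by dsimp only; have := hval p x; have := hval p y; omega⟩, by
        dsimp only; have := hval p u; have := hval p v; have := hval p w; omega⟩
  have hinj : Injective toLabeling := fun p q h => funext fun x => Fin.ext <| by
    have := congrFun (congrArg (fun g => g.1.1) h) x
    simpa [toLabeling] using this
  calc k ^ Fintype.card V = Nat.card (V → Fin k) := by
        rw [Nat.card_fun, Nat.card_eq_fintype_card (α := Fin k), Fintype.card_fin,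
          Nat.card_eq_fintype_card]
    _ ≤ _ := Nat.card_le_card_of_injective _ hinj

namespace GraphOrientation

variable [Fintype V] {O : GraphOrientation G} {u v w : V}

lemma numLinExt_mul_choose_add_pow_le (hO : O.Acyclic) (huv : O.dir u v) (hvw : O.dir v w)
    (k : ℕ) :
    O.numLinExt * (6 * k).choose (Fintype.card V) + k ^ Fintype.card V ≤
      Nat.card (G.EdgeSumLabeling (6 * k)) := by
  have hinj : Injective (Sum.elim
      (fun f : {f : O.StrictLabeling (6 * k) // Injective f.1} => f.1.drop)
      (fun g : {g : G.EdgeSumLabeling (6 * k) // 6 * k < g.1 u + g.1 v + g.1 w} => g.1)) :=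
    ((StrictLabeling.drop_injective hO).comp Subtype.val_injective).sumElim
      Subtype.val_injective fun f g h => by
        have := f.1.drop_add_add_le huv hvw
        have := g.2
        rw [← h, Function.comp_apply] at this
        omega
  calc _ ≤ Nat.card ({f : O.StrictLabeling (6 * k) // Injective f.1} ⊕
        {g : G.EdgeSumLabeling (6 * k) // 6 * k < g.1 u + g.1 v + g.1 w}) := by
        rw [Nat.card_sum, card_injective_strictLabeling]
        exact Nat.add_le_add_left (SimpleGraph.pow_le_card_edgeSumLabeling_sum_gt u v w k) _
    _ ≤ _ := Nat.card_le_card_of_injective _ hinj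

theorem numLinExt_lt_of_dir_dir {S : Set V} (hS : ∀ u v, G.Adj u v → (u ∈ S ↔ v ∉ S))
    {Ob : GraphOrientation G} (hO : O.Acyclic) (hOb : ∀ u v, Ob.dir u v → u ∈ S)
    (huv : O.dir u v) (hvw : O.dir v w) :
    O.numLinExt < Ob.numLinExt := by
  by_contra! hle
  set n := Fintype.card V
  obtain ⟨k, hk⟩ := exists_mul_pow_lt_pow 6 (n ^ 2) (n := n) (Fintype.card_pos_iff.2 ⟨u⟩)
  have := calc O.numLinExt * (6 * k).choose n + k ^ n
      ≤ Nat.card (G.EdgeSumLabeling (6 * k)) := numLinExt_mul_choose_add_pow_le hO huv hvw k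
    _ ≤ Nat.card (Ob.StrictLabeling (6 * k)) := card_edgeSumLabeling_le hS hOb
    _ ≤ Ob.numLinExt * (6 * k).choose n + n ^ 2 * (6 * k + 1) ^ (n - 1) :=
      card_strictLabeling_le
    _ ≤ O.numLinExt * (6 * k).choose n + n ^ 2 * (6 * k + 1) ^ (n - 1) := by gcongr
  omega

end GraphOrientation

end

theorem stmt_1_general {V : Type*} [Fintype V] (G : SimpleGraph V) (hconn : G.Connected)
    (V1 V2 : Set V) (hdisj : Disjoint V1 V2)
    (hbip : ∀ u v, G.Adj u v → (u ∈ V1 ∧ v ∈ V2) ∨ (u ∈ V2 ∧ v ∈ V1))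
    (O Ob : GraphOrientation G) (hO : O.Acyclic)
    (hOb : (∀ u v, Ob.dir u v ↔ G.Adj u v ∧ u ∈ V1 ∧ v ∈ V2) ∨
           (∀ u v, Ob.dir u v ↔ G.Adj u v ∧ u ∈ V2 ∧ v ∈ V1))
    (hnotbip : ¬ (∀ u v, O.dir u v → u ∈ V1 ∧ v ∈ V2) ∧
               ¬ (∀ u v, O.dir u v → u ∈ V2 ∧ v ∈ V1)) :
    O.numLinExt < Ob.numLinExt := by
  obtain ⟨u, v, w, huv, hvw⟩ := O.exists_dir_dir hconn.preconnected hdisj hbip hnotbip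
  rcases hOb with hOb | hOb
  · exact GraphOrientation.numLinExt_lt_of_dir_dir
      (fun _ _ => SimpleGraph.mem_iff_notMem_of_adj hdisj hbip) hO
      (fun a b hab => ((hOb a b).1 hab).2.1) huv hvw
  · exact GraphOrientation.numLinExt_lt_of_dir_dir
      (fun _ _ => SimpleGraph.mem_iff_notMem_of_adj hdisj.symm fun a b h => (hbip a b h).symm)
      hO (fun a b hab => ((hOb a b).1 hab).2.1) huv hvw

theorem stmt_1 {V : Type*} [Fintype V] (G : SimpleGraph V) (hconn : G.Connected)
    (V1 V2 : Set V) (hdisj : Disjoint V1 V2) (hunion : V1 ∪ V2 = Set.univ)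
    (hbip : ∀ u v, G.Adj u v → (u ∈ V1 ∧ v ∈ V2) ∨ (u ∈ V2 ∧ v ∈ V1))
    (O Ob : GraphOrientation G) (hO : O.Acyclic)
    (hOb : (∀ u v, Ob.dir u v ↔ G.Adj u v ∧ u ∈ V1 ∧ v ∈ V2) ∨
           (∀ u v, Ob.dir u v ↔ G.Adj u v ∧ u ∈ V2 ∧ v ∈ V1))
    (hnotbip : ¬ (∀ u v, O.dir u v → u ∈ V1 ∧ v ∈ V2) ∧
               ¬ (∀ u v, O.dir u v → u ∈ V2 ∧ v ∈ V1)) :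
    O.numLinExt < Ob.numLinExt :=
  stmt_1_general G hconn V1 V2 hdisj hbip O Ob hO hOb hnotbip
end

section
/- For any partial order P on [n], the vertices of the order polytope O(P) are exactly the indicator vectors e_I of order filters I of P, and the vertices of the chain polytope C(P) are exactly the indicator vectors e_A of antichains A of P. -/
open MeasureTheory

/-- The order polytope of a partial order `P` on `Fin n`. -/
def orderPolytope (n : ℕ) (P : PartialOrder (Fin n)) : Set (Fin n → ℝ) :=
  {x | (∀ i, 0 ≤ x i ∧ x i ≤ 1) ∧ ∀ j k, P.le j k → x j ≤ x k}

/-- The chain polytope of a partial order `P` on `Fin n`. -/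
def chainPolytope (n : ℕ) (P : PartialOrder (Fin n)) : Set (Fin n → ℝ) :=
  {x | (∀ i, 0 ≤ x i) ∧ ∀ C : Finset (Fin n), IsChain P.le ↑C → ∑ i ∈ C, x i ≤ 1}

/-- The number of linear extensions of a partial order `P` on `Fin n`. -/
noncomputable def numLinExtOrder (n : ℕ) (P : PartialOrder (Fin n)) : ℕ :=
  Nat.card {f : Fin n ≃ Fin n // ∀ j k, P.lt j k → f j < f k}

/-!
A point `x` with a coordinate strictly between `0` and `1` is not extreme. For `0 < τ < 1` the
maps `t ↦ min t τ / τ` and `t ↦ (max t τ - τ) / (1 - τ)` are monotone self-maps of `[0, 1]`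
whose average with weights `τ` and `1 - τ` is the identity. Applied coordinatewise they preserve
`O(P)`, so they split `x` inside `O(P)`, and the split is proper when `τ` is a fractional
coordinate of `x`. For `C(P)`, first lay `x` out as intervals `[a k, a k + x k] ⊆ [0, 1]`, where
`a k` is the heaviest chain strictly below `k`; along a chain these intervals follow each other,
so they are disjoint and any such layout gives back a point of `C(P)`. Rescaling the endpoints
of the layout then splits `x` in the same way, and the split is proper when `τ` is an endpoint
of the interval of a fractional coordinate. Conversely, a `0`/`1` point of a subset of the
unit cube is extreme, and the `0`/`1` points of `O(P)` and `C(P)` are the indicators of order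
filters and of antichains.
-/

open Set Finset

noncomputable def lowerRescale (τ t : ℝ) : ℝ := min t τ / τ

noncomputable def upperRescale (τ t : ℝ) : ℝ := (max t τ - τ) / (1 - τ)

section Rescale

variable {τ : ℝ}

theorem monotone_lowerRescale (hτ : 0 ≤ τ) : Monotone (lowerRescale τ) :=
  fun _ _ h => div_le_div_of_nonneg_right (min_le_min_right τ h) hτ

theorem mapsTo_lowerRescale (hτ : 0 ≤ τ) : MapsTo (lowerRescale τ) (Icc 0 1) (Icc 0 1) :=
  fun _ ht => ⟨div_nonneg (le_min ht.1 hτ) hτ, div_le_one_of_le₀ (min_le_right _ _) hτ⟩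

theorem monotone_upperRescale (hτ : τ ≤ 1) : Monotone (upperRescale τ) :=
  fun _ _ h => div_le_div_of_nonneg_right (by gcongr) (sub_nonneg.2 hτ)

theorem mapsTo_upperRescale (hτ : τ ≤ 1) : MapsTo (upperRescale τ) (Icc 0 1) (Icc 0 1) :=
  fun _ ht => ⟨div_nonneg (sub_nonneg.2 (le_max_right _ _)) (sub_nonneg.2 hτ),
    div_le_one_of_le₀ (by gcongr; exact max_le ht.2 hτ) (sub_nonneg.2 hτ)⟩

theorem lowerRescale_of_le (hτ : 0 < τ) {t : ℝ} (ht : τ ≤ t) : lowerRescale τ t = 1 := by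
  rw [lowerRescale, min_eq_right ht, div_self hτ.ne']

theorem lowerRescale_zero (hτ : 0 ≤ τ) : lowerRescale τ 0 = 0 := by
  rw [lowerRescale, min_eq_left hτ, zero_div]

theorem lowerRescale_add_upperRescale (h₀ : 0 < τ) (h₁ : τ < 1) (t : ℝ) :
    τ * lowerRescale τ t + (1 - τ) * upperRescale τ t = t := by
  have : 1 - τ ≠ 0 := (sub_pos.2 h₁).ne'
  rw [lowerRescale, upperRescale, mul_div_cancel₀ _ h₀.ne', mul_div_cancel₀ _ this]
  linarith [min_add_max t τ]

end Rescale

theorem eq_of_mem_extremePoints_of_smul_add_smul {E : Type*} [AddCommGroup E] [Module ℝ E]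
    {s : Set E} {x y z : E} (hx : x ∈ s.extremePoints ℝ) (hy : y ∈ s) (hz : z ∈ s) {τ : ℝ}
    (h₀ : 0 < τ) (h₁ : τ < 1) (h : τ • y + (1 - τ) • z = x) : y = x :=
  hx.2 hy hz ⟨τ, 1 - τ, h₀, sub_pos.2 h₁, add_sub_cancel _ _, h⟩

theorem mem_extremePoints_of_subset_pi_Icc {ι : Type*} {s : Set (ι → ℝ)}
    (hs : s ⊆ univ.pi fun _ => Icc 0 1) {x : ι → ℝ} (hx : x ∈ s)
    (h01 : ∀ i, x i = 0 ∨ x i = 1) : x ∈ s.extremePoints ℝ :=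
  inter_extremePoints_subset_extremePoints_of_subset hs
    ⟨hx, by
      rw [extremePoints_pi]
      intro i _
      rw [extremePoints_Icc zero_le_one]
      exact h01 i⟩

theorem eq_indicator_of_forall_eq_zero_or_one {ι : Type*} {x : ι → ℝ}
    (h01 : ∀ i, x i = 0 ∨ x i = 1) : x = {i | x i = 1}.indicator fun _ => 1 := by
  classical
  funext i
  rcases h01 i with h | h <;> simp [h]

structure IsChainLayout {α : Type*} [PartialOrder α] (a b : α → ℝ) : Prop where
  nonneg : ∀ k, 0 ≤ a k
  le : ∀ k, a k ≤ b k
  le_one : ∀ k, b k ≤ 1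
  le_of_lt : ∀ ⦃j k⦄, j < k → b j ≤ a k

namespace IsChainLayout

variable {α : Type*} [PartialOrder α] {a b : α → ℝ}

theorem comp (h : IsChainLayout a b) {f : ℝ → ℝ} (hf : Monotone f)
    (hf' : MapsTo f (Icc 0 1) (Icc 0 1)) : IsChainLayout (f ∘ a) (f ∘ b) where
  nonneg k := (hf' ⟨h.nonneg k, (h.le k).trans (h.le_one k)⟩).1
  le k := hf (h.le k)
  le_one k := (hf' ⟨(h.nonneg k).trans (h.le k), h.le_one k⟩).2
  le_of_lt _ _ hjk := hf (h.le_of_lt hjk)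

theorem sum_sub_le_one (h : IsChainLayout a b) {C : Finset α}
    (hC : IsChain (· ≤ ·) (C : Set α)) : ∑ k ∈ C, (b k - a k) ≤ 1 := by
  have hdisj : (C : Set α).PairwiseDisjoint fun k => Ico (a k) (b k) := by
    intro j hj k hk hne
    have ordered : ∀ {j k}, j < k → Disjoint (Ico (a j) (b j)) (Ico (a k) (b k)) :=
      fun hjk => Set.disjoint_left.2 fun t ht ht' => (ht.2.trans_le (h.le_of_lt hjk)).not_ge ht'.1
    rcases hC hj hk hne with hjk | hkj
    · exact ordered (lt_of_le_of_ne hjk hne)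
    · exact (ordered (lt_of_le_of_ne hkj hne.symm)).symm
  have hsub : (⋃ k ∈ C, Ico (a k) (b k)) ⊆ Ico 0 1 :=
    iUnion₂_subset fun k _ => Ico_subset_Ico (h.nonneg k) (h.le_one k)
  have hvol := measure_mono (μ := volume) hsub
  rw [measure_biUnion_finset hdisj fun _ _ => measurableSet_Ico] at hvol
  simp only [Real.volume_Ico] at hvol
  rwa [← ENNReal.ofReal_sum_of_nonneg fun k _ => sub_nonneg.2 (h.le k), sub_zero,
    ENNReal.ofReal_le_ofReal_iff zero_le_one] at hvol

end IsChainLayout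

theorem exists_isChainLayout {α : Type*} [PartialOrder α] [Fintype α] {x : α → ℝ}
    (hx₀ : ∀ k, 0 ≤ x k)
    (hx₁ : ∀ C : Finset α, IsChain (· ≤ ·) (C : Set α) → ∑ i ∈ C, x i ≤ 1) :
    ∃ a, IsChainLayout a (a + x) := by
  classical
  let below (k : α) (C : Finset α) : Prop := IsChain (· ≤ ·) (C : Set α) ∧ ∀ j ∈ C, j < k
  have heaviest (k : α) : ∃ C, below k C ∧ ∀ D, below k D → ∑ i ∈ D, x i ≤ ∑ i ∈ C, x i := by
    obtain ⟨C, hC, hmax⟩ := (univ.filter (below k)).exists_max_image (fun C => ∑ i ∈ C, x i)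
      ⟨∅, by simp [below]⟩
    exact ⟨C, (mem_filter.1 hC).2, fun D hD => hmax D (mem_filter.2 ⟨mem_univ D, hD⟩)⟩
  choose C hC hCmax using heaviest
  have top {k : α} {D : Finset α} (hD : below k D) :
      IsChain (· ≤ ·) ((insert k D : Finset α) : Set α) ∧
        ∑ i ∈ insert k D, x i = ∑ i ∈ D, x i + x k := by
    have hk : k ∉ D := fun hk => lt_irrefl k (hD.2 k hk)
    refine ⟨?_, by rw [sum_insert hk, add_comm]⟩
    rw [coe_insert]
    exact hD.1.insert fun j hj _ => Or.inr (hD.2 j hj).le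
  refine ⟨fun k => ∑ i ∈ C k, x i, ⟨fun k => sum_nonneg fun i _ => hx₀ i,
    fun k => le_add_of_nonneg_right (hx₀ k), fun k => ?_, fun j k hjk => ?_⟩⟩
  · obtain ⟨hchain, hsum⟩ := top (hC k)
    simpa [hsum] using hx₁ _ hchain
  · obtain ⟨hchain, hsum⟩ := top (hC j)
    refine (hsum.symm.trans_le (hCmax k _ ⟨hchain, ?_⟩) :)
    intro i hi
    rcases mem_insert.1 hi with rfl | hi
    · exact hjk
    · exact ((hC j).2 i hi).trans hjk

section Polytopes

variable {n : ℕ} (P : PartialOrder (Fin n))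

theorem orderPolytope_subset_pi : orderPolytope n P ⊆ univ.pi fun _ => Icc 0 1 :=
  fun _ hx i _ => hx.1 i

theorem chainPolytope_subset_pi : chainPolytope n P ⊆ univ.pi fun _ => Icc 0 1 :=
  fun x hx i _ => ⟨hx.1 i, by simpa using hx.2 {i} (by simp)⟩

theorem comp_mem_orderPolytope {x : Fin n → ℝ} (hx : x ∈ orderPolytope n P) {f : ℝ → ℝ}
    (hf : Monotone f) (hf' : MapsTo f (Icc 0 1) (Icc 0 1)) : f ∘ x ∈ orderPolytope n P :=
  ⟨fun i => hf' (hx.1 i), fun j k hjk => hf (hx.2 j k hjk)⟩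

theorem eq_zero_or_one_of_mem_extremePoints_orderPolytope {x : Fin n → ℝ}
    (hx : x ∈ (orderPolytope n P).extremePoints ℝ) (k : Fin n) : x k = 0 ∨ x k = 1 := by
  by_contra! hk
  set τ := x k
  have h₀ : 0 < τ := lt_of_le_of_ne (hx.1.1 k).1 hk.1.symm
  have h₁ : τ < 1 := lt_of_le_of_ne (hx.1.1 k).2 hk.2
  -- cutting at the height of `x k` pushes `x k` up to `1` in the lower part
  have hlow : lowerRescale τ ∘ x = x :=
    eq_of_mem_extremePoints_of_smul_add_smul hx
      (comp_mem_orderPolytope P hx.1 (monotone_lowerRescale h₀.le) (mapsTo_lowerRescale h₀.le))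
      (comp_mem_orderPolytope P hx.1 (monotone_upperRescale h₁.le) (mapsTo_upperRescale h₁.le))
      h₀ h₁ (funext fun i => lowerRescale_add_upperRescale h₀ h₁ (x i))
  have hk₁ := congrFun hlow k
  rw [Function.comp_apply, lowerRescale_of_le h₀ le_rfl] at hk₁
  exact hk.2 hk₁.symm

theorem eq_zero_or_one_of_mem_extremePoints_chainPolytope {x : Fin n → ℝ}
    (hx : x ∈ (chainPolytope n P).extremePoints ℝ) (k : Fin n) : x k = 0 ∨ x k = 1 := by
  let _ := P
  obtain ⟨a, ha⟩ := exists_isChainLayout hx.1.1 hx.1.2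
  have mem {f : ℝ → ℝ} (hf : Monotone f) (hf' : MapsTo f (Icc 0 1) (Icc 0 1)) :
      f ∘ (a + x) - f ∘ a ∈ chainPolytope n P :=
    ⟨fun i => sub_nonneg.2 ((ha.comp hf hf').le i), fun _ hC => (ha.comp hf hf').sum_sub_le_one hC⟩
  have hlow {τ : ℝ} (h₀ : 0 < τ) (h₁ : τ < 1) :
      lowerRescale τ (a k + x k) - lowerRescale τ (a k) = x k := by
    refine congrFun (eq_of_mem_extremePoints_of_smul_add_smul hx
      (mem (monotone_lowerRescale h₀.le) (mapsTo_lowerRescale h₀.le))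
      (mem (monotone_upperRescale h₁.le) (mapsTo_upperRescale h₁.le)) h₀ h₁ (funext fun i => ?_)) k
    simp only [Pi.add_apply, Pi.sub_apply, Pi.smul_apply, Function.comp_apply, smul_eq_mul]
    linear_combination lowerRescale_add_upperRescale h₀ h₁ (a i + x i) -
      lowerRescale_add_upperRescale h₀ h₁ (a i)
  by_contra! hk
  have hx₀ : 0 < x k := lt_of_le_of_ne (hx.1.1 k) hk.1.symm
  have hb₁ : a k + x k ≤ 1 := ha.le_one k
  -- cut at the bottom end `a k` of the interval of `k`, or at its top end if `a k = 0`
  rcases (ha.nonneg k).eq_or_lt with ha₀ | ha₀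
  · have h := hlow hx₀ (lt_of_le_of_ne (by linarith) hk.2)
    rw [← ha₀, zero_add, lowerRescale_of_le hx₀ le_rfl, lowerRescale_zero hx₀.le, sub_zero] at h
    exact hk.2 h.symm
  · have h := hlow ha₀ (by linarith)
    rw [lowerRescale_of_le ha₀ (le_add_of_nonneg_right hx₀.le), lowerRescale_of_le ha₀ le_rfl,
      sub_self] at h
    exact hk.1 h.symm

theorem eq_one_of_mem_orderPolytope_of_le {x : Fin n → ℝ} (hx : x ∈ orderPolytope n P)
    {j k : Fin n} (hjk : P.le j k) (hj : x j = 1) : x k = 1 :=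
  le_antisymm (hx.1 k).2 (hj ▸ hx.2 j k hjk)

theorem isAntichain_setOf_eq_one_of_mem_chainPolytope {x : Fin n → ℝ}
    (hx : x ∈ chainPolytope n P) : IsAntichain P.le {i | x i = 1} := by
  intro j (hj : x j = 1) k (hk : x k = 1) hne hjk
  have h := hx.2 {j, k} (by rw [coe_pair]; exact IsChain.pair hjk)
  rw [sum_pair hne, hj, hk] at h
  norm_num at h

theorem indicator_mem_orderPolytope {I : Set (Fin n)} (hI : ∀ j k, P.le j k → j ∈ I → k ∈ I) :
    I.indicator (fun _ => (1 : ℝ)) ∈ orderPolytope n P := by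
  classical
  refine ⟨fun i => ⟨indicator_nonneg (fun _ _ => zero_le_one) i,
    indicator_apply_le' (fun _ => le_rfl) (fun _ => zero_le_one)⟩, fun j k hjk => ?_⟩
  by_cases hj : j ∈ I
  · simp [hj, hI j k hjk hj]
  · simp [hj, indicator_nonneg]

theorem indicator_mem_chainPolytope {A : Set (Fin n)} (hA : IsAntichain P.le A) :
    A.indicator (fun _ => (1 : ℝ)) ∈ chainPolytope n P := by
  classical
  refine ⟨indicator_nonneg fun _ _ => zero_le_one, fun C hC => ?_⟩
  simp only [indicator_apply]
  rw [sum_boole]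
  have hCA := inter_subsingleton_of_isChain_of_isAntichain hC hA
  exact_mod_cast card_le_one.2 fun i hi j hj =>
    hCA ⟨(mem_filter.1 hi).1, (mem_filter.1 hi).2⟩ ⟨(mem_filter.1 hj).1, (mem_filter.1 hj).2⟩

end Polytopes

theorem stmt_3 (n : ℕ) (P : PartialOrder (Fin n)) :
    (Set.extremePoints ℝ (orderPolytope n P) =
      {x | ∃ I : Set (Fin n), (∀ j k, P.le j k → j ∈ I → k ∈ I) ∧
        x = I.indicator (fun _ => (1 : ℝ))}) ∧
    (Set.extremePoints ℝ (chainPolytope n P) =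
      {x | ∃ A : Set (Fin n), IsAntichain P.le A ∧
        x = A.indicator (fun _ => (1 : ℝ))}) := by
  refine ⟨Set.ext fun x => ⟨fun hx => ?_, ?_⟩, Set.ext fun x => ⟨fun hx => ?_, ?_⟩⟩
  · exact ⟨_, fun j k hjk => eq_one_of_mem_orderPolytope_of_le P hx.1 hjk,
      eq_indicator_of_forall_eq_zero_or_one
        (eq_zero_or_one_of_mem_extremePoints_orderPolytope P hx)⟩
  · rintro ⟨I, hI, rfl⟩
    exact mem_extremePoints_of_subset_pi_Icc (orderPolytope_subset_pi P)
      (indicator_mem_orderPolytope P hI) fun i => indicator_eq_zero_or_self _ _ i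
  · exact ⟨_, isAntichain_setOf_eq_one_of_mem_chainPolytope P hx.1,
      eq_indicator_of_forall_eq_zero_or_one
        (eq_zero_or_one_of_mem_extremePoints_chainPolytope P hx)⟩
  · rintro ⟨A, hA, rfl⟩
    exact mem_extremePoints_of_subset_pi_Icc (chainPolytope_subset_pi P)
      (indicator_mem_chainPolytope P hA) fun i => indicator_eq_zero_or_self _ _ i
end

section
/- Stanley's transfer map φ : O(P) → C(P), defined by φ(x)_i = x_i − max_{j ⋖ i} x_j for non-minimal i and φ(x)_i = x_i for minimal i, is a bijection between the order polytope and the chain polytope, with inverse φ⁻¹(x)_i = max over chains C of P with maximal element i of ∑_{j∈C} x_j. -/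
open MeasureTheory

/-- `j` is covered by `i` in the partial order `P`. -/
def covers (n : ℕ) (P : PartialOrder (Fin n)) (j i : Fin n) : Prop :=
  P.lt j i ∧ ∀ k, ¬ (P.lt j k ∧ P.lt k i)

/-- Stanley's transfer map.  (For `i` minimal, the set below is empty and `sSup ∅ = 0`
in `ℝ`, so `φ x i = x i` as required.) -/
noncomputable def transferMap (n : ℕ) (P : PartialOrder (Fin n)) (x : Fin n → ℝ) :
    Fin n → ℝ :=
  fun i => x i - sSup {y : ℝ | ∃ j, covers n P j i ∧ y = x j}

/-- The inverse of the transfer map: `x i` maximized over chains with maximal element `i`. -/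
noncomputable def transferInv (n : ℕ) (P : PartialOrder (Fin n)) (x : Fin n → ℝ) :
    Fin n → ℝ :=
  fun i => sSup {s : ℝ | ∃ C : Finset (Fin n),
    IsChain P.le ↑C ∧ i ∈ C ∧ (∀ j ∈ C, P.le j i) ∧ s = ∑ j ∈ C, x j}

namespace StanleyAux

variable {n : ℕ} {P : PartialOrder (Fin n)}

/-! Basic order facts, phrased with explicit `P.le`/`P.lt`. -/

lemma ple_refl (a : Fin n) : P.le a a := @le_refl _ P.toPreorder a

lemma ple_trans {a b c : Fin n} (h1 : P.le a b) (h2 : P.le b c) : P.le a c :=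
  @le_trans _ P.toPreorder _ _ _ h1 h2

lemma ple_of_lt {a b : Fin n} (h : P.lt a b) : P.le a b := @le_of_lt _ P.toPreorder _ _ h

lemma plt_of_le_ne {a b : Fin n} (h : P.le a b) (hne : a ≠ b) : P.lt a b :=
  @lt_of_le_of_ne _ P _ _ h hne

lemma plt_trans {a b c : Fin n} (h1 : P.lt a b) (h2 : P.lt b c) : P.lt a c :=
  @lt_trans _ P.toPreorder _ _ _ h1 h2

lemma plt_of_le_of_lt {a b c : Fin n} (h1 : P.le a b) (h2 : P.lt b c) : P.lt a c :=
  @lt_of_le_of_lt _ P.toPreorder _ _ _ h1 h2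

lemma plt_of_lt_of_le {a b c : Fin n} (h1 : P.lt a b) (h2 : P.le b c) : P.lt a c :=
  @lt_of_lt_of_le _ P.toPreorder _ _ _ h1 h2

lemma plt_irrefl (a : Fin n) : ¬ P.lt a a := @lt_irrefl _ P.toPreorder a

lemma pantisymm {a b : Fin n} (h1 : P.le a b) (h2 : P.le b a) : a = b :=
  @le_antisymm _ P _ _ h1 h2

lemma pne_of_lt {a b : Fin n} (h : P.lt a b) : a ≠ b :=
  fun he => plt_irrefl b (he ▸ h)

lemma wf_gt : WellFounded (flip P.lt) := by
  haveI : IsTrans (Fin n) (flip P.lt) := ⟨fun a b c h1 h2 => plt_trans h2 h1⟩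
  haveI : IsIrrefl (Fin n) (flip P.lt) := ⟨fun a h => plt_irrefl a h⟩
  exact Finite.wellFounded_of_trans_of_irrefl _

lemma wf_lt : WellFounded (P.lt) := by
  haveI : IsTrans (Fin n) P.lt := ⟨fun a b c h1 h2 => plt_trans h1 h2⟩
  haveI : IsIrrefl (Fin n) P.lt := ⟨fun a h => plt_irrefl a h⟩
  exact Finite.wellFounded_of_trans_of_irrefl _

/-- A nonempty finite chain has a greatest element. -/
lemma chain_max {C : Finset (Fin n)} (hC : IsChain P.le ↑C) (hne : C.Nonempty) :
    ∃ m ∈ C, ∀ b ∈ C, P.le b m := by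
  obtain ⟨m, hm, hmax⟩ := wf_gt.has_min (↑C : Set (Fin n)) (Finset.coe_nonempty.mpr hne)
  refine ⟨m, hm, fun b hb => ?_⟩
  by_cases hbm : b = m
  · exact hbm ▸ ple_refl b
  · rcases hC (by exact_mod_cast hb) (by exact_mod_cast hm) hbm with h | h
    · exact h
    · exact absurd (plt_of_le_ne h (Ne.symm hbm)) (hmax b hb)

/-- Between `j < i` there is an element above `j` covered by `i`. -/
lemma exists_cover {j i : Fin n} (h : P.lt j i) :
    ∃ j', P.le j j' ∧ covers n P j' i := by
  obtain ⟨m, ⟨hjm, hmi⟩, hmax⟩ := wf_gt.has_min {m | P.le j m ∧ P.lt m i}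
      ⟨j, ple_refl j, h⟩
  refine ⟨m, hjm, hmi, fun k ⟨h1, h2⟩ => hmax k ⟨ple_trans hjm (ple_of_lt h1), h2⟩ h1⟩

/-! Finiteness of the relevant sup sets. -/

lemma covSet_finite (x : Fin n → ℝ) (i : Fin n) :
    ({y : ℝ | ∃ j, covers n P j i ∧ y = x j}).Finite :=
  (Set.finite_range x).subset (by rintro y ⟨j, _, rfl⟩; exact ⟨j, rfl⟩)

lemma chainSet_finite (x : Fin n → ℝ) (i : Fin n) :
    ({s : ℝ | ∃ C : Finset (Fin n),
      IsChain P.le ↑C ∧ i ∈ C ∧ (∀ j ∈ C, P.le j i) ∧ s = ∑ j ∈ C, x j}).Finite :=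
  (Set.finite_range (fun C : Finset (Fin n) => ∑ j ∈ C, x j)).subset
    (by rintro s ⟨C, _, _, _, rfl⟩; exact ⟨C, rfl⟩)

lemma singleton_mem_chainSet (x : Fin n → ℝ) (i : Fin n) :
    x i ∈ {s : ℝ | ∃ C : Finset (Fin n),
      IsChain P.le ↑C ∧ i ∈ C ∧ (∀ j ∈ C, P.le j i) ∧ s = ∑ j ∈ C, x j} := by
  refine ⟨{i}, ?_, Finset.mem_singleton_self i, ?_, ?_⟩
  · rw [Finset.coe_singleton]; exact Set.subsingleton_singleton.isChain
  · intro j hj; rw [Finset.mem_singleton] at hj; exact hj ▸ ple_refl i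
  · rw [Finset.sum_singleton]

lemma chainSet_nonempty (x : Fin n → ℝ) (i : Fin n) :
    ({s : ℝ | ∃ C : Finset (Fin n),
      IsChain P.le ↑C ∧ i ∈ C ∧ (∀ j ∈ C, P.le j i) ∧ s = ∑ j ∈ C, x j}).Nonempty :=
  ⟨x i, singleton_mem_chainSet x i⟩

/-! Bounds on the sup over covers. -/

lemma covSup_nonneg {x : Fin n → ℝ} (hx : x ∈ orderPolytope n P) (i : Fin n) :
    0 ≤ sSup {y : ℝ | ∃ j, covers n P j i ∧ y = x j} := by
  rcases Set.eq_empty_or_nonempty {y : ℝ | ∃ j, covers n P j i ∧ y = x j} with h | h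
  · rw [h, Real.sSup_empty]
  · obtain ⟨j, _, hj⟩ := h.csSup_mem (covSet_finite x i)
    rw [hj]; exact (hx.1 j).1

lemma covSup_le {x : Fin n → ℝ} (hx : x ∈ orderPolytope n P) (i : Fin n) :
    sSup {y : ℝ | ∃ j, covers n P j i ∧ y = x j} ≤ x i := by
  rcases Set.eq_empty_or_nonempty {y : ℝ | ∃ j, covers n P j i ∧ y = x j} with h | h
  · rw [h, Real.sSup_empty]; exact (hx.1 i).1
  · refine csSup_le h ?_
    rintro y ⟨j, hcov, rfl⟩
    exact hx.2 j i (ple_of_lt hcov.1)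

lemma le_covSup (x : Fin n → ℝ) {j i : Fin n} (hcov : covers n P j i) :
    x j ≤ sSup {y : ℝ | ∃ j, covers n P j i ∧ y = x j} :=
  le_csSup (covSet_finite x i).bddAbove ⟨j, hcov, rfl⟩

/-- Key bound: the transfer-map sum over a chain with top element `i` is at most `x i`. -/
lemma sum_transfer_le {x : Fin n → ℝ} (hx : x ∈ orderPolytope n P) :
    ∀ C : Finset (Fin n), ∀ i, IsChain P.le ↑C → i ∈ C → (∀ j ∈ C, P.le j i) →
      ∑ j ∈ C, transferMap n P x j ≤ x i := by
  intro C
  induction C using Finset.strongInduction with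
  | _ C ih =>
    intro i hchain hiC hle
    rw [← Finset.sum_erase_add _ _ hiC]
    have hφ : transferMap n P x i = x i - sSup {y : ℝ | ∃ j, covers n P j i ∧ y = x j} := rfl
    rcases Finset.eq_empty_or_nonempty (C.erase i) with he | hne
    · rw [he, Finset.sum_empty, hφ]
      have := covSup_nonneg hx i
      linarith
    · have hsub : ↑(C.erase i) ⊆ (↑C : Set (Fin n)) := by
        exact_mod_cast Finset.erase_subset i C
      have hchain' : IsChain P.le ↑(C.erase i) := hchain.mono hsub
      obtain ⟨m, hm, hmax⟩ := chain_max hchain' hne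
      have hmi : P.lt m i :=
        plt_of_le_ne (hle m (Finset.mem_of_mem_erase hm)) (Finset.ne_of_mem_erase hm)
      obtain ⟨j', hmj', hcov⟩ := exists_cover hmi
      have h1 : ∑ j ∈ C.erase i, transferMap n P x j ≤ x m :=
        ih (C.erase i) (Finset.erase_ssubset hiC) m hchain' hm hmax
      have h2 : x m ≤ sSup {y : ℝ | ∃ j, covers n P j i ∧ y = x j} :=
        le_trans (hx.2 m j' hmj') (le_covSup x hcov)
      rw [hφ]; linarith

/-- There is a chain with top element `i` whose transfer-map sum equals `x i`. -/
lemma exists_chain_sum_eq {x : Fin n → ℝ} (hx : x ∈ orderPolytope n P) (i : Fin n) :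
    ∃ C : Finset (Fin n), IsChain P.le ↑C ∧ i ∈ C ∧ (∀ j ∈ C, P.le j i) ∧
      ∑ j ∈ C, transferMap n P x j = x i := by
  induction i using WellFounded.induction with
  | hwf => exact wf_lt (P := P)
  | _ i ih =>
    rcases Set.eq_empty_or_nonempty {y : ℝ | ∃ j, covers n P j i ∧ y = x j} with h | h
    · refine ⟨{i}, ?_, Finset.mem_singleton_self i, ?_, ?_⟩
      · rw [Finset.coe_singleton]; exact Set.subsingleton_singleton.isChain
      · intro j hj; rw [Finset.mem_singleton] at hj; exact hj ▸ ple_refl i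
      · rw [Finset.sum_singleton]
        show x i - sSup {y : ℝ | ∃ j, covers n P j i ∧ y = x j} = x i
        rw [h, Real.sSup_empty, sub_zero]
    · obtain ⟨j, hcov, hj⟩ := h.csSup_mem (covSet_finite x i)
      obtain ⟨C', hchain', hjC', hle', hsum'⟩ := ih j hcov.1
      have hiC' : i ∉ C' := fun hi =>
        plt_irrefl i (plt_of_le_of_lt (hle' i hi) hcov.1)
      refine ⟨insert i C', ?_, Finset.mem_insert_self i C', ?_, ?_⟩
      · rw [Finset.coe_insert]
        exact hchain'.insert fun b hb _ =>
          Or.inr (ple_trans (hle' b (by exact_mod_cast hb)) (ple_of_lt hcov.1))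
      · intro k hk
        rcases Finset.mem_insert.mp hk with rfl | hk
        · exact ple_refl k
        · exact ple_trans (hle' k hk) (ple_of_lt hcov.1)
      · rw [Finset.sum_insert hiC', hsum']
        show x i - sSup {y : ℝ | ∃ j, covers n P j i ∧ y = x j} + x j = x i
        rw [← hj]; ring

/-! Membership lemmas. -/

lemma transfer_mem_chainPolytope {x : Fin n → ℝ} (hx : x ∈ orderPolytope n P) :
    transferMap n P x ∈ chainPolytope n P := by
  constructor
  · intro i
    have : transferMap n P x i = x i - sSup {y : ℝ | ∃ j, covers n P j i ∧ y = x j} := rfl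
    rw [this, sub_nonneg]
    exact covSup_le hx i
  · intro C hC
    rcases Finset.eq_empty_or_nonempty C with rfl | hne
    · simp
    · obtain ⟨m, hm, hmax⟩ := chain_max hC hne
      exact le_trans (sum_transfer_le hx C m hC hm hmax) (hx.1 m).2

/-- Any chain sum is at most `transferInv`. -/
lemma le_transferInv (y : Fin n → ℝ) (i : Fin n) {C : Finset (Fin n)}
    (hC : IsChain P.le ↑C) (hiC : i ∈ C) (hle : ∀ j ∈ C, P.le j i) :
    ∑ j ∈ C, y j ≤ transferInv n P y i :=
  le_csSup (chainSet_finite y i).bddAbove ⟨C, hC, hiC, hle, rfl⟩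

/-- `transferInv` is attained by some chain. -/
lemma transferInv_attained (y : Fin n → ℝ) (i : Fin n) :
    ∃ C : Finset (Fin n), IsChain P.le ↑C ∧ i ∈ C ∧ (∀ j ∈ C, P.le j i) ∧
      transferInv n P y i = ∑ j ∈ C, y j :=
  (chainSet_nonempty y i).csSup_mem (chainSet_finite y i)

lemma self_le_transferInv (y : Fin n → ℝ) (i : Fin n) :
    y i ≤ transferInv n P y i :=
  le_csSup (chainSet_finite y i).bddAbove (singleton_mem_chainSet y i)

lemma inv_mem_orderPolytope {y : Fin n → ℝ} (hy : y ∈ chainPolytope n P) :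
    transferInv n P y ∈ orderPolytope n P := by
  refine ⟨fun i => ⟨le_trans (hy.1 i) (self_le_transferInv y i), ?_⟩, ?_⟩
  · refine csSup_le (chainSet_nonempty y i) ?_
    rintro s ⟨C, hC, _, _, rfl⟩
    exact hy.2 C hC
  · intro j k hjk
    refine csSup_le (chainSet_nonempty y j) ?_
    rintro s ⟨C, hC, hjC, hle, rfl⟩
    by_cases hk : k ∈ C
    · exact le_transferInv y k hC hk fun b hb => ple_trans (hle b hb) hjk
    · have hC' : IsChain P.le ↑(insert k C) := by
        rw [Finset.coe_insert]
        exact hC.insert fun b hb _ =>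
          Or.inr (ple_trans (hle b (by exact_mod_cast hb)) hjk)
      have h1 : ∑ b ∈ insert k C, y b ≤ transferInv n P y k := by
        refine le_transferInv y k hC' (Finset.mem_insert_self k C) ?_
        intro b hb
        rcases Finset.mem_insert.mp hb with rfl | hb
        · exact ple_refl b
        · exact ple_trans (hle b hb) hjk
      rw [Finset.sum_insert hk] at h1
      have := hy.1 k
      linarith

/-- Left inverse: `transferInv ∘ transferMap = id` on the order polytope. -/
lemma left_inv {x : Fin n → ℝ} (hx : x ∈ orderPolytope n P) :
    transferInv n P (transferMap n P x) = x := by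
  funext i
  apply le_antisymm
  · refine csSup_le (chainSet_nonempty _ i) ?_
    rintro s ⟨C, hC, hiC, hle, rfl⟩
    exact sum_transfer_le hx C i hC hiC hle
  · obtain ⟨C, hC, hiC, hle, hsum⟩ := exists_chain_sum_eq hx i
    exact hsum ▸ le_transferInv _ i hC hiC hle

/-- Right inverse: `transferMap ∘ transferInv = id` on the chain polytope. -/
lemma right_inv {y : Fin n → ℝ} (hy : y ∈ chainPolytope n P) :
    transferMap n P (transferInv n P y) = y := by
  funext i
  set ψ := transferInv n P y with hψdef
  have hφ : transferMap n P ψ i = ψ i - sSup {z : ℝ | ∃ j, covers n P j i ∧ z = ψ j} := rfl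
  rcases Set.eq_empty_or_nonempty {z : ℝ | ∃ j, covers n P j i ∧ z = ψ j} with hS | hS
  · -- `i` is minimal: every admissible chain is `{i}`.
    have hψi : ψ i = y i := by
      apply le_antisymm
      · refine csSup_le (chainSet_nonempty y i) ?_
        rintro s ⟨C, hC, hiC, hle, rfl⟩
        have hCi : C = {i} := by
          apply Finset.eq_singleton_iff_unique_mem.mpr
          refine ⟨hiC, fun j hj => ?_⟩
          by_contra hne
          have hji : P.lt j i := plt_of_le_ne (hle j hj) hne
          obtain ⟨j', _, hcov⟩ := exists_cover hji
          have hmem : ψ j' ∈ {z : ℝ | ∃ j, covers n P j i ∧ z = ψ j} := ⟨j', hcov, rfl⟩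
          rw [hS] at hmem
          exact hmem
        rw [hCi, Finset.sum_singleton]
      · exact self_le_transferInv y i
    rw [hφ, hS, Real.sSup_empty, sub_zero, hψi]
  · obtain ⟨j₀, hcov₀, hj₀⟩ := hS.csSup_mem (covSet_finite ψ i)
    have hS0 : 0 ≤ sSup {z : ℝ | ∃ j, covers n P j i ∧ z = ψ j} := by
      rw [hj₀]
      exact le_trans (hy.1 j₀) (self_le_transferInv y j₀)
    have hge : y i + sSup {z : ℝ | ∃ j, covers n P j i ∧ z = ψ j} ≤ ψ i := by
      rw [hj₀]
      obtain ⟨C₀, hC₀, hj₀C, hle₀, hsum₀⟩ := transferInv_attained y j₀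
      have hiC₀ : i ∉ C₀ := fun hi =>
        plt_irrefl i (plt_of_le_of_lt (hle₀ i hi) hcov₀.1)
      have hC₀' : IsChain P.le ↑(insert i C₀) := by
        rw [Finset.coe_insert]
        exact hC₀.insert fun b hb _ =>
          Or.inr (ple_trans (hle₀ b (by exact_mod_cast hb)) (ple_of_lt hcov₀.1))
      have h1 : ∑ b ∈ insert i C₀, y b ≤ ψ i := by
        refine le_transferInv y i hC₀' (Finset.mem_insert_self i C₀) ?_
        intro b hb
        rcases Finset.mem_insert.mp hb with rfl | hb
        · exact ple_refl b
        · exact ple_trans (hle₀ b hb) (ple_of_lt hcov₀.1)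
      rw [Finset.sum_insert hiC₀, ← hsum₀] at h1
      exact h1
    have hle : ψ i ≤ y i + sSup {z : ℝ | ∃ j, covers n P j i ∧ z = ψ j} := by
      refine csSup_le (chainSet_nonempty y i) ?_
      rintro s ⟨C, hC, hiC, hleC, rfl⟩
      rw [← Finset.sum_erase_add _ _ hiC, add_comm]
      have key : ∑ b ∈ C.erase i, y b ≤
          sSup {z : ℝ | ∃ j, covers n P j i ∧ z = ψ j} := by
        rcases Finset.eq_empty_or_nonempty (C.erase i) with he | hne
        · rw [he, Finset.sum_empty]; exact hS0
        · have hsub : ↑(C.erase i) ⊆ (↑C : Set (Fin n)) := by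
            exact_mod_cast Finset.erase_subset i C
          have hchain' : IsChain P.le ↑(C.erase i) := hC.mono hsub
          obtain ⟨m, hm, hmax⟩ := chain_max hchain' hne
          have hmi : P.lt m i :=
            plt_of_le_ne (hleC m (Finset.mem_of_mem_erase hm)) (Finset.ne_of_mem_erase hm)
          obtain ⟨j', hmj', hcov'⟩ := exists_cover hmi
          have hstep : ∑ b ∈ C.erase i, y b ≤ ψ j' := by
            by_cases hj'mem : j' ∈ C.erase i
            · exact le_transferInv y j' hchain' hj'mem
                fun b hb => ple_trans (hmax b hb) hmj'
            · have hC'' : IsChain P.le ↑(insert j' (C.erase i)) := by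
                rw [Finset.coe_insert]
                exact hchain'.insert fun b hb _ =>
                  Or.inr (ple_trans (hmax b (by exact_mod_cast hb)) hmj')
              have h2 : ∑ b ∈ insert j' (C.erase i), y b ≤ ψ j' := by
                refine le_transferInv y j' hC'' (Finset.mem_insert_self _ _) ?_
                intro b hb
                rcases Finset.mem_insert.mp hb with rfl | hb
                · exact ple_refl b
                · exact ple_trans (hmax b hb) hmj'
              rw [Finset.sum_insert hj'mem] at h2
              have := hy.1 j'
              linarith
          exact le_trans hstep
            (le_csSup (covSet_finite ψ i).bddAbove ⟨j', hcov', rfl⟩)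
      have := hy.1 i  -- not needed but harmless
      linarith [key]
    rw [hφ]
    linarith

end StanleyAux

theorem stmt_4 (n : ℕ) (P : PartialOrder (Fin n)) :
    Set.BijOn (transferMap n P) (orderPolytope n P) (chainPolytope n P) ∧
    Set.InvOn (transferInv n P) (transferMap n P)
      (orderPolytope n P) (chainPolytope n P) := by
  have h1 : Set.MapsTo (transferMap n P) (orderPolytope n P) (chainPolytope n P) :=
    fun x hx => StanleyAux.transfer_mem_chainPolytope hx
  have h2 : Set.MapsTo (transferInv n P) (chainPolytope n P) (orderPolytope n P) :=
    fun y hy => StanleyAux.inv_mem_orderPolytope hy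
  have hinv : Set.InvOn (transferInv n P) (transferMap n P)
      (orderPolytope n P) (chainPolytope n P) :=
    ⟨fun x hx => StanleyAux.left_inv hx, fun y hy => StanleyAux.right_inv hy⟩
  exact ⟨hinv.bijOn h1 h2, hinv⟩
end

section
/- For a partial order P on [n], the Euclidean volume of the order polytope O(P) equals e(P)/n!, where e(P) is the number of linear extensions of P. -/
/-!
Sort the coordinates: the unit cube is the union of the `n!` simplices
`Δ_σ = {x | σ i ≤ σ j → x i ≤ x j}`, one for each ordering `σ` of the coordinates. They are
congruent under permutation of coordinates and overlap only where two coordinates agree, a null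
set, so each has volume `1/n!`. Off that null set, a point of `O(P)` lies in exactly one `Δ_σ`,
and this `σ` is a linear extension of `P`; conversely `Δ_σ ⊆ O(P)` for every linear extension.
-/

open MeasureTheory

open Set

theorem ae_injective {ι : Type*} [Fintype ι] : ∀ᵐ x : ι → ℝ, Function.Injective x := by
  classical
  have hdiag {i j : ι} (hij : i ≠ j) : volume {x : ι → ℝ | x i = x j} = 0 := by
    have hker : {x : ι → ℝ | x i = x j} =
        LinearMap.ker (LinearMap.proj (R := ℝ) (φ := fun _ : ι => ℝ) i - LinearMap.proj j) := by
      ext x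
      simp [sub_eq_zero]
    rw [hker]
    refine Measure.addHaar_submodule _ _ fun htop => ?_
    have hsingle := htop ▸ Submodule.mem_top (x := (Pi.single i 1 : ι → ℝ))
    simp [Pi.single_eq_of_ne' hij] at hsingle
  refine measure_mono_null (fun x hx => ?_) <| measure_iUnion_null fun i =>
    measure_iUnion_null fun j => measure_iUnion_null fun (hij : i ≠ j) => hdiag hij
  obtain ⟨i, j, hxij, hij⟩ := Function.not_injective_iff.mp hx
  exact mem_iUnion.mpr ⟨i, mem_iUnion.mpr ⟨j, mem_iUnion.mpr ⟨hij, hxij⟩⟩⟩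

variable {n : ℕ}

def simplex (σ : Equiv.Perm (Fin n)) : Set (Fin n → ℝ) :=
  {x ∈ Icc 0 1 | ∀ i j, σ i ≤ σ j → x i ≤ x j}

theorem measurableSet_simplex (σ : Equiv.Perm (Fin n)) : MeasurableSet (simplex σ) := by
  simp only [simplex, ofPred_and, ofPred_forall]
  exact measurableSet_Icc.inter <| .iInter fun i => .iInter fun j => .iInter fun _ =>
    measurableSet_le (measurable_pi_apply i) (measurable_pi_apply j)

theorem mem_simplex_iff {σ : Equiv.Perm (Fin n)} {x : Fin n → ℝ} :
    x ∈ simplex σ ↔ x ∈ Icc 0 1 ∧ Monotone (x ∘ σ.symm) := by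
  refine and_congr_right fun _ => ⟨fun h a b hab => h _ _ (by simpa), fun h i j hij => ?_⟩
  simpa using h hij

theorem mem_simplex_sort {x : Fin n → ℝ} (hx : x ∈ Icc 0 1) : x ∈ simplex (Tuple.sort x).symm :=
  mem_simplex_iff.mpr ⟨hx, Tuple.monotone_sort x⟩

theorem symm_eq_sort_of_mem_simplex {σ : Equiv.Perm (Fin n)} {x : Fin n → ℝ}
    (hx : Function.Injective x) (h : x ∈ simplex σ) : σ.symm = Tuple.sort x :=
  Tuple.eq_sort_iff.mpr ⟨(mem_simplex_iff.mp h).2, fun _ _ hij hxij =>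
    (hij.ne (σ.symm.injective (hx hxij))).elim⟩

theorem lt_iff_lt_of_mem_simplex {σ : Equiv.Perm (Fin n)} {x : Fin n → ℝ}
    (hx : Function.Injective x) (h : x ∈ simplex σ) (j k : Fin n) : σ j < σ k ↔ x j < x k := by
  refine ⟨fun hσ => (h.2 j k hσ.le).lt_of_ne fun hjk => ?_, fun hjk => not_le.mp fun hσ => ?_⟩
  · exact hσ.ne (congrArg σ (hx hjk))
  · exact (h.2 k j hσ).not_gt hjk

theorem iUnion_simplex : ⋃ σ : Equiv.Perm (Fin n), simplex σ = Icc 0 1 :=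
  (iUnion_subset fun _ _ hx => hx.1).antisymm fun _ hx => mem_iUnion.mpr ⟨_, mem_simplex_sort hx⟩

theorem aedisjoint_simplex {σ τ : Equiv.Perm (Fin n)} (h : σ ≠ τ) :
    AEDisjoint volume (simplex σ) (simplex τ) := by
  refine measure_eq_zero_iff_ae_notMem.mpr ?_
  filter_upwards [ae_injective] with x hx hστ
  exact h <| Equiv.symm_bijective.injective <|
    (symm_eq_sort_of_mem_simplex hx hστ.1).trans (symm_eq_sort_of_mem_simplex hx hστ.2).symm

theorem volume_simplex_eq_volume_simplex_one (σ : Equiv.Perm (Fin n)) :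
    volume (simplex σ) = volume (simplex (1 : Equiv.Perm (Fin n))) := by
  have hpre : simplex σ = (fun x => x ∘ σ.symm) ⁻¹' simplex 1 := by
    ext x
    simp only [mem_preimage, mem_simplex_iff, mem_Icc, Pi.le_def, Pi.zero_apply, Pi.one_apply,
      Function.comp_apply, Equiv.Perm.one_def, Equiv.refl_symm, Equiv.coe_refl, Function.comp_id,
      σ.symm.forall_congr_right (q := fun i => 0 ≤ x i),
      σ.symm.forall_congr_right (q := fun i => x i ≤ 1)]
  rw [hpre]
  exact (volume_preserving_arrowCongr' σ (.refl ℝ) (.id _)).measure_preimage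
    (measurableSet_simplex 1).nullMeasurableSet

theorem volume_iUnion_simplex {ι : Type*} [Finite ι] {f : ι → Equiv.Perm (Fin n)}
    (hf : Function.Injective f) :
    volume (⋃ i, simplex (f i)) = Nat.card ι * volume (simplex (1 : Equiv.Perm (Fin n))) := by
  have := Fintype.ofFinite ι
  rw [measure_iUnion₀ (fun i j hij => aedisjoint_simplex (hf.ne hij))
    fun i => (measurableSet_simplex (f i)).nullMeasurableSet, tsum_fintype]
  simp [volume_simplex_eq_volume_simplex_one, Nat.card_eq_fintype_card]

theorem volume_simplex_one :
    volume (simplex (1 : Equiv.Perm (Fin n))) = (n.factorial : ENNReal)⁻¹ := by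
  have hcube : volume (Icc (0 : Fin n → ℝ) 1) = 1 := by simp [Real.volume_Icc_pi]
  have hsum : volume (Icc (0 : Fin n → ℝ) 1) =
      n.factorial * volume (simplex (1 : Equiv.Perm (Fin n))) := by
    simpa [iUnion_simplex, Fintype.card_perm] using
      volume_iUnion_simplex (n := n) Function.injective_id
  exact ENNReal.eq_inv_of_mul_eq_one_left (by rw [mul_comm, ← hsum, hcube])

theorem orderPolytope_ae_eq_iUnion_simplex (P : PartialOrder (Fin n)) :
    orderPolytope n P =ᵐ[volume]
      ⋃ σ : {σ : Equiv.Perm (Fin n) // ∀ j k, P.lt j k → σ j < σ k}, simplex σ.1 := by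
  refine Filter.eventuallyEq_set.mpr ?_
  filter_upwards [ae_injective] with x hx
  have hcube : (∀ i, 0 ≤ x i ∧ x i ≤ 1) ↔ x ∈ Icc 0 1 := by
    simp only [mem_Icc, Pi.le_def, forall_and, Pi.zero_apply, Pi.one_apply]
  have hP : (∀ j k, P.le j k → x j ≤ x k) ↔ ∀ j k, P.lt j k → x j < x k :=
    ⟨fun h j k hjk => Monotone.strictMono_of_injective (fun _ _ => h _ _) hx hjk,
      fun h j k hjk => StrictMono.monotone (fun _ _ => h _ _) hjk⟩
  simp only [orderPolytope, mem_ofPred_eq, mem_iUnion, hcube, hP]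
  constructor
  · rintro ⟨hx01, hxP⟩
    have hσ := mem_simplex_sort hx01
    exact ⟨⟨_, fun j k hjk => (lt_iff_lt_of_mem_simplex hx hσ j k).mpr (hxP j k hjk)⟩, hσ⟩
  · rintro ⟨⟨σ, hσP⟩, hσ⟩
    exact ⟨hσ.1, fun j k hjk => (lt_iff_lt_of_mem_simplex hx hσ j k).mp (hσP j k hjk)⟩

theorem stmt_5 (n : ℕ) (P : PartialOrder (Fin n)) :
    volume (orderPolytope n P) = (numLinExtOrder n P : ENNReal) / (Nat.factorial n : ENNReal) := by
  rw [measure_congr (orderPolytope_ae_eq_iUnion_simplex P),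
    volume_iUnion_simplex Subtype.val_injective, volume_simplex_one, numLinExtOrder,
    div_eq_mul_inv]
end

section
/- For a partial order P on [n], the Euclidean volume of the chain polytope C(P) equals e(P)/n!, i.e., Vol(C(P)) = Vol(O(P)) = e(P)/n!. -/
/-!
Stanley's transfer map `φ(x)_i = x_i - max_{j < i} x_j` (an empty maximum read as `0`) maps the
order polytope `O(P)` bijectively onto the chain polytope `C(P)`; its inverse sends `y` to
`i ↦ max {∑_{j ∈ C} y_j | C a chain below i}`. The order polytope is the union of the simplices
`{0 ≤ x_{e⁻¹ 0} ≤ ⋯ ≤ x_{e⁻¹ (n-1)} ≤ 1}` over the linear extensions `e` of `P`; these meet only in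
null sets, and each has volume `1/n!` because all `n!` such simplices are congruent and tile the
unit cube. On each of them `φ` is linear and unitriangular in the order `e`, hence
volume-preserving, and since `φ` is injective the images again meet only in null sets. So
`vol C(P) = vol O(P) = e(P)/n!`.
-/

open MeasureTheory

open Finset Function
open scoped Nat Matrix

section PiecewiseLinear

variable {E ι : Type*} [NormedAddCommGroup E] [NormedSpace ℝ E] [MeasurableSpace E] [BorelSpace E]
  [FiniteDimensional ℝ E] (μ : Measure E) [μ.IsAddHaarMeasure]

theorem LinearMap.measurableSet_image_of_det_ne_zero {L : E →ₗ[ℝ] E} (hL : LinearMap.det L ≠ 0)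
    {s : Set E} (hs : MeasurableSet s) : MeasurableSet (L '' s) :=
  hs.image_of_continuousOn_injOn L.continuous_of_finiteDimensional.continuousOn
    (LinearMap.equivOfDetNeZero L hL).injective.injOn

theorem addHaar_image_iUnion_of_eqOn_linearMap [Countable ι] {f : E → E} {A : ι → Set E}
    {L : ι → E →ₗ[ℝ] E} (hA : ∀ i, MeasurableSet (A i)) (hAd : Pairwise (AEDisjoint μ on A))
    (hL : ∀ i, |LinearMap.det (L i)| = 1) (hfL : ∀ i, Set.EqOn f (L i) (A i))
    (hf : Set.InjOn f (⋃ i, A i)) : μ (f '' ⋃ i, A i) = μ (⋃ i, A i) := by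
  have hvol : ∀ i s, μ (L i '' s) = μ s := fun i s => by
    rw [Measure.addHaar_image_linearMap, hL i, ENNReal.ofReal_one, one_mul]
  have himg : ∀ i, f '' A i = L i '' A i := fun i => (hfL i).image_eq
  rw [Set.image_iUnion, measure_iUnion₀ _ fun i => ?_,
    measure_iUnion₀ hAd fun i => (hA i).nullMeasurableSet]
  · simp_rw [himg, hvol]
  · intro i j hij
    change μ (f '' A i ∩ f '' A j) = 0
    rw [← hf.image_inter (Set.subset_iUnion A i) (Set.subset_iUnion A j),
      ((hfL i).mono Set.inter_subset_left).image_eq, hvol]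
    exact hAd hij
  · rw [himg]
    have hdet : LinearMap.det (L i) ≠ 0 := fun h => by simpa [h] using hL i
    exact (LinearMap.measurableSet_image_of_det_ne_zero hdet (hA i)).nullMeasurableSet

end PiecewiseLinear

section OrderSimplex

variable {ι : Type*} {n : ℕ}

variable (ι) in
def unitCube : Set (ι → ℝ) := {x | ∀ i, 0 ≤ x i ∧ x i ≤ 1}

theorem unitCube_eq_Icc : unitCube ι = Set.Icc 0 1 := by
  ext x
  simp [unitCube, Pi.le_def, forall_and]

def orderSimplex (e : ι ≃ Fin n) : Set (ι → ℝ) :=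
  {x | x ∈ unitCube ι ∧ Monotone (x ∘ e.symm)}

theorem exists_monotone_comp_symm {β : Type*} [LinearOrder β] (f : ι → β) (r : ι ≃ Fin n) :
    ∃ e : ι ≃ Fin n, Monotone (f ∘ e.symm) :=
  ⟨r.trans (Tuple.sort (f ∘ r.symm)).symm,
    by simpa [comp_assoc] using Tuple.monotone_sort (f ∘ r.symm)⟩

theorem isClosed_orderSimplex (e : ι ≃ Fin n) : IsClosed (orderSimplex e) :=
  (unitCube_eq_Icc (ι := ι) ▸ isClosed_Icc).inter
    (isClosed_monotone.preimage (f := fun x : ι → ℝ => x ∘ e.symm) (by fun_prop))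

theorem orderSimplex_inter_subset {e e' : ι ≃ Fin n} (h : e ≠ e') :
    orderSimplex e ∩ orderSimplex e' ⊆ {x | ¬ Injective x} := by
  rintro x ⟨⟨-, hx⟩, ⟨-, hx'⟩⟩ hinj
  have hs := hx.strictMono_of_injective (hinj.comp e.symm.injective)
  have hs' := hx'.strictMono_of_injective (hinj.comp e'.symm.injective)
  have hcomp : x ∘ e.symm = x ∘ e'.symm :=
    (hs.range_inj hs').1 (by rw [Set.range_comp, Set.range_comp, e.symm.range_eq_univ,
      e'.symm.range_eq_univ])
  exact h (Equiv.symm_bijective.injective (Equiv.ext fun k => hinj (congrFun hcomp k)))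

theorem iUnion_orderSimplex (r : ι ≃ Fin n) :
    ⋃ e : ι ≃ Fin n, orderSimplex e = unitCube ι := by
  refine (Set.iUnion_subset fun e x hx => hx.1).antisymm fun x hx => ?_
  obtain ⟨e, he⟩ := exists_monotone_comp_symm x r
  exact Set.mem_iUnion.2 ⟨e, hx, he⟩

variable [Fintype ι]

theorem volume_unitCube : volume (unitCube ι) = 1 := by
  simp [unitCube_eq_Icc, Real.volume_Icc_pi]

theorem volume_setOf_not_injective : volume {x : ι → ℝ | ¬ Injective x} = 0 := by
  classical
  have hsub : {x : ι → ℝ | ¬ Injective x} ⊆ ⋃ (p : ι × ι) (_ : p.1 ≠ p.2),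
      (LinearMap.ker ((LinearMap.proj p.1 : (ι → ℝ) →ₗ[ℝ] ℝ) - LinearMap.proj p.2) :
        Set (ι → ℝ)) := by
    intro x hx
    obtain ⟨a, b, hab, hne⟩ : ∃ a b, x a = x b ∧ a ≠ b := by simpa [Injective] using hx
    simp only [Set.mem_iUnion]
    exact ⟨(a, b), hne, by simp [hab]⟩
  refine measure_mono_null hsub (measure_iUnion_null fun p => measure_iUnion_null fun hp => ?_)
  refine Measure.addHaar_submodule _ _ fun htop => ?_
  have := LinearMap.ker_eq_top.1 htop
  simpa [Pi.single_apply, hp.symm] using congrArg (· (Pi.single p.1 1)) this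

theorem volume_orderSimplex_eq (e e' : ι ≃ Fin n) :
    volume (orderSimplex e) = volume (orderSimplex e') := by
  have hπ : MeasurePreserving (fun x : ι → ℝ => x ∘ e'.trans e.symm) :=
    volume_preserving_arrowCongr' (e'.trans e.symm).symm (.refl ℝ) (.id volume)
  have hpre : (fun x : ι → ℝ => x ∘ e'.trans e.symm) ⁻¹' orderSimplex e' = orderSimplex e := by
    ext x
    refine and_congr ((e'.trans e.symm).forall_congr_left.trans (by simp [unitCube])) ?_
    simp [comp_assoc]
  rw [← hpre, hπ.measure_preimage (isClosed_orderSimplex e').measurableSet.nullMeasurableSet]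

theorem aedisjoint_orderSimplex {e e' : ι ≃ Fin n} (h : e ≠ e') :
    AEDisjoint volume (orderSimplex e) (orderSimplex e') :=
  measure_mono_null (orderSimplex_inter_subset h) volume_setOf_not_injective

theorem volume_orderSimplex (e : ι ≃ Fin n) : volume (orderSimplex e) = (n ! : ENNReal)⁻¹ := by
  classical
  have hsum := measure_iUnion₀ (μ := volume) (f := orderSimplex (ι := ι) (n := n))
    (fun _ _ h => aedisjoint_orderSimplex h)
    fun e => (isClosed_orderSimplex e).measurableSet.nullMeasurableSet
  rw [iUnion_orderSimplex e, volume_unitCube, tsum_fintype,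
    sum_congr rfl fun e' _ => volume_orderSimplex_eq e' e, sum_const, card_univ,
    Fintype.card_equiv e, Fintype.card_congr e, Fintype.card_fin, nsmul_eq_mul] at hsum
  exact ENNReal.eq_inv_of_mul_eq_one_left (by rw [mul_comm, hsum])

end OrderSimplex

namespace Poset

variable {α : Type*} [PartialOrder α] {n : ℕ}

def orderPolytope (α : Type*) [PartialOrder α] : Set (α → ℝ) :=
  {x | (∀ i, 0 ≤ x i ∧ x i ≤ 1) ∧ Monotone x}

def chainPolytope (α : Type*) [PartialOrder α] : Set (α → ℝ) :=
  {y | (∀ i, 0 ≤ y i) ∧ ∀ C : Finset α, IsChain (· ≤ ·) (C : Set α) → ∑ i ∈ C, y i ≤ 1}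

theorem _root_.IsChain.exists_forall_le_of_finset {C : Finset α}
    (hC : IsChain (· ≤ ·) (C : Set α)) (hne : C.Nonempty) : ∃ m ∈ C, ∀ j ∈ C, j ≤ m := by
  obtain ⟨m, hm⟩ := C.exists_maximal hne
  refine ⟨m, hm.prop, fun j hj => ?_⟩
  rcases eq_or_ne j m with rfl | hjm
  · exact le_rfl
  · exact (hC hj hm.prop hjm).elim id (hm.le_of_ge hj)

theorem forall_lt_of_mem_erase [DecidableEq α] {C : Finset α} {i : α} (h : ∀ j ∈ C, j ≤ i) :
    ∀ j ∈ C.erase i, j < i :=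
  fun j hj => lt_of_le_of_ne (h j (mem_of_mem_erase hj)) (ne_of_mem_erase hj)

theorem orderSimplex_subset_orderPolytope {e : α ≃ Fin n} (he : StrictMono e) :
    orderSimplex e ⊆ orderPolytope α :=
  fun x hx => ⟨hx.1, fun i j hij => by simpa using hx.2 (he.monotone hij)⟩

/- Sorting `x` with ties broken by a linear extension of `α` yields an ordering that is itself a
linear extension. -/
theorem iUnion_orderSimplex_strictMono (r : α ≃ Fin n) :
    ⋃ e : {e : α ≃ Fin n // StrictMono e}, orderSimplex e.1 = orderPolytope α := by
  refine (Set.iUnion_subset fun e => orderSimplex_subset_orderPolytope e.2).antisymm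
    fun x hx => ?_
  let key : α → ℝ ×ₗ LinearExtension α := fun i => toLex (x i, toLinearExtension i)
  have hkey : StrictMono key := fun i j hij => Prod.Lex.toLex_lt_toLex.2 <|
    (hx.2 hij.le).lt_or_eq.imp_right fun h =>
      ⟨h, toLinearExtension.monotone.strictMono_of_injective (fun _ _ h => h) hij⟩
  obtain ⟨e, he⟩ := exists_monotone_comp_symm key r
  refine Set.mem_iUnion.2 ⟨⟨e, fun i j hij => he.reflect_lt (by simpa using hkey hij)⟩, hx.1,
    fun a b hab => Prod.Lex.monotone_fst _ _ (he hab)⟩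

variable [Fintype α]

open scoped Classical in
noncomputable def predMax (x : α → ℝ) (i : α) : ℝ :=
  ({j | j < i} : Finset α).fold max 0 x

theorem predMax_nonneg (x : α → ℝ) (i : α) : 0 ≤ predMax x i :=
  (le_fold_max _).2 (Or.inl le_rfl)

theorem le_predMax (x : α → ℝ) {i j : α} (h : j < i) : x j ≤ predMax x i :=
  (le_fold_max _).2 (Or.inr ⟨j, by simpa using h, le_rfl⟩)

theorem predMax_le_iff {x : α → ℝ} {i : α} {c : ℝ} :
    predMax x i ≤ c ↔ 0 ≤ c ∧ ∀ j < i, x j ≤ c := by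
  simp [predMax, fold_max_le]

theorem predMax_congr {x y : α → ℝ} {i : α} (h : ∀ j < i, x j = y j) :
    predMax x i = predMax y i :=
  fold_congr fun j hj => h j (by simpa using hj)

noncomputable def transferMap (x : α → ℝ) (i : α) : ℝ := x i - predMax x i

open scoped Classical in
noncomputable def chainMax (y : α → ℝ) (i : α) : ℝ :=
  ({C | IsChain (· ≤ ·) (C : Set α) ∧ ∀ j ∈ C, j ≤ i} : Finset (Finset α)).fold max 0
    fun C => ∑ j ∈ C, y j

theorem chainMax_nonneg (y : α → ℝ) (i : α) : 0 ≤ chainMax y i :=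
  (le_fold_max _).2 (Or.inl le_rfl)

theorem sum_le_chainMax (y : α → ℝ) {i : α} {C : Finset α} (hC : IsChain (· ≤ ·) (C : Set α))
    (hCi : ∀ j ∈ C, j ≤ i) : ∑ j ∈ C, y j ≤ chainMax y i :=
  (le_fold_max _).2 (Or.inr ⟨C, by simpa using ⟨hC, hCi⟩, le_rfl⟩)

theorem chainMax_le_iff {y : α → ℝ} {i : α} {c : ℝ} :
    chainMax y i ≤ c ↔
      0 ≤ c ∧ ∀ C : Finset α, IsChain (· ≤ ·) (C : Set α) → (∀ j ∈ C, j ≤ i) →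
        ∑ j ∈ C, y j ≤ c := by
  simp [chainMax, fold_max_le]

theorem sum_transferMap_le_predMax (x : α → ℝ) {i : α} {C : Finset α}
    (hC : IsChain (· ≤ ·) (C : Set α)) (hCi : ∀ j ∈ C, j < i) :
    ∑ j ∈ C, transferMap x j ≤ predMax x i := by
  classical
  induction C using Finset.strongInduction generalizing i with
  | H C ih =>
  rcases C.eq_empty_or_nonempty with rfl | hne
  · simpa using predMax_nonneg x i
  obtain ⟨m, hm, hmax⟩ := hC.exists_forall_le_of_finset hne
  have hrest : ∑ j ∈ C.erase m, transferMap x j ≤ predMax x m :=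
    ih _ (erase_ssubset hm) (hC.mono (coe_subset.2 (erase_subset m C)))
      (forall_lt_of_mem_erase hmax)
  rw [← add_sum_erase C _ hm, transferMap]
  linarith [le_predMax x (hCi m hm)]

theorem sum_transferMap_le_one {x : α → ℝ} (hx : ∀ i, x i ≤ 1) {C : Finset α}
    (hC : IsChain (· ≤ ·) (C : Set α)) : ∑ j ∈ C, transferMap x j ≤ 1 := by
  classical
  rcases C.eq_empty_or_nonempty with rfl | hne
  · simp
  obtain ⟨m, hm, hmax⟩ := hC.exists_forall_le_of_finset hne
  have hrest := sum_transferMap_le_predMax x (hC.mono (coe_subset.2 (erase_subset m C)))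
    (forall_lt_of_mem_erase hmax)
  rw [← add_sum_erase C _ hm, transferMap]
  linarith [hx m]

theorem transferMap_mem_chainPolytope {x : α → ℝ} (hx : x ∈ orderPolytope α) :
    transferMap x ∈ chainPolytope α :=
  ⟨fun i => sub_nonneg.2 <| predMax_le_iff.2 ⟨(hx.1 i).1, fun _ hj => hx.2 hj.le⟩,
    fun _ hC => sum_transferMap_le_one (fun i => (hx.1 i).2) hC⟩

theorem chainMax_mem_orderPolytope {y : α → ℝ} (hy : y ∈ chainPolytope α) :
    chainMax y ∈ orderPolytope α := by
  refine ⟨fun i => ⟨chainMax_nonneg y i, chainMax_le_iff.2 ⟨zero_le_one, fun C hC _ => hy.2 C hC⟩⟩,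
    fun i k hik => chainMax_le_iff.2 ⟨chainMax_nonneg y k, fun C hC hCi => ?_⟩⟩
  exact sum_le_chainMax y hC fun j hj => (hCi j hj).trans hik

theorem sum_le_predMax_chainMax (y : α → ℝ) {i : α} {C : Finset α}
    (hC : IsChain (· ≤ ·) (C : Set α)) (hCi : ∀ j ∈ C, j < i) :
    ∑ j ∈ C, y j ≤ predMax (chainMax y) i := by
  rcases C.eq_empty_or_nonempty with rfl | hne
  · simpa using predMax_nonneg (chainMax y) i
  obtain ⟨m, hm, hmax⟩ := hC.exists_forall_le_of_finset hne
  exact (sum_le_chainMax y hC hmax).trans (le_predMax _ (hCi m hm))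

theorem chainMax_eq_add_predMax {y : α → ℝ} (hy : ∀ i, 0 ≤ y i) (i : α) :
    chainMax y i = y i + predMax (chainMax y) i := by
  classical
  refine le_antisymm
    (chainMax_le_iff.2 ⟨add_nonneg (hy i) (predMax_nonneg _ i), fun C hC hCi => ?_⟩) ?_
  · have hrest := sum_le_predMax_chainMax y (hC.mono (coe_subset.2 (erase_subset i C)))
      (forall_lt_of_mem_erase hCi)
    by_cases hiC : i ∈ C
    · rw [← add_sum_erase C _ hiC]; linarith
    · rw [erase_eq_of_notMem hiC] at hrest; linarith [hy i]
  · have hsingle : y i ≤ chainMax y i := by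
      simpa using sum_le_chainMax y (C := {i}) (by simp) (by simp)
    rw [add_comm, ← le_sub_iff_add_le, predMax_le_iff]
    refine ⟨sub_nonneg.2 hsingle, fun j hji => chainMax_le_iff.2 ⟨sub_nonneg.2 hsingle, ?_⟩⟩
    intro C hC hCj
    have hiC : i ∉ C := fun h => (hCj i h).not_gt hji
    have hchain : IsChain (· ≤ ·) (insert i C : Set α) :=
      hC.insert fun k hk _ => Or.inr ((hCj k hk).trans hji.le)
    have := sum_le_chainMax y (C := insert i C) (by simpa using hchain)
      (by simpa using ⟨le_rfl, fun k hk => (hCj k hk).trans hji.le⟩)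
    rw [sum_insert hiC] at this
    linarith

theorem transferMap_chainMax {y : α → ℝ} (hy : ∀ i, 0 ≤ y i) : transferMap (chainMax y) = y := by
  funext i
  rw [transferMap, chainMax_eq_add_predMax hy i]
  ring

theorem transferMap_injective : Injective (transferMap : (α → ℝ) → α → ℝ) := by
  intro x y hxy
  funext i
  induction i using WellFoundedLT.induction with
  | ind i ih =>
  have hi := congrFun hxy i
  rw [transferMap, transferMap, predMax_congr ih] at hi
  linarith

theorem image_transferMap_orderPolytope :
    transferMap '' orderPolytope α = chainPolytope α := by
  refine Set.Subset.antisymm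
    (Set.image_subset_iff.2 fun x hx => transferMap_mem_chainPolytope hx) fun y hy =>
      ⟨chainMax y, chainMax_mem_orderPolytope hy, transferMap_chainMax hy.1⟩

/- On `orderSimplex e` the maximum in `predMax x i` is attained at the `e`-latest strict
predecessor of `i`, which makes `transferMap` linear there. -/
open scoped Classical in
noncomputable def lastPred (e : α ≃ Fin n) (i : α) : Finset α := {j | j < i ∧ ∀ k < i, e k ≤ e j}

open scoped Classical in
noncomputable def transferMatrix (e : α ≃ Fin n) : Matrix α α ℝ :=
  1 - Matrix.of fun i j => if j ∈ lastPred e i then 1 else 0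

theorem predMax_eq_sum_lastPred {e : α ≃ Fin n} {x : α → ℝ} (hx : x ∈ orderSimplex e) (i : α) :
    predMax x i = ∑ j ∈ lastPred e i, x j := by
  classical
  by_cases hpred : ∃ j, j < i
  · obtain ⟨m, hm, hmax⟩ := exists_max_image ({j | j < i} : Finset α) e
      (hpred.imp fun j hj => by simpa using hj)
    simp only [mem_filter, mem_univ, true_and] at hm hmax
    have hlast : lastPred e i = {m} := by
      refine eq_singleton_iff_unique_mem.2
        ⟨by simpa [lastPred] using ⟨hm, hmax⟩, fun j hj => ?_⟩
      simp only [lastPred, mem_filter, mem_univ, true_and] at hj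
      exact e.injective ((hmax j hj.1).antisymm (hj.2 m hm))
    rw [hlast, sum_singleton]
    refine (predMax_le_iff.2 ⟨(hx.1 m).1, fun j hj => ?_⟩).antisymm (le_predMax x hm)
    simpa using hx.2 (hmax j hj)
  · push Not at hpred
    have hlast : lastPred e i = ∅ := by
      ext j
      simp [lastPred, hpred j]
    rw [hlast, sum_empty]
    exact (predMax_le_iff.2 ⟨le_rfl, fun j hj => absurd hj (hpred j)⟩).antisymm
      (predMax_nonneg x i)

theorem transferMatrix_mulVec {e : α ≃ Fin n} {x : α → ℝ} (hx : x ∈ orderSimplex e) :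
    transferMatrix e *ᵥ x = transferMap x := by
  classical
  ext i
  rw [transferMatrix, Matrix.sub_mulVec, Matrix.one_mulVec, Pi.sub_apply, transferMap,
    predMax_eq_sum_lastPred hx i]
  simp [Matrix.mulVec, dotProduct]

theorem det_transferMatrix [DecidableEq α] {e : α ≃ Fin n} (he : StrictMono e) :
    (transferMatrix e).det = 1 := by
  have hlast : ∀ {i j}, j ∈ lastPred e i → e j < e i := fun hj => by
    simp only [lastPred, mem_filter, mem_univ, true_and] at hj
    exact he hj.1
  have htri : (transferMatrix e).BlockTriangular (OrderDual.toDual ∘ e) := fun i j hij => by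
    have hne : i ≠ j := fun h => (h ▸ hij).false
    have hj : j ∉ lastPred e i := fun h => (hlast h).asymm hij
    simp [transferMatrix, hne, hj]
  have hlower := htri.submatrix (f := e.symm)
  rw [comp_assoc, e.self_comp_symm, comp_id] at hlower
  rw [← Matrix.det_submatrix_equiv_self e.symm, Matrix.det_of_isLowerTriangular _ hlower]
  refine prod_eq_one fun k _ => ?_
  have hk : e.symm k ∉ lastPred e (e.symm k) := fun h => (hlast h).false
  simp [transferMatrix, hk]

theorem volume_orderPolytope (hn : Fintype.card α = n) :
    volume (orderPolytope α) = Nat.card {e : α ≃ Fin n // StrictMono e} / (n ! : ENNReal) := by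
  classical
  rw [← iUnion_orderSimplex_strictMono (Fintype.equivFinOfCardEq hn),
    measure_iUnion₀ (fun e e' h => aedisjoint_orderSimplex (Subtype.coe_ne_coe.2 h))
      fun e => (isClosed_orderSimplex e.1).measurableSet.nullMeasurableSet,
    tsum_fintype, sum_congr rfl fun e _ => volume_orderSimplex e.1, sum_const, card_univ,
    Nat.card_eq_fintype_card, nsmul_eq_mul, div_eq_mul_inv]

theorem volume_chainPolytope (hn : Fintype.card α = n) :
    volume (chainPolytope α) = volume (orderPolytope α) := by
  classical
  rw [← image_transferMap_orderPolytope,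
    ← iUnion_orderSimplex_strictMono (Fintype.equivFinOfCardEq hn)]
  refine addHaar_image_iUnion_of_eqOn_linearMap volume
    (L := fun e => Matrix.toLin' (transferMatrix e.1))
    (fun e => (isClosed_orderSimplex e.1).measurableSet)
    (fun e e' h => aedisjoint_orderSimplex (Subtype.coe_ne_coe.2 h))
    (fun e => by rw [LinearMap.det_toLin', det_transferMatrix e.2, abs_one])
    (fun e x hx => by rw [Matrix.toLin'_apply, transferMatrix_mulVec hx])
    transferMap_injective.injOn

end Poset

theorem stmt_6 (n : ℕ) (P : PartialOrder (Fin n)) :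
    volume (chainPolytope n P) = (numLinExtOrder n P : ENNReal) / (Nat.factorial n : ENNReal) ∧
    volume (chainPolytope n P) = volume (orderPolytope n P) := by
  -- The polytopes and the count in the statement are the `Poset` ones for the order `P`,
  -- definitionally.
  have horder := @Poset.volume_orderPolytope (Fin n) P n _ (Fintype.card_fin n)
  have hchain := @Poset.volume_chainPolytope (Fin n) P n _ (Fintype.card_fin n)
  exact ⟨hchain.trans horder, hchain⟩
end

section
/- Let P be a finite poset and A an antichain of P. Then e(P) ≥ ∑_{v ∈ A} e(P \ v), where P \ v is the induced poset on the ground set minus v. -/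
/-- The number of linear extensions of a partial order `P` on a finite type `V`. -/
noncomputable def eCount (V : Type*) [Fintype V] (P : PartialOrder V) : ℕ :=
  Nat.card {f : V ≃ Fin (Fintype.card V) // ∀ a b, P.lt a b → f a < f b}

/-- The induced partial order `P \ v` on the ground set with the element `v` removed. -/
def delOrder {V : Type*} (P : PartialOrder V) (v : V) : PartialOrder {x : V // x ≠ v} where
  le a b := P.le a b
  lt a b := P.lt a b
  lt_iff_le_not_ge a b := P.lt_iff_le_not_ge _ _
  le_refl a := P.le_refl a
  le_trans a b c := P.le_trans a b c
  le_antisymm a b h1 h2 := Subtype.ext (P.le_antisymm a b h1 h2)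

/-!
Deleting the first element of a linear extension gives `e(P) = ∑ e(P \ m)` over the minimal
elements `m`. Induct on the ground set. For `v ∈ A`, expand `e(P \ v)` in the same way along the
minimal elements `m` of `P \ v`. If `m` is minimal in `P`, charge `e(P \ {v, m})` to `m`;
otherwise `v` is minimal in `P` and is the only element below `m`, and the term is charged to `v`.
The antichain property makes this charging injective, and the elements charged to a minimal `m`
form an antichain of `P \ m`, so the induction hypothesis bounds their total by `e(P \ m)`.
-/

open Finset

namespace Finset

variable {α : Type*} [PartialOrder α]

open scoped Classical in
noncomputable def minimalElements (s : Finset α) : Finset α :=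
  s.filter fun m => ∀ x ∈ s, ¬x < m

theorem mem_minimalElements {s : Finset α} {m : α} :
    m ∈ s.minimalElements ↔ m ∈ s ∧ ∀ x ∈ s, ¬x < m := by
  simp only [minimalElements, mem_filter]

theorem minimalElements_subset (s : Finset α) : s.minimalElements ⊆ s :=
  fun _ hm => (mem_minimalElements.1 hm).1

variable [DecidableEq α]

open scoped Classical in
/-- Linear extensions of the order restricted to `s`, as lists enumerating `s` from the bottom:
no entry lies strictly below an earlier one. -/
noncomputable def linearExtensions (s : Finset α) : Finset (List α) :=
  (Multiset.lists s.val).toFinset.filter (List.Pairwise fun a b => ¬b < a)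

theorem mem_linearExtensions {s : Finset α} {l : List α} :
    l ∈ s.linearExtensions ↔ (l : Multiset α) = s.val ∧ l.Pairwise (fun a b => ¬b < a) := by
  simp only [linearExtensions, mem_filter, Multiset.mem_toFinset, Multiset.mem_lists_iff,
    Multiset.quot_mk_to_coe, eq_comm]

theorem cons_mem_linearExtensions {s : Finset α} {m : α} {l : List α} :
    m :: l ∈ s.linearExtensions ↔
      m ∈ s.minimalElements ∧ l ∈ (s.erase m).linearExtensions := by
  simp only [mem_linearExtensions, mem_minimalElements, List.pairwise_cons, erase_val,
    ← Multiset.cons_coe]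
  constructor
  · rintro ⟨hs, hm, hl⟩
    have hms : m ∈ s := by simp [← mem_val, ← hs]
    refine ⟨⟨hms, fun x hx hxm => hm x ?_ hxm⟩,
      by rw [← hs, Multiset.erase_cons_head], hl⟩
    have : x ∈ m ::ₘ (l : Multiset α) := by rw [hs]; exact hx
    exact (Multiset.mem_cons.1 this).resolve_left hxm.ne
  · rintro ⟨⟨hms, hmin⟩, hs, hl⟩
    refine ⟨by rw [hs, Multiset.cons_erase hms], fun b hb => hmin b ?_, hl⟩
    have : b ∈ s.val.erase m := by rw [← hs]; exact hb
    exact mem_of_mem_erase (s := s) this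

theorem linearExtensions_eq_biUnion {s : Finset α} (hs : s.Nonempty) :
    s.linearExtensions = s.minimalElements.biUnion
      fun m => (s.erase m).linearExtensions.map ⟨List.cons m, List.cons_injective⟩ := by
  ext l
  simp only [mem_biUnion, mem_map, Function.Embedding.coeFn_mk]
  cases l with
  | nil =>
    simp only [mem_linearExtensions, Multiset.coe_nil, reduceCtorEq, and_false, exists_false,
      iff_false, not_and]
    exact fun h _ => hs.ne_empty (val_eq_zero.1 h.symm)
  | cons m l =>
    simp only [cons_mem_linearExtensions, List.cons.injEq]
    constructor
    · exact fun ⟨hm, hl⟩ => ⟨m, hm, l, hl, rfl, rfl⟩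
    · rintro ⟨m, hm, l, hl, rfl, rfl⟩
      exact ⟨hm, hl⟩

theorem card_linearExtensions {s : Finset α} (hs : s.Nonempty) :
    #s.linearExtensions = ∑ m ∈ s.minimalElements, #(s.erase m).linearExtensions := by
  rw [linearExtensions_eq_biUnion hs, card_biUnion]
  · simp only [card_map]
  · intro m _ m' _ hmm'
    simp only [Function.onFun, disjoint_left, mem_map, Function.Embedding.coeFn_mk]
    rintro _ ⟨l, _, rfl⟩ ⟨l', _, h⟩
    exact hmm' (List.cons.inj h).1.symm

theorem mem_minimalElements_and_lt_of_mem_minimalElements_erase {s : Finset α} {v m : α}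
    (hm : m ∈ (s.erase v).minimalElements) (hm' : m ∉ s.minimalElements) :
    v ∈ s.minimalElements ∧ v < m := by
  rw [mem_minimalElements, mem_erase] at hm
  have hlt : ∀ x ∈ s, x < m → x = v := fun x hxs hxm =>
    not_not.1 fun hxv => hm.2 x (mem_erase.2 ⟨hxv, hxs⟩) hxm
  obtain ⟨x, hxs, hxm⟩ : ∃ x ∈ s, x < m := by
    simpa [mem_minimalElements, hm.1.2] using hm'
  obtain rfl := hlt x hxs hxm
  refine ⟨mem_minimalElements.2 ⟨hxs, fun y hys hyx => ?_⟩, hxm⟩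
  exact hyx.ne (hlt y hys (hyx.trans hxm))

/-- The antichain of `s.erase m` that takes over the role of `A` once the minimal element `m` is
removed: if `m ∈ A`, the elements of `s` lying above `m` alone join `A.erase m`. -/
noncomputable def antichainErase (s A : Finset α) (m : α) : Finset α :=
  A.erase m ∪ if m ∈ A then (s.erase m).minimalElements \ s.minimalElements else ∅

theorem antichainErase_subset {s A : Finset α} (hAs : A ⊆ s) (m : α) :
    antichainErase s A m ⊆ s.erase m := by
  refine union_subset (erase_subset_erase m hAs) ?_
  split_ifs
  · exact sdiff_subset.trans (minimalElements_subset _)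
  · exact empty_subset _

theorem isAntichain_antichainErase {s A : Finset α} (hAs : A ⊆ s)
    (hA : IsAntichain (· ≤ ·) (A : Set α)) (m : α) :
    IsAntichain (· ≤ ·) (antichainErase s A m : Set α) := by
  intro a ha b hb hab hle
  have hlt := lt_of_le_of_ne hle hab
  simp only [antichainErase, coe_union, Set.mem_union, mem_coe, mem_erase] at ha hb
  split_ifs at ha hb with hmA
  · rcases hb with ⟨hbm, hbA⟩ | hb
    · rcases ha with ⟨ham, haA⟩ | ha
      · exact hA haA hbA hab hle
      · have hma := (mem_minimalElements_and_lt_of_mem_minimalElements_erase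
          (mem_sdiff.1 ha).1 (mem_sdiff.1 ha).2).2
        exact hA hmA hbA (Ne.symm hbm) (hma.trans hlt).le
    · have has : a ∈ s.erase m := by
        rcases ha with ⟨ham, haA⟩ | ha
        · exact mem_erase.2 ⟨ham, hAs haA⟩
        · exact minimalElements_subset _ (mem_sdiff.1 ha).1
      exact (mem_minimalElements.1 (mem_sdiff.1 hb).1).2 a has hlt
  · simp only [notMem_empty, or_false] at ha hb
    exact hA ha.2 hb.2 hab hle


/-- Reindexes a pair `(v, m)` with `m` minimal in `s.erase v` by a minimal element of `s`: when
`m` is not minimal in `s`, then `v` is, and `v < m`. -/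
noncomputable def flipMinimal (s : Finset α) (p : Σ _ : α, α) : Σ _ : α, α :=
  if p.2 ∈ s.minimalElements then ⟨p.2, p.1⟩ else p

theorem flipMinimal_mem {s A : Finset α} {p : Σ _ : α, α}
    (hp : p ∈ A.sigma fun v => (s.erase v).minimalElements) :
    flipMinimal s p ∈ s.minimalElements.sigma (antichainErase s A) := by
  obtain ⟨v, m⟩ := p
  obtain ⟨hv, hm⟩ := mem_sigma.1 hp
  rw [flipMinimal]
  split_ifs with hms
  · have hmv : m ≠ v := (mem_erase.1 (minimalElements_subset _ hm)).1
    exact mem_sigma.2 ⟨hms, mem_union_left _ (mem_erase.2 ⟨hmv.symm, hv⟩)⟩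
  · obtain ⟨hvs, -⟩ := mem_minimalElements_and_lt_of_mem_minimalElements_erase hm hms
    refine mem_sigma.2 ⟨hvs, mem_union_right _ ?_⟩
    rw [if_pos hv]
    exact mem_sdiff.2 ⟨hm, hms⟩

theorem injOn_flipMinimal {s A : Finset α} (hA : IsAntichain (· ≤ ·) (A : Set α)) :
    Set.InjOn (flipMinimal s) (A.sigma fun v => (s.erase v).minimalElements) := by
  have flipped_ne_kept : ∀ {v m v' m'}, v ∈ A → v' ∈ A →
      m' ∈ (s.erase v').minimalElements →
      m' ∉ s.minimalElements → m = v' → v = m' → False := by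
    rintro v m v' m' hv hv' hm' hm's rfl rfl
    have hlt := (mem_minimalElements_and_lt_of_mem_minimalElements_erase hm' hm's).2
    exact hA hv' hv hlt.ne hlt.le
  rintro ⟨v, m⟩ hp ⟨v', m'⟩ hp' h
  rw [mem_coe, mem_sigma] at hp hp'
  simp only [flipMinimal] at h
  split_ifs at h with hm hm' hm' <;> simp only [Sigma.mk.inj_iff, heq_eq_eq] at h ⊢
  · exact h.symm
  · exact (flipped_ne_kept hp.1 hp'.1 hp'.2 hm' h.1 h.2).elim
  · exact (flipped_ne_kept hp'.1 hp.1 hp.2 hm h.1.symm h.2.symm).elim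
  · exact h

theorem sum_sum_minimalElements_erase_le {s A : Finset α}
    (hA : IsAntichain (· ≤ ·) (A : Set α)) (f : Finset α → ℕ) :
    ∑ v ∈ A, ∑ m ∈ (s.erase v).minimalElements, f ((s.erase v).erase m) ≤
      ∑ m ∈ s.minimalElements, ∑ w ∈ antichainErase s A m, f ((s.erase m).erase w) := by
  rw [sum_sigma', sum_sigma']
  calc ∑ p ∈ A.sigma fun v => (s.erase v).minimalElements, f ((s.erase p.1).erase p.2)
      = ∑ p ∈ A.sigma fun v => (s.erase v).minimalElements,
          f ((s.erase (flipMinimal s p).1).erase (flipMinimal s p).2) := by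
        refine sum_congr rfl fun p _ => ?_
        rw [flipMinimal]
        split_ifs
        · exact congrArg f erase_right_comm
        · rfl
    _ = ∑ p ∈ (A.sigma fun v => (s.erase v).minimalElements).image (flipMinimal s),
          f ((s.erase p.1).erase p.2) :=
        (sum_image (f := fun p => f ((s.erase p.1).erase p.2)) (injOn_flipMinimal hA)).symm
    _ ≤ _ := sum_le_sum_of_subset (image_subset_iff.2 fun _ => flipMinimal_mem)

theorem sum_card_linearExtensions_erase_le {s A : Finset α} (hAs : A ⊆ s)
    (hA : IsAntichain (· ≤ ·) (A : Set α)) :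
    ∑ v ∈ A, #(s.erase v).linearExtensions ≤ #s.linearExtensions := by
  induction s using Finset.strongInduction generalizing A with
  | H s ih =>
  by_cases hsingle : ∃ v ∈ A, s.erase v = ∅
  · obtain ⟨v, hv, hsv⟩ := hsingle
    have hs : s = {v} := ((erase_eq_empty_iff s v).1 hsv).resolve_left (ne_empty_of_mem (hAs hv))
    subst hs
    obtain rfl : A = {v} := (subset_singleton_iff.1 hAs).resolve_left (ne_empty_of_mem hv)
    rw [sum_singleton, card_linearExtensions (singleton_nonempty v)]
    refine single_le_sum (f := fun m => #(({v} : Finset α).erase m).linearExtensions)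
      (fun _ _ => Nat.zero_le _) (mem_minimalElements.2 ⟨mem_singleton_self v, ?_⟩)
    simp
  push Not at hsingle
  rcases s.eq_empty_or_nonempty with rfl | hs
  · simp [subset_empty.1 hAs]
  calc ∑ v ∈ A, #(s.erase v).linearExtensions
      = ∑ v ∈ A, ∑ m ∈ (s.erase v).minimalElements,
          #((s.erase v).erase m).linearExtensions :=
        sum_congr rfl fun v hv => card_linearExtensions (hsingle v hv)
    _ ≤ ∑ m ∈ s.minimalElements, ∑ w ∈ antichainErase s A m,
          #((s.erase m).erase w).linearExtensions :=
        sum_sum_minimalElements_erase_le hA fun t => #t.linearExtensions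
    _ ≤ ∑ m ∈ s.minimalElements, #(s.erase m).linearExtensions :=
        sum_le_sum fun m hm => ih _ (erase_ssubset (minimalElements_subset _ hm))
          (antichainErase_subset hAs m) (isAntichain_antichainErase hAs hA m)
    _ = #s.linearExtensions := (card_linearExtensions hs).symm

theorem card_linearExtensions_map_subtype {p : α → Prop} (s : Finset (Subtype p)) :
    #(s.map (Function.Embedding.subtype p)).linearExtensions = #s.linearExtensions := by
  suffices (s.map (Function.Embedding.subtype p)).linearExtensions = s.linearExtensions.map
      ⟨List.map Subtype.val, List.map_injective_iff.2 Subtype.val_injective⟩ by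
    rw [this, card_map]
  ext l
  simp only [mem_map, mem_linearExtensions, Function.Embedding.coeFn_mk, map_val,
    Function.Embedding.coe_subtype]
  constructor
  · rintro ⟨hl, hpw⟩
    have hp : ∀ x ∈ l, p x := by
      intro x hx
      have : x ∈ s.val.map Subtype.val := by rw [← hl]; exact hx
      obtain ⟨y, -, rfl⟩ := Multiset.mem_map.1 this
      exact y.2
    lift l to List (Subtype p) using hp with l'
    refine ⟨l', ⟨Multiset.map_injective Subtype.val_injective ?_, ?_⟩, rfl⟩
    · rw [← hl, Multiset.map_coe]
    · exact List.pairwise_map.1 hpw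
  · rintro ⟨l', ⟨hl', hpw⟩, rfl⟩
    exact ⟨by rw [← Multiset.map_coe, hl'], List.pairwise_map.2 hpw⟩

end Finset

theorem List.pairwise_ofFn_symm_iff {W : Type*} [PartialOrder W] {n : ℕ} (f : W ≃ Fin n) :
    (List.ofFn f.symm).Pairwise (fun a b => ¬b < a) ↔ ∀ a b, a < b → f a < f b := by
  rw [List.pairwise_ofFn]
  constructor
  · intro h a b hab
    by_contra hba
    have hlt : f b < f a := lt_of_le_of_ne (not_lt.1 hba) (f.injective.ne hab.ne')
    exact h hlt (by simpa using hab)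
  · intro h i j hij hji
    exact lt_asymm hij (by simpa using h _ _ hji)

theorem eCount_eq_card_linearExtensions (W : Type*) [Fintype W] [DecidableEq W]
    [Q : PartialOrder W] : eCount W Q = #(univ : Finset W).linearExtensions := by
  rw [eCount, ← Nat.card_eq_finsetCard]
  refine Nat.card_congr (Equiv.ofBijective (fun f => ⟨List.ofFn f.1.symm, ?_⟩) ⟨?_, ?_⟩)
  · refine mem_linearExtensions.2 ⟨?_, (List.pairwise_ofFn_symm_iff f.1).2 f.2⟩
    refine (Multiset.Nodup.ext (Multiset.coe_nodup.2 (List.nodup_ofFn.2 f.1.symm.injective))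
      univ.nodup).2 fun a => ?_
    simp [List.mem_ofFn']
  · intro f g h
    exact Subtype.ext (Equiv.symm_bijective.injective
      (DFunLike.coe_injective (List.ofFn_injective (congrArg Subtype.val h))))
  · rintro ⟨l, hl⟩
    obtain ⟨hs, hpw⟩ := mem_linearExtensions.1 hl
    have nd : l.Nodup := Multiset.coe_nodup.1 (hs ▸ univ.nodup)
    have hmem : ∀ x, x ∈ l := fun x => Multiset.mem_coe.1 (hs ▸ mem_univ_val x)
    have hlen : l.length = Fintype.card W := by
      rw [← Multiset.coe_card, hs, ← card_def, card_univ]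
    let f : W ≃ Fin (Fintype.card W) :=
      ((finCongr hlen.symm).trans (List.Nodup.getEquivOfForallMemList l nd hmem)).symm
    have hf : List.ofFn f.symm = l := List.ext_getElem (by simp [hlen]) fun _ _ _ => by simp [f]
    exact ⟨⟨f, (List.pairwise_ofFn_symm_iff f).1 (hf ▸ hpw)⟩, Subtype.ext hf⟩

theorem eCount_delOrder {V : Type*} [Fintype V] [DecidableEq V] [P : PartialOrder V] (v : V) :
    eCount {x : V // x ≠ v} (delOrder P v) = #(univ.erase v).linearExtensions := by
  rw [show delOrder P v = Subtype.partialOrder _ from PartialOrder.ext fun _ _ => Iff.rfl,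
    eCount_eq_card_linearExtensions, ← card_linearExtensions_map_subtype, univ_map_subtype,
    filter_ne']

theorem stmt_8 {V : Type*} [Fintype V] [DecidableEq V] (P : PartialOrder V)
    (A : Finset V) (hA : IsAntichain P.le ↑A) :
    ∑ v ∈ A, eCount {x : V // x ≠ v} (delOrder P v) ≤ eCount V P := by
  let := P
  rw [sum_congr rfl fun v _ => eCount_delOrder v, eCount_eq_card_linearExtensions]
  exact sum_card_linearExtensions_erase_le (subset_univ A) hA
end

section
/- Let P be a finite poset and S a cutset of P (a set of elements meeting every maximal chain of P). Then e(P) ≤ ∑_{v ∈ S} e(P \ v). -/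
/-- `S` is a cutset of `P`: it meets every maximal chain. -/
def IsCutset {V : Type*} (P : PartialOrder V) (S : Finset V) : Prop :=
  ∀ C : Set V, IsMaxChain P.le C → ∃ v ∈ S, v ∈ C

/-
Read a linear extension as a strictly monotone bijection `f : V ≃ Fin n`. Starting at the
`f`-first element and repeatedly stepping to the `f`-first element strictly above, one walks along
a maximal chain, the greedy chain of `f`; it meets the cutset `S` in some `v`. Moving every element
of the greedy chain below `v` into the position of its successor on the chain and deleting `v`
yields a linear extension of `P \ v`. Knowing `v`, the chain can be read back downwards from it:
each chain element below `v` is the element of largest new position below its successor. Hence for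
each `v` the construction is injective, and summing over `v ∈ S` gives the bound.
-/

open Function Finset

theorem StrictMono.le_of_comparable_of_map_le {V β : Type*} [PartialOrder V] [Preorder β]
    {f : V → β} (hf : StrictMono f) {x y : V} (hxy : x ≤ y ∨ y ≤ x) (h : f x ≤ f y) :
    x ≤ y := by
  rcases hxy with hxy | hyx
  · exact hxy
  · obtain rfl | hlt := hyx.eq_or_lt
    · exact le_rfl
    · exact absurd h (hf hlt).not_ge

theorem Equiv.ext_of_forall_ne {β γ : Type*} {e₁ e₂ : β ≃ γ} (a : β)
    (h : ∀ b, b ≠ a → e₁ b = e₂ b) : e₁ = e₂ := by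
  ext b
  by_cases hb : b = a
  · subst hb
    by_contra hne
    have hc : e₂.symm (e₁ b) ≠ b := fun hc => hne (by rw [← hc, Equiv.apply_symm_apply, hc])
    exact hc (e₁.injective ((h _ hc).trans (e₂.apply_symm_apply _)))
  · exact h b hb

theorem exists_equiv_fin_val_add_one {W : Type*} [Fintype W] {n : ℕ}
    (hn : n = Fintype.card W + 1) (g : W → Fin n) (hinj : Injective g)
    (hpos : ∀ w, 0 < (g w : ℕ)) :
    ∃ e : W ≃ Fin (Fintype.card W), ∀ w, (e w : ℕ) + 1 = g w := by
  subst hn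
  refine ⟨Equiv.ofBijective (fun w => ⟨g w - 1, by have := (g w).isLt; have := hpos w; omega⟩)
    ((Fintype.bijective_iff_injective_and_card _).2 ⟨fun a b hab => hinj (Fin.ext ?_),
      (Fintype.card_fin _).symm⟩), fun w => ?_⟩
  · have := Fin.mk.inj_iff.1 hab
    have := hpos a
    have := hpos b
    omega
  · have := hpos w
    simp only [Equiv.ofBijective_apply]
    omega

theorem card_le_sum_card_subtype {X ι : Type*} [Finite X] (s : Finset ι) (p : ι → X → Prop)
    (h : ∀ x, ∃ i ∈ s, p i x) : Nat.card X ≤ ∑ i ∈ s, Nat.card {x // p i x} := by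
  classical
  have := Fintype.ofFinite X
  calc Nat.card X = #(univ : Finset X) := by rw [Nat.card_eq_fintype_card, card_univ]
    _ ≤ #(s.biUnion fun i => univ.filter (p i)) :=
      card_le_card fun x _ => by simpa using h x
    _ ≤ ∑ i ∈ s, #(univ.filter (p i)) := card_biUnion_le
    _ = ∑ i ∈ s, Nat.card {x // p i x} := by
      simp only [Nat.card_eq_fintype_card, Fintype.card_subtype]

section

variable {V α : Type*} [PartialOrder V] [LinearOrder α] [WellFoundedLT α]

open Classical in
noncomputable def greedyStep (f : V → α) (c : V) : V :=
  if h : {u | c < u}.Nonempty then argminOn f {u | c < u} h else c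

noncomputable def greedyChain [Nonempty V] (f : V → α) : Set V :=
  Set.range fun k => (greedyStep f)^[k] (argmin f)

section greedy

variable (f : V → α) {c u : V}

theorem le_greedyStep : c ≤ greedyStep f c := by
  unfold greedyStep
  split_ifs with h
  · exact (argminOn_mem f _ h).le
  · exact le_rfl

theorem lt_greedyStep (h : c < u) : c < greedyStep f c := by
  rw [greedyStep, dif_pos ⟨u, h⟩]
  exact argminOn_mem f {u | c < u} _

theorem apply_greedyStep_le_of_lt (h : c < u) : f (greedyStep f c) ≤ f u := by
  rw [greedyStep, dif_pos ⟨u, h⟩]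
  exact argminOn_le f {u | c < u} h

variable [Nonempty V]

theorem argmin_mem_greedyChain : argmin f ∈ greedyChain f := ⟨0, rfl⟩

theorem greedyStep_mem_greedyChain (hc : c ∈ greedyChain f) :
    greedyStep f c ∈ greedyChain f := by
  obtain ⟨k, rfl⟩ := hc
  exact ⟨k + 1, iterate_succ_apply' _ _ _⟩

theorem isChain_greedyChain : IsChain (· ≤ ·) (greedyChain f) := by
  have hmono : Monotone fun k => (greedyStep f)^[k] (argmin f) :=
    monotone_nat_of_le_succ fun k => by rw [iterate_succ_apply']; exact le_greedyStep f
  rintro _ ⟨i, rfl⟩ _ ⟨j, rfl⟩ -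
  exact (le_total i j).imp (fun h => hmono h) (fun h => hmono h)

theorem exists_greedyStep_eq_of_ne_argmin {x : V} (hx : x ∈ greedyChain f)
    (hne : x ≠ argmin f) : ∃ c ∈ greedyChain f, c < x ∧ greedyStep f c = x := by
  obtain ⟨k, rfl⟩ := hx
  induction k with
  | zero => exact absurd rfl hne
  | succ k ih =>
    dsimp only at hne ih ⊢
    rw [iterate_succ_apply'] at hne ⊢
    set c := (greedyStep f)^[k] (argmin f)
    by_cases hup : ∃ u, c < u
    · obtain ⟨u, hu⟩ := hup
      exact ⟨c, ⟨k, rfl⟩, lt_greedyStep f hu, rfl⟩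
    · have hfix : greedyStep f c = c := by
        rw [greedyStep, dif_neg (by simpa [Set.Nonempty] using hup)]
      rw [hfix] at hne ⊢
      exact ih hne

variable {f} (hf : StrictMono f)
include hf

theorem ne_argmin_of_lt {w x : V} (h : w < x) : x ≠ argmin f := by
  rintro rfl
  exact not_lt_argmin f w (hf h)

theorem greedyStep_le_of_lt_of_mem {y : V} (hc : c ∈ greedyChain f) (hy : y ∈ greedyChain f)
    (h : c < y) : greedyStep f c ≤ y :=
  hf.le_of_comparable_of_map_le
    ((isChain_greedyChain f).total (greedyStep_mem_greedyChain f hc) hy)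
    (apply_greedyStep_le_of_lt f h)

theorem isMaxChain_greedyChain [Finite V] : IsMaxChain (· ≤ ·) (greedyChain f) := by
  refine ⟨isChain_greedyChain f, fun t ht hsub => hsub.antisymm fun z hz => ?_⟩
  have hcomp : ∀ x ∈ greedyChain f, x ≤ z ∨ z ≤ x := fun x hx => ht.total (hsub hx) hz
  obtain ⟨c, ⟨hc, hcz⟩, hcmax⟩ :=
    Set.Finite.exists_maximalFor f {x | x ∈ greedyChain f ∧ x ≤ z} (Set.toFinite _)
      ⟨_, argmin_mem_greedyChain f,
        hf.le_of_comparable_of_map_le (hcomp _ (argmin_mem_greedyChain f)) (argmin_le f z)⟩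
  obtain rfl | hcz := hcz.eq_or_lt
  · exact hc
  have hnext := greedyStep_mem_greedyChain f hc
  have hnext_le := hf.le_of_comparable_of_map_le (hcomp _ hnext) (apply_greedyStep_le_of_lt f hcz)
  have hlt := hf (lt_greedyStep f hcz)
  exact absurd (hcmax ⟨hnext, hnext_le⟩ hlt.le) (not_le.2 hlt)

end greedy

open Classical in
/-- Restricted to `{x // x ≠ v}` and shifted down by one, these positions form the linear
extension of `P \ v` assigned to `f`. -/
noncomputable def greedyShift [Nonempty V] (f : V → α) (v u : V) : α :=
  if u ∈ greedyChain f ∧ u < v then f (greedyStep f u) else f u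

section shift

variable [Nonempty V] {f : V → α} {v u : V}

theorem greedyShift_of_mem_of_lt (hu : u ∈ greedyChain f) (huv : u < v) :
    greedyShift f v u = f (greedyStep f u) :=
  if_pos ⟨hu, huv⟩

theorem greedyShift_of_not_mem_and_lt (hu : ¬(u ∈ greedyChain f ∧ u < v)) :
    greedyShift f v u = f u :=
  if_neg hu

variable (hf : StrictMono f)
include hf

theorem greedyShift_lt_of_lt_greedyStep {c w : V} (hc : c ∈ greedyChain f) (hcv : c < v)
    (hw : w < greedyStep f c) (hwc : w ≠ c) : greedyShift f v w < greedyShift f v c := by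
  rw [greedyShift_of_mem_of_lt hc hcv]
  by_cases hw' : w ∈ greedyChain f ∧ w < v
  · rw [greedyShift_of_mem_of_lt hw'.1 hw'.2]
    rcases (isChain_greedyChain f).total hw'.1 hc with h | h
    · exact (hf.monotone (greedyStep_le_of_lt_of_mem hf hw'.1 hc (h.lt_of_ne hwc))).trans_lt
        (hf (lt_greedyStep f hcv))
    · exact absurd ((greedyStep_le_of_lt_of_mem hf hc hw'.1 (h.lt_of_ne' hwc)).trans_lt hw)
        (lt_irrefl _)
  · rw [greedyShift_of_not_mem_and_lt hw']
    exact hf hw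

variable (hinj : Injective f) (hv : v ∈ greedyChain f)
include hinj hv

theorem greedyShift_lt_greedyShift {a b : V} (hab : a < b) (hbv : b ≠ v) :
    greedyShift f v a < greedyShift f v b := by
  by_cases hb : b ∈ greedyChain f ∧ b < v
  · have hbn : f b < f (greedyStep f b) := hf (lt_greedyStep f hb.2)
    rw [greedyShift_of_mem_of_lt hb.1 hb.2]
    by_cases ha : a ∈ greedyChain f ∧ a < v
    · rw [greedyShift_of_mem_of_lt ha.1 ha.2]
      exact (hf.monotone (greedyStep_le_of_lt_of_mem hf ha.1 hb.1 hab)).trans_lt hbn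
    · rw [greedyShift_of_not_mem_and_lt ha]
      exact (hf hab).trans hbn
  · rw [greedyShift_of_not_mem_and_lt hb]
    by_cases ha : a ∈ greedyChain f ∧ a < v
    · rw [greedyShift_of_mem_of_lt ha.1 ha.2]
      refine (apply_greedyStep_le_of_lt f hab).lt_of_ne fun heq => hb ?_
      obtain rfl := hinj heq
      exact ⟨greedyStep_mem_greedyChain f ha.1,
        (greedyStep_le_of_lt_of_mem hf ha.1 hv ha.2).lt_of_ne hbv⟩
    · rw [greedyShift_of_not_mem_and_lt ha]
      exact hf hab

theorem greedyShift_injOn : Set.InjOn (greedyShift f v) {v}ᶜ := by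
  have key : ∀ a b, a ≠ v → b ≠ v → a ∈ greedyChain f ∧ a < v →
      greedyShift f v a = greedyShift f v b → a = b := by
    intro a b hav hbv ha hab
    have hcomp : a ≤ b ∨ b ≤ a := by
      by_cases hb : b ∈ greedyChain f ∧ b < v
      · exact (isChain_greedyChain f).total ha.1 hb.1
      · rw [greedyShift_of_mem_of_lt ha.1 ha.2, greedyShift_of_not_mem_and_lt hb] at hab
        exact Or.inl (hinj hab ▸ le_greedyStep f)
    rcases hcomp with h | h <;> obtain rfl | h := h.eq_or_lt
    · rfl
    · exact absurd hab (greedyShift_lt_greedyShift hf hinj hv h hbv).ne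
    · rfl
    · exact absurd hab (greedyShift_lt_greedyShift hf hinj hv h hav).ne'
  intro a ha b hb hab
  by_cases ha' : a ∈ greedyChain f ∧ a < v
  · exact key a b ha hb ha' hab
  by_cases hb' : b ∈ greedyChain f ∧ b < v
  · exact (key b a hb ha hb' hab.symm).symm
  · rw [greedyShift_of_not_mem_and_lt ha', greedyShift_of_not_mem_and_lt hb'] at hab
    exact hinj hab

theorem apply_argmin_lt_greedyShift (huv : u ≠ v) : f (argmin f) < greedyShift f v u := by
  by_cases hu : u ∈ greedyChain f ∧ u < v
  · rw [greedyShift_of_mem_of_lt hu.1 hu.2]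
    exact (argmin_le f u).trans_lt (hf (lt_greedyStep f hu.2))
  · rw [greedyShift_of_not_mem_and_lt hu]
    refine (argmin_le f u).lt_of_ne fun h => hu ?_
    obtain rfl := hinj h
    have hle := hf.le_of_comparable_of_map_le
      ((isChain_greedyChain f).total (argmin_mem_greedyChain f) hv) (argmin_le f v)
    exact ⟨argmin_mem_greedyChain f, hle.lt_of_ne huv⟩

end shift

section decode

variable [Nonempty V] {f₁ f₂ : V → α} {v : V}
  (hf₁ : StrictMono f₁) (hf₂ : StrictMono f₂)
  (h : ∀ u, u ≠ v → greedyShift f₁ v u = greedyShift f₂ v u)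
include hf₁ hf₂ h

theorem eq_of_greedyStep_eq {x₁ x₂ : V} (hx₁ : x₁ ∈ greedyChain f₁) (hx₁v : x₁ < v)
    (hx₂ : x₂ ∈ greedyChain f₂) (hx₂v : x₂ < v)
    (he : greedyStep f₁ x₁ = greedyStep f₂ x₂) : x₁ = x₂ := by
  by_contra hne
  have h₁ := greedyShift_lt_of_lt_greedyStep hf₁ hx₁ hx₁v
    (he ▸ lt_greedyStep f₂ hx₂v) (Ne.symm hne)
  have h₂ := greedyShift_lt_of_lt_greedyStep hf₂ hx₂ hx₂v
    (he ▸ lt_greedyStep f₁ hx₁v) hne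
  rw [h _ hx₁v.ne, h _ hx₂v.ne] at h₁
  exact lt_asymm h₁ h₂

/- A counterexample `x` with the largest `f₁`-value of its successor `y` has `y` on both chains,
and then `x` is also the predecessor of `y` on the chain of `f₂`. -/
theorem mem_greedyChain_of_greedyShift_eq [Finite V] (hv₁ : v ∈ greedyChain f₁)
    (hv₂ : v ∈ greedyChain f₂) {x : V} (hx : x ∈ greedyChain f₁) (hxv : x < v) :
    x ∈ greedyChain f₂ := by
  by_contra hx₂
  obtain ⟨x, ⟨hx, hxv, hx₂⟩, hmax⟩ :=
    Set.Finite.exists_maximalFor (fun x => f₁ (greedyStep f₁ x))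
      {x | x ∈ greedyChain f₁ ∧ x < v ∧ x ∉ greedyChain f₂} (Set.toFinite _)
      ⟨x, hx, hxv, hx₂⟩
  set y := greedyStep f₁ x
  have hy₁ : y ∈ greedyChain f₁ := greedyStep_mem_greedyChain f₁ hx
  have hyv : y ≤ v := greedyStep_le_of_lt_of_mem hf₁ hx hv₁ hxv
  have hy₂ : y ∈ greedyChain f₂ := by
    obtain hyv | hyv := hyv.eq_or_lt
    · rwa [hyv]
    by_contra hy₂
    have hlt := hf₁ (lt_greedyStep f₁ hyv)
    exact absurd (hmax ⟨hy₁, hyv, hy₂⟩ hlt.le) (not_le.2 hlt)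
  obtain ⟨x', hx', hx'y, hx'eq⟩ :=
    exists_greedyStep_eq_of_ne_argmin f₂ hy₂ (ne_argmin_of_lt hf₂ (lt_greedyStep f₁ hxv))
  obtain rfl := eq_of_greedyStep_eq hf₁ hf₂ h hx hxv hx' (hx'y.trans_le hyv) hx'eq.symm
  exact hx₂ hx'

end decode

theorem eq_of_greedyShift_eq [Nonempty V] [Finite V] {f₁ f₂ : V ≃ α} {v : V}
    (hf₁ : StrictMono f₁) (hf₂ : StrictMono f₂) (hv₁ : v ∈ greedyChain f₁)
    (hv₂ : v ∈ greedyChain f₂)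
    (h : ∀ u, u ≠ v → greedyShift f₁ v u = greedyShift f₂ v u) : f₁ = f₂ := by
  have hbelow : ∀ u, (u ∈ greedyChain f₁ ∧ u < v) ↔ (u ∈ greedyChain f₂ ∧ u < v) :=
    fun u =>
    ⟨fun hu => ⟨mem_greedyChain_of_greedyShift_eq hf₁ hf₂ h hv₁ hv₂ hu.1 hu.2, hu.2⟩,
      fun hu => ⟨mem_greedyChain_of_greedyShift_eq hf₂ hf₁ (fun u hu => (h u hu).symm)
        hv₂ hv₁ hu.1 hu.2, hu.2⟩⟩
  refine Equiv.ext_of_forall_ne (argmin f₁) fun u hu => ?_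
  by_cases hu₁ : u ∈ greedyChain f₁ ∧ u ≤ v
  · obtain ⟨x, hx, hxu, rfl⟩ := exists_greedyStep_eq_of_ne_argmin f₁ hu₁.1 hu
    have hxv := hxu.trans_le hu₁.2
    have hu₂ : greedyStep f₁ x ∈ greedyChain f₂ := by
      obtain huv | huv := hu₁.2.eq_or_lt
      · rwa [huv]
      · exact ((hbelow _).1 ⟨hu₁.1, huv⟩).1
    obtain ⟨x', hx', hx'u, hx'eq⟩ :=
      exists_greedyStep_eq_of_ne_argmin f₂ hu₂ (ne_argmin_of_lt hf₂ hxu)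
    obtain rfl := eq_of_greedyStep_eq hf₁ hf₂ h hx hxv hx' (hx'u.trans_le hu₁.2) hx'eq.symm
    calc f₁ (greedyStep f₁ x) = greedyShift f₁ v x := (greedyShift_of_mem_of_lt hx hxv).symm
      _ = greedyShift f₂ v x := h x hxv.ne
      _ = f₂ (greedyStep f₂ x) := greedyShift_of_mem_of_lt hx' hxv
      _ = f₂ (greedyStep f₁ x) := by rw [hx'eq]
  · have huv : u ≠ v := fun huv => hu₁ ⟨huv ▸ hv₁, huv.le⟩
    have hnot₁ : ¬(u ∈ greedyChain f₁ ∧ u < v) := fun h' => hu₁ ⟨h'.1, h'.2.le⟩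
    have hnot₂ : ¬(u ∈ greedyChain f₂ ∧ u < v) := (hbelow u).not.1 hnot₁
    rw [← greedyShift_of_not_mem_and_lt hnot₁, ← greedyShift_of_not_mem_and_lt hnot₂]
    exact h u huv

section count

variable [Fintype V] [DecidableEq V]

theorem card_strictMono_mem_greedyChain_le [Nonempty V] (v : V) :
    Nat.card {f : {f : V ≃ Fin (Fintype.card V) // StrictMono f} // v ∈ greedyChain f.1} ≤
      Nat.card {g : {x // x ≠ v} ≃ Fin (Fintype.card {x // x ≠ v}) // StrictMono g} := by
  have hcard : Fintype.card V = Fintype.card {x // x ≠ v} + 1 := by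
    have := Fintype.card_pos (α := V)
    simp only [Fintype.card_subtype_compl, Fintype.card_unique]
    omega
  have hshift : ∀ f : {f : V ≃ Fin (Fintype.card V) // StrictMono f}, v ∈ greedyChain f.1 →
      ∃ e : {x // x ≠ v} ≃ Fin (Fintype.card {x // x ≠ v}),
        ∀ u, (e u : ℕ) + 1 = greedyShift f.1 v u := fun f hv =>
    exists_equiv_fin_val_add_one hcard _
      (fun a b hab => Subtype.ext (greedyShift_injOn f.2 f.1.injective hv a.2 b.2 hab))
      fun u => (Nat.zero_le _).trans_lt (apply_argmin_lt_greedyShift f.2 f.1.injective hv u.2)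
  choose e he using hshift
  refine Nat.card_le_card_of_injective (fun f => ⟨e f.1 f.2, fun a b hab => ?_⟩) ?_
  · have := greedyShift_lt_greedyShift f.1.2 f.1.1.injective f.2 hab b.2
    rw [Fin.lt_def, ← he f.1 f.2, ← he f.1 f.2] at this
    exact Fin.lt_def.2 (by omega)
  · rintro ⟨f₁, hv₁⟩ ⟨f₂, hv₂⟩ h
    have he' : e f₁ hv₁ = e f₂ hv₂ := congrArg Subtype.val h
    refine Subtype.ext (Subtype.ext (eq_of_greedyShift_eq f₁.2 f₂.2 hv₁ hv₂ fun u hu => ?_))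
    rw [Fin.ext_iff, ← he f₁ hv₁ ⟨u, hu⟩, ← he f₂ hv₂ ⟨u, hu⟩, he']

theorem card_strictMono_le_sum_of_isMaxChain (S : Finset V)
    (hS : ∀ C : Set V, IsMaxChain (· ≤ ·) C → ∃ v ∈ S, v ∈ C) :
    Nat.card {f : V ≃ Fin (Fintype.card V) // StrictMono f} ≤
      ∑ v ∈ S, Nat.card {g : {x // x ≠ v} ≃ Fin (Fintype.card {x // x ≠ v}) //
        StrictMono g} := by
  obtain ⟨C, hC, -⟩ := (IsChain.empty (r := (· ≤ · : V → V → Prop))).exists_maxChain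
  obtain ⟨v, -, -⟩ := hS C hC
  have : Nonempty V := ⟨v⟩
  calc _ ≤ ∑ v ∈ S, Nat.card {f : {f : V ≃ Fin (Fintype.card V) // StrictMono f} //
          v ∈ greedyChain f.1} :=
        card_le_sum_card_subtype S _ fun f => hS _ (isMaxChain_greedyChain f.2)
    _ ≤ _ := sum_le_sum fun v _ => card_strictMono_mem_greedyChain_le v

end count

end

theorem stmt_9 {V : Type*} [Fintype V] [DecidableEq V] (P : PartialOrder V)
    (S : Finset V) (hS : IsCutset P S) :
    eCount V P ≤ ∑ v ∈ S, eCount {x : V // x ≠ v} (delOrder P v) :=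
  @card_strictMono_le_sum_of_isMaxChain V P _ _ S hS
end

section
/- Let P be a finite poset and I a subset of its ground set that is an antichain or a cutset. Then e(P) = ∑_{v ∈ I} e(P \ v) if and only if I is simultaneously an antichain and a cutset of P. -/
/-!
Removing a minimal element first gives `e(S) = ∑_{m ∈ min S} e(S \ m)`. Expanding every
`e(S \ v)`, `v ∈ I`, the same way and regrouping by the minimal element `m` of `S` removed first
turns `∑_{v ∈ I} e(S \ v)` into `∑_m ∑_{w ∈ I_m} e(S \ m \ w)` plus a nonnegative overlap term,
where `I_m` is `I` with `m` (if it lies in `I`) replaced by the elements that become minimal in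
`S \ m`. If `I` is an antichain, so is each `I_m` and the overlap vanishes; if `I` is a cutset, so
is each `I_m`. Conversely, `I` is a cutset as soon as all `I_m` are, and an antichain as soon as
all `I_m` are antichains without overlap. Induction on `S` gives `∑ ≤ e` for antichains and
`e ≤ ∑` for cutsets, and in the case of equality pushes the missing property down to every `I_m`.
-/

open Finset

section

variable {V : Type*} [PartialOrder V]

open Classical in
noncomputable def mins (S : Finset V) : Finset V := {m ∈ S | Minimal (· ∈ S) m}

@[simp]
theorem mem_mins {S : Finset V} {m : V} : m ∈ mins S ↔ Minimal (· ∈ S) m := by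
  simpa [mins] using fun h => h.prop

theorem mins_nonempty {S : Finset V} (hS : S.Nonempty) : (mins S).Nonempty := by
  obtain ⟨x, hx⟩ := hS
  obtain ⟨m, -, hm⟩ := S.exists_le_minimal hx
  exact ⟨m, mem_mins.2 hm⟩

def IsMaxChainIn (S : Finset V) (C : Set V) : Prop :=
  Maximal (fun D : Set V => D ⊆ S ∧ IsChain (· ≤ ·) D) C

def IsCutsetIn (S I : Finset V) : Prop :=
  ∀ C, IsMaxChainIn S C → ∃ v ∈ I, v ∈ C

theorem exists_isMaxChainIn_superset {S : Finset V} {D : Set V} (hDS : D ⊆ S)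
    (hD : IsChain (· ≤ ·) D) : ∃ C, D ⊆ C ∧ IsMaxChainIn S C :=
  (S.finite_toSet.finite_subsets.subset fun _ hE => hE.1).exists_le_maximal ⟨hDS, hD⟩

namespace IsMaxChainIn

variable {S : Finset V} {C : Set V}

theorem subset (h : IsMaxChainIn S C) : C ⊆ S := h.prop.1

theorem isChain (h : IsMaxChainIn S C) : IsChain (· ≤ ·) C := h.prop.2

theorem mem_of_comparable (h : IsMaxChainIn S C) {z : V} (hz : z ∈ S)
    (hcomp : ∀ c ∈ C, z ≤ c ∨ c ≤ z) : z ∈ C :=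
  h.mem_of_prop_insert ⟨Set.insert_subset hz h.subset, h.isChain.insert fun c hc _ => hcomp c hc⟩

theorem exists_mem_mins (h : IsMaxChainIn S C) (hS : S.Nonempty) : ∃ c ∈ C, c ∈ mins S := by
  obtain ⟨x, hx⟩ := hS
  rcases C.eq_empty_or_nonempty with rfl | hC
  · exact absurd (h.mem_of_comparable hx fun c hc => hc.elim) (Set.notMem_empty x)
  obtain ⟨c, hc⟩ := (S.finite_toSet.subset h.subset).exists_minimal hC
  obtain ⟨z, hzc, hz⟩ := S.exists_le_minimal (h.subset hc.prop)
  have hzC : z ∈ C := h.mem_of_comparable hz.prop fun d hd => by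
    rcases h.isChain.total hc.prop hd with hcd | hdc
    · exact .inl (hzc.trans hcd)
    · exact .inl (hzc.trans (hc.le_of_le hd hdc))
  obtain rfl := hc.eq_of_le hzC hzc
  exact ⟨z, hzC, mem_mins.2 hz⟩

end IsMaxChainIn

theorem IsCutsetIn.nonempty {S I : Finset V} (h : IsCutsetIn S I) : I.Nonempty := by
  obtain ⟨C, -, hC⟩ := exists_isMaxChainIn_superset (S := S) (Set.empty_subset _) IsChain.empty
  obtain ⟨v, hv, -⟩ := h C hC
  exact ⟨v, hv⟩

theorem isCutsetIn_self {S : Finset V} (hS : S.Nonempty) : IsCutsetIn S S := fun C hC => by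
  obtain ⟨c, hcC, hc⟩ := hC.exists_mem_mins hS
  exact ⟨c, (mem_mins.1 hc).prop, hcC⟩

theorem isCutset_iff_isCutsetIn_univ [Fintype V] (I : Finset V) :
    IsCutset ‹_› I ↔ IsCutsetIn univ I := by
  have : ∀ C : Set V, IsMaxChain (· ≤ ·) C ↔ IsMaxChainIn univ C := fun C => by
    simp only [IsMaxChainIn, IsMaxChain, Maximal, coe_univ, Set.subset_univ, true_and]
    exact and_congr_right fun _ => ⟨fun h t ht hCt => (h ht hCt).ge,
      fun h t ht hCt => hCt.antisymm (h ht hCt)⟩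
  simp only [IsCutset, IsCutsetIn, this]

open Classical in
/-- The linear extensions of the subposet `S`, as lists running from bottom to top. -/
noncomputable def linExts (S : Finset V) : Finset (List V) :=
  {l ∈ (⟨S.1.lists, Multiset.lists_nodup_finset S⟩ : Finset (List V)) |
    l.Pairwise fun a b => ¬ b < a}

variable [DecidableEq V]

namespace IsMaxChainIn

variable {S : Finset V} {C : Set V}

theorem erase (h : IsMaxChainIn S C) {m : V} (hm : m ∉ C) : IsMaxChainIn (S.erase m) C :=
  h.mono (fun _ hD => ⟨hD.1.trans (coe_subset.2 (erase_subset _ _)), hD.2⟩)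
    ⟨fun _ hx => mem_erase.2 ⟨fun hxm => hm (hxm ▸ hx), h.subset hx⟩, h.isChain⟩

theorem sdiff_singleton (h : IsMaxChainIn S C) {c : V} (hc : c ∈ C) (hle : ∀ x ∈ S, c ≤ x) :
    IsMaxChainIn (S.erase c) (C \ {c}) := by
  refine ⟨⟨fun x hx => mem_erase.2 ⟨hx.2, h.subset hx.1⟩, h.isChain.mono Set.sdiff_subset⟩, ?_⟩
  rintro D ⟨hDS, hD⟩ hCD
  have hins : insert c D = C := (h.eq_of_subset
    ⟨Set.insert_subset (h.subset hc) fun x hx => mem_of_mem_erase (hDS hx),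
      hD.insert fun x hx _ => .inl (hle x (mem_of_mem_erase (hDS hx)))⟩
    fun x hx => by
      by_cases hxc : x = c
      · exact hxc ▸ Set.mem_insert c D
      · exact Set.mem_insert_of_mem c (hCD ⟨hx, hxc⟩)).symm
  intro x hx
  exact ⟨hins ▸ Set.mem_insert_of_mem c hx, fun hxc => (mem_erase.1 (hDS hx)).1 hxc⟩

theorem exists_lift {m : V} (h : IsMaxChainIn (S.erase m) C) :
    ∃ D, IsMaxChainIn S D ∧ C ⊆ D ∧ D ⊆ insert m C := by
  obtain ⟨D, hCD, hD⟩ :=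
    exists_isMaxChainIn_superset (h.subset.trans (coe_subset.2 (erase_subset _ _))) h.isChain
  refine ⟨D, hD, hCD, ?_⟩
  have hmC : m ∉ C := fun hm => by simpa using h.subset hm
  have : C = D \ {m} := h.eq_of_subset
    ⟨fun x hx => mem_erase.2 ⟨hx.2, hD.subset hx.1⟩, hD.isChain.mono Set.sdiff_subset⟩
    fun x hx => ⟨hCD hx, fun hxm => hmC (hxm ▸ hx)⟩
  exact this ▸ Set.subset_insert_sdiff_singleton m D

end IsMaxChainIn

theorem mem_linExts {S : Finset V} {l : List V} :
    l ∈ linExts S ↔ l.Nodup ∧ l.toFinset = S ∧ l.Pairwise fun a b => ¬ b < a := by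
  have : S.1 = l ↔ l.Nodup ∧ l.toFinset = S := by
    refine ⟨fun h => ⟨?_, ?_⟩, fun ⟨hnd, h⟩ => ?_⟩
    · simpa [h] using S.nodup
    · ext x; simp [← Finset.mem_val, h]
    · rw [← h, List.toFinset_val, hnd.dedup]
  simp [linExts, Finset.mem_def, this, and_assoc]

theorem linExts_empty : linExts (∅ : Finset V) = {[]} := by
  ext l
  cases l <;> simp [mem_linExts]

theorem cons_mem_linExts {S : Finset V} {a : V} {l : List V} :
    a :: l ∈ linExts S ↔ a ∈ mins S ∧ l ∈ linExts (S.erase a) := by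
  simp only [mem_linExts, List.nodup_cons, List.toFinset_cons, List.pairwise_cons, mem_mins,
    minimal_iff_forall_lt]
  constructor
  · rintro ⟨⟨hal, hnd⟩, rfl, hmin, hl⟩
    refine ⟨⟨mem_insert_self _ _, fun z hza hz => ?_⟩, hnd, ?_, hl⟩
    · rcases mem_insert.1 hz with rfl | hz
      · exact hza.false
      · exact hmin z (List.mem_toFinset.1 hz) hza
    · rw [erase_insert (by simpa using hal)]
  · rintro ⟨⟨ha, hmin⟩, hnd, hl, hpw⟩
    refine ⟨⟨fun h => ?_, hnd⟩, by rw [hl, insert_erase ha], fun z hz hza => hmin hza ?_, hpw⟩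
    · simpa [hl] using List.mem_toFinset.2 h
    · exact mem_of_mem_erase (hl ▸ List.mem_toFinset.2 hz)

theorem linExts_eq_biUnion {S : Finset V} (hS : S.Nonempty) :
    linExts S = (mins S).biUnion fun m => (linExts (S.erase m)).image (List.cons m) := by
  ext l
  cases l with
  | nil => simpa [mem_linExts] using hS.ne_empty.symm
  | cons a l => simp [cons_mem_linExts]

theorem card_linExts_eq_sum_mins {S : Finset V} (hS : S.Nonempty) :
    #(linExts S) = ∑ m ∈ mins S, #(linExts (S.erase m)) := by
  rw [linExts_eq_biUnion hS, card_biUnion]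
  · exact sum_congr rfl fun m _ => card_image_of_injective _ List.cons_injective
  · intro m _ m' _ hne
    simp only [Function.onFun, disjoint_left, mem_image]
    rintro _ ⟨l, -, rfl⟩ ⟨l', -, h⟩
    exact hne (List.cons_eq_cons.1 h).1.symm

theorem card_linExts_pos (S : Finset V) : 0 < #(linExts S) := by
  induction S using Finset.strongInduction with
  | _ S ih =>
    rcases S.eq_empty_or_nonempty with rfl | hS
    · simp [linExts_empty]
    · rw [card_linExts_eq_sum_mins hS]
      exact sum_pos (fun m hm => ih _ (erase_ssubset (mem_mins.1 hm).prop)) (mins_nonempty hS)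

theorem card_linExts_of_card_le_one {S : Finset V} (hS : #S ≤ 1) : #(linExts S) = 1 := by
  rcases S.eq_empty_or_nonempty with rfl | hne
  · simp [linExts_empty]
  · obtain ⟨a, rfl⟩ := card_eq_one.1 (le_antisymm hS hne.card_pos)
    simp [card_linExts_eq_sum_mins, linExts_empty, mins, filter_singleton]

noncomputable def newMins (S : Finset V) (m : V) : Finset V := mins (S.erase m) \ mins S

theorem eq_of_lt_of_mem_newMins {S : Finset V} {m y z : V} (hy : y ∈ newMins S m) (hz : z ∈ S)
    (hzy : z < y) : z = m := by
  rw [newMins, mem_sdiff, mem_mins] at hy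
  by_contra hzm
  exact hy.1.not_lt (mem_erase.2 ⟨hzm, hz⟩) hzy

theorem lt_of_mem_newMins {S : Finset V} {m y : V} (hy : y ∈ newMins S m) : m < y := by
  have hyS : y ∈ S := mem_of_mem_erase (mem_mins.1 (mem_sdiff.1 hy).1).prop
  have hnot := (mem_sdiff.1 hy).2
  simp only [mem_mins, minimal_iff_forall_lt, hyS, true_and, not_forall, not_not] at hnot
  obtain ⟨z, hzy, hz⟩ := hnot
  exact eq_of_lt_of_mem_newMins hy hz hzy ▸ hzy

theorem mem_mins_of_mem_newMins {S : Finset V} {m y : V} (hy : y ∈ newMins S m) : m ∈ mins S := by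
  have hmS : m ∈ S := by
    by_contra hm
    simp [newMins, erase_eq_of_notMem hm] at hy
  refine mem_mins.2 (minimal_iff_forall_lt.2 ⟨hmS, fun z hzm hz => ?_⟩)
  exact hzm.ne (eq_of_lt_of_mem_newMins hy hz (hzm.trans (lt_of_mem_newMins hy)))

theorem mins_erase_inter_mins (S : Finset V) (m : V) :
    mins (S.erase m) ∩ mins S = (mins S).erase m := by
  ext y
  simp only [mem_inter, mem_erase, mem_mins]
  constructor
  · rintro ⟨hy, hyS⟩
    exact ⟨hy.prop.1, hyS⟩
  · rintro ⟨hym, hyS⟩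
    exact ⟨hyS.mono (fun _ hx => hx.2) ⟨hym, hyS.prop⟩, hyS⟩

noncomputable def deletionSum (S I : Finset V) : ℕ := ∑ v ∈ I, #(linExts (S.erase v))

theorem deletionSum_eq_zero_iff {S I : Finset V} : deletionSum S I = 0 ↔ I = ∅ := by
  simp [deletionSum, sum_eq_zero_iff, (card_linExts_pos _).ne', eq_empty_iff_forall_notMem]

theorem deletionSum_of_card_le_one {S : Finset V} (I : Finset V) (hS : #S ≤ 1) :
    deletionSum S I = #I := by
  rw [deletionSum, card_eq_sum_ones]
  exact sum_congr rfl fun v _ => card_linExts_of_card_le_one ((card_erase_le).trans hS)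

noncomputable def advance (S I : Finset V) (m : V) : Finset V :=
  if m ∈ I then I.erase m ∪ newMins S m else I

noncomputable def overlap (S I : Finset V) (m : V) : Finset V :=
  if m ∈ I then I.erase m ∩ newMins S m else ∅

theorem deletionSum_eq_sum_mins {S : Finset V} (I : Finset V) (hS : S.Nontrivial) :
    deletionSum S I = ∑ m ∈ mins S,
      (deletionSum (S.erase m) (advance S I m) + deletionSum (S.erase m) (overlap S I m)) := by
  have hexpand (v : V) : #(linExts (S.erase v)) =
      ∑ m ∈ (mins S).erase v, #(linExts ((S.erase m).erase v)) +
        deletionSum (S.erase v) (newMins S v) := by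
    rw [card_linExts_eq_sum_mins hS.erase_nonempty, ← sum_inter_add_sum_sdiff _ (mins S),
      mins_erase_inter_mins, deletionSum, newMins]
    simp_rw [erase_right_comm]
  have hsplit : ∀ m ∈ mins S, deletionSum (S.erase m) (advance S I m) +
      deletionSum (S.erase m) (overlap S I m) = deletionSum (S.erase m) (I.erase m) +
        if m ∈ I then deletionSum (S.erase m) (newMins S m) else 0 := by
    intro m _
    by_cases hm : m ∈ I
    · simp only [advance, overlap, hm, if_true, deletionSum]
      exact sum_union_inter
    · simp [advance, overlap, hm, deletionSum, erase_eq_of_notMem]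
  have hvanish : ∀ v ∈ I, v ∉ mins S ∩ I → deletionSum (S.erase v) (newMins S v) = 0 := by
    intro v hv hvm
    rw [deletionSum_eq_zero_iff, eq_empty_iff_forall_notMem]
    exact fun y hy => hvm (mem_inter.2 ⟨mem_mins_of_mem_newMins hy, hv⟩)
  rw [sum_congr rfl hsplit, sum_add_distrib, sum_ite_mem, sum_subset inter_subset_right hvanish,
    deletionSum, sum_congr rfl fun v _ => hexpand v, sum_add_distrib]
  congr 1
  exact sum_comm' fun v m => by simp only [mem_erase]; tauto

section Advance

variable {S I : Finset V} {m : V}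

theorem erase_subset_advance : I.erase m ⊆ advance S I m := by
  unfold advance
  split_ifs with hm
  · exact subset_union_left
  · rw [erase_eq_of_notMem hm]

theorem advance_subset_union : advance S I m ⊆ I ∪ newMins S m := by
  unfold advance
  split_ifs
  · exact union_subset_union (erase_subset _ _) subset_rfl
  · exact subset_union_left

theorem advance_subset (hIS : I ⊆ S) : advance S I m ⊆ S.erase m := by
  unfold advance
  split_ifs with hm
  · refine union_subset (erase_subset_erase _ hIS) fun y hy => ?_
    exact (mem_mins.1 (mem_sdiff.1 hy).1).prop
  · exact fun x hx => mem_erase.2 ⟨fun hxm => hm (hxm ▸ hx), hIS hx⟩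

theorem advance_of_notMem (hm : m ∉ I) : advance S I m = I := if_neg hm

theorem IsAntichain.overlap_eq_empty (hI : IsAntichain (· ≤ ·) (I : Set V)) :
    overlap S I m = ∅ := by
  unfold overlap
  split_ifs with hm
  · refine eq_empty_of_forall_notMem fun y hy => ?_
    obtain ⟨hyI, hyN⟩ := mem_inter.1 hy
    have hmy := lt_of_mem_newMins hyN
    exact hI hm (mem_erase.1 hyI).2 hmy.ne hmy.le
  · rfl

theorem isAntichain_advance (hI : IsAntichain (· ≤ ·) (I : Set V)) (hIS : I ⊆ S) :
    IsAntichain (· ≤ ·) (advance S I m : Set V) := by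
  unfold advance
  split_ifs with hm
  · rw [coe_union, isAntichain_union]
    refine ⟨hI.subset (coe_subset.2 (erase_subset _ _)),
      (setOfPred_minimal_antichain (· ∈ S.erase m)).subset
        fun y hy => mem_mins.1 (mem_sdiff.1 hy).1,
      fun a ha b hb hab => ⟨fun hle => ?_, fun hle => ?_⟩⟩
    · exact (mem_erase.1 ha).1
        (eq_of_lt_of_mem_newMins hb (hIS (mem_of_mem_erase ha)) (lt_of_le_of_ne hle hab))
    · exact hI hm (mem_of_mem_erase ha) (mem_erase.1 ha).1.symm
        ((lt_of_mem_newMins hb).le.trans hle)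
  · exact hI

theorem isCutsetIn_advance (hI : IsCutsetIn S I) (hm : m ∈ mins S) (hS : (S.erase m).Nonempty) :
    IsCutsetIn (S.erase m) (advance S I m) := by
  intro C hC
  obtain ⟨D, hD, hCD, hDC⟩ := hC.exists_lift
  obtain ⟨a, haI, haD⟩ := hI D hD
  rcases hDC haD with rfl | haC
  · obtain ⟨c, hcC, hc⟩ := hC.exists_mem_mins hS
    have hca : c ≠ a := (mem_erase.1 (hC.subset hcC)).1
    refine ⟨c, ?_, hcC⟩
    rw [advance, if_pos haI]
    refine mem_union_right _ (mem_sdiff.2 ⟨hc, fun hcm => hca ?_⟩)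
    rcases hD.isChain.total (hCD hcC) haD with hle | hle
    · exact (mem_mins.1 hm).eq_of_le (mem_mins.1 hcm).prop hle
    · exact ((mem_mins.1 hcm).eq_of_le (mem_mins.1 hm).prop hle).symm
  · have ham : a ≠ m := (mem_erase.1 (hC.subset haC)).1
    exact ⟨a, erase_subset_advance (mem_erase.2 ⟨ham, haI⟩), haC⟩

theorem isCutsetIn_of_advance (hS : S.Nonempty)
    (h : ∀ m ∈ mins S, IsCutsetIn (S.erase m) (advance S I m)) : IsCutsetIn S I := by
  intro C hC
  by_contra hCI
  push Not at hCI
  obtain ⟨c, hcC, hc⟩ := hC.exists_mem_mins hS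
  rw [mem_mins] at hc
  by_cases hall : ∃ m ∈ mins S, m ∉ C
  · obtain ⟨m, hm, hmC⟩ := hall
    obtain ⟨w, hw, hwC⟩ := h m hm C (hC.erase hmC)
    rcases mem_union.1 (advance_subset_union hw) with hwI | hwN
    · exact hCI w hwI hwC
    obtain ⟨hwm, hwM⟩ := mem_sdiff.1 hwN
    rw [mem_mins] at hwm hwM
    have hcm : c ∈ S.erase m := mem_erase.2 ⟨fun hcm => hmC (hcm ▸ hcC), hc.prop⟩
    rcases hC.isChain.total hcC hwC with hle | hle
    · exact hwM (hwm.eq_of_le hcm hle ▸ hc)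
    · exact hwM (hc.eq_of_le (mem_of_mem_erase hwm.prop) hle ▸ hc)
  · push Not at hall
    have hle : ∀ x ∈ S, c ≤ x := fun x hx => by
      obtain ⟨m, hmx, hm⟩ := S.exists_le_minimal hx
      rcases hC.isChain.total hcC (hall m (mem_mins.2 hm)) with hcm | hmc
      · exact hcm.trans hmx
      · exact (hc.eq_of_le hm.prop hmc).symm ▸ hmx
    have hcI : c ∉ I := fun hcI => hCI c hcI hcC
    obtain ⟨v, hv, hvC⟩ := h c (mem_mins.2 hc) (C \ {c}) (hC.sdiff_singleton hcC hle)
    rw [advance_of_notMem hcI] at hv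
    exact hCI v hv hvC.1

theorem isAntichain_of_advance (hIS : I ⊆ S)
    (h : ∀ m ∈ mins S, IsAntichain (· ≤ ·) (advance S I m : Set V) ∧ overlap S I m = ∅) :
    IsAntichain (· ≤ ·) (I : Set V) := by
  intro a (ha : a ∈ I) b (hb : b ∈ I) hab hle
  by_cases hm : ∃ m ∈ mins S, m ≠ a ∧ m ≠ b
  · obtain ⟨m, hm, hma, hmb⟩ := hm
    exact (h m hm).1 (erase_subset_advance (mem_erase.2 ⟨hma.symm, ha⟩))
      (erase_subset_advance (mem_erase.2 ⟨hmb.symm, hb⟩)) hab hle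
  -- Now `a` is the least element of `S`, and a minimal `y ≤ b` of `S \ {a}` lies in `newMins S a`:
  -- `y = b` contradicts `overlap S I a = ∅`, and `y < b` the antichain `advance S I a`.
  push Not at hm
  have hmins : ∀ m ∈ mins S, m = a := fun m hm' => by
    by_contra hma
    exact (mem_mins.1 hm').not_lt (hIS ha) (hm m hm' hma ▸ lt_of_le_of_ne hle hab)
  have haM : a ∈ mins S := by
    obtain ⟨m, hm'⟩ := mins_nonempty ⟨a, hIS ha⟩
    exact hmins m hm' ▸ hm'
  obtain ⟨y, hyb, hy⟩ := (S.erase a).exists_le_minimal (mem_erase.2 ⟨Ne.symm hab, hIS hb⟩)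
  have hyN : y ∈ newMins S a :=
    mem_sdiff.2 ⟨mem_mins.2 hy, fun hyM => (mem_erase.1 hy.prop).1 (hmins y hyM)⟩
  obtain ⟨hadv, hov⟩ := h a haM
  rw [advance, if_pos ha] at hadv
  rw [overlap, if_pos ha] at hov
  rcases hyb.eq_or_lt with rfl | hyb
  · exact notMem_empty y (hov ▸ mem_inter.2 ⟨mem_erase.2 ⟨Ne.symm hab, hb⟩, hyN⟩)
  · exact hadv (mem_union_right _ hyN) (mem_union_left _ (mem_erase.2 ⟨Ne.symm hab, hb⟩))
      hyb.ne hyb.le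

end Advance

theorem deletionSum_eq_sum_mins_of_isAntichain {S I : Finset V}
    (hI : IsAntichain (· ≤ ·) (I : Set V)) (hS : S.Nontrivial) :
    deletionSum S I = ∑ m ∈ mins S, deletionSum (S.erase m) (advance S I m) := by
  rw [deletionSum_eq_sum_mins I hS]
  refine sum_congr rfl fun m _ => ?_
  rw [hI.overlap_eq_empty, deletionSum_eq_zero_iff.2 rfl, add_zero]

theorem deletionSum_le_of_isAntichain {S I : Finset V} (hIS : I ⊆ S)
    (hI : IsAntichain (· ≤ ·) (I : Set V)) : deletionSum S I ≤ #(linExts S) := by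
  induction S using Finset.strongInduction generalizing I with
  | _ S ih =>
  rcases le_or_gt #S 1 with hS | hS
  · rw [deletionSum_of_card_le_one I hS, card_linExts_of_card_le_one hS]
    exact (card_le_card hIS).trans hS
  replace hS := one_lt_card_iff_nontrivial.1 hS
  rw [deletionSum_eq_sum_mins_of_isAntichain hI hS, card_linExts_eq_sum_mins hS.nonempty]
  exact sum_le_sum fun m hm =>
    ih _ (erase_ssubset (mem_mins.1 hm).prop) (advance_subset hIS) (isAntichain_advance hI hIS)

theorem isCutsetIn_of_deletionSum_eq {S I : Finset V} (hIS : I ⊆ S)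
    (hI : IsAntichain (· ≤ ·) (I : Set V)) (heq : deletionSum S I = #(linExts S)) :
    IsCutsetIn S I := by
  induction S using Finset.strongInduction generalizing I with
  | _ S ih =>
  rcases le_or_gt #S 1 with hS | hS
  · rw [deletionSum_of_card_le_one I hS, card_linExts_of_card_le_one hS] at heq
    obtain rfl := eq_of_subset_of_card_le hIS (hS.trans heq.ge)
    exact isCutsetIn_self (card_pos.1 (by omega))
  replace hS := one_lt_card_iff_nontrivial.1 hS
  rw [deletionSum_eq_sum_mins_of_isAntichain hI hS, card_linExts_eq_sum_mins hS.nonempty] at heq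
  have hpt := (sum_eq_sum_iff_of_le fun m _ => deletionSum_le_of_isAntichain
    (advance_subset hIS) (isAntichain_advance hI hIS)).1 heq
  exact isCutsetIn_of_advance hS.nonempty fun m hm => ih _ (erase_ssubset (mem_mins.1 hm).prop)
    (advance_subset hIS) (isAntichain_advance hI hIS) (hpt m hm)

theorem card_linExts_le_of_isCutsetIn {S I : Finset V} (hIS : I ⊆ S) (hI : IsCutsetIn S I) :
    #(linExts S) ≤ deletionSum S I := by
  induction S using Finset.strongInduction generalizing I with
  | _ S ih =>
  rcases le_or_gt #S 1 with hS | hS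
  · rw [deletionSum_of_card_le_one I hS, card_linExts_of_card_le_one hS]
    exact hI.nonempty.card_pos
  replace hS := one_lt_card_iff_nontrivial.1 hS
  rw [deletionSum_eq_sum_mins I hS, card_linExts_eq_sum_mins hS.nonempty]
  exact sum_le_sum fun m hm => le_add_right <| ih _ (erase_ssubset (mem_mins.1 hm).prop)
    (advance_subset hIS) (isCutsetIn_advance hI hm hS.erase_nonempty)

theorem isAntichain_of_deletionSum_eq {S I : Finset V} (hIS : I ⊆ S) (hI : IsCutsetIn S I)
    (heq : deletionSum S I = #(linExts S)) : IsAntichain (· ≤ ·) (I : Set V) := by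
  induction S using Finset.strongInduction generalizing I with
  | _ S ih =>
  rcases le_or_gt #S 1 with hS | hS
  · rw [deletionSum_of_card_le_one I hS, card_linExts_of_card_le_one hS] at heq
    exact Set.Subsingleton.isAntichain (fun a ha b hb => card_le_one.1 heq.le a ha b hb) _
  replace hS := one_lt_card_iff_nontrivial.1 hS
  rw [deletionSum_eq_sum_mins I hS, card_linExts_eq_sum_mins hS.nonempty] at heq
  have hcut m (hm : m ∈ mins S) := isCutsetIn_advance hI hm hS.erase_nonempty
  have hle m (hm : m ∈ mins S) := card_linExts_le_of_isCutsetIn (advance_subset hIS) (hcut m hm)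
  have hpt := (sum_eq_sum_iff_of_le fun m hm => (hle m hm).trans (le_add_right le_rfl)).1 heq.symm
  refine isAntichain_of_advance hIS fun m hm => ?_
  have hsplit := hpt m hm
  have hbound := hle m hm
  exact ⟨ih _ (erase_ssubset (mem_mins.1 hm).prop) (advance_subset hIS) (hcut m hm) (by omega),
    (deletionSum_eq_zero_iff (S := S.erase m)).1 (by omega)⟩

section LinearExtensionsOfFintype

theorem List.Nodup.exists_equiv_ofFn_eq {α : Type*} [Fintype α] [DecidableEq α] {l : List α}
    (hnd : l.Nodup) (hmem : ∀ x, x ∈ l) : ∃ e : Fin (Fintype.card α) ≃ α, List.ofFn e = l := by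
  let e₀ := hnd.getEquivOfForallMemList l hmem
  have hlen : Fintype.card α = l.length := by simpa using Fintype.card_congr e₀.symm
  exact ⟨(finCongr hlen).trans e₀, List.ext_get (by simp [hlen]) fun i _ _ => by simp [e₀]⟩

variable [Fintype V]

theorem ofFn_mem_linExts_univ_iff {n : ℕ} (e : Fin n ≃ V) :
    List.ofFn e ∈ linExts univ ↔ ∀ a b : V, a < b → e.symm a < e.symm b := by
  have hset : (List.ofFn e).toFinset = univ :=
    eq_univ_of_forall fun x =>
      List.mem_toFinset.2 (List.mem_ofFn.2 ⟨e.symm x, e.apply_symm_apply x⟩)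
  rw [mem_linExts, List.pairwise_ofFn]
  simp only [List.nodup_ofFn.2 e.injective, hset, true_and]
  constructor
  · intro h a b hab
    by_contra hba
    have hne : e.symm b ≠ e.symm a := fun h' => hab.ne (e.symm.injective h').symm
    exact h (lt_of_le_of_ne (not_lt.1 hba) hne) (by simpa using hab)
  · intro h i j hij hji
    exact hij.not_gt (by simpa using h _ _ hji)

theorem eCount_eq_card_linExts : eCount V ‹_› = #(linExts (univ : Finset V)) := by
  rw [eCount, ← Nat.card_eq_finsetCard]
  refine Nat.card_eq_of_bijective
    (fun f => ⟨List.ofFn f.1.symm, (ofFn_mem_linExts_univ_iff _).2 f.2⟩) ⟨?_, ?_⟩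
  · intro f g hfg
    exact Subtype.ext (Equiv.symm_bijective.injective (Equiv.coe_fn_injective
      (List.ofFn_injective (congrArg Subtype.val hfg))))
  · rintro ⟨l, hl⟩
    obtain ⟨hnd, hset, -⟩ := mem_linExts.1 hl
    obtain ⟨e, rfl⟩ := hnd.exists_equiv_ofFn_eq fun x => List.mem_toFinset.1 (hset ▸ mem_univ x)
    exact ⟨⟨e.symm, by simpa using (ofFn_mem_linExts_univ_iff e).1 hl⟩, rfl⟩

theorem card_linExts_univ_subtype_ne (v : V) :
    #(linExts (univ : Finset {x : V // x ≠ v})) = #(linExts (univ.erase v)) := by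
  have hmem (l : List {x : V // x ≠ v}) :
      l ∈ linExts univ ↔ l.map Subtype.val ∈ linExts (univ.erase v) := by
    simp only [mem_linExts, List.nodup_map_iff Subtype.val_injective, List.pairwise_map,
      Finset.ext_iff, List.mem_toFinset, mem_univ, List.mem_map, mem_erase, and_true, iff_true,
      Subtype.exists, exists_and_right, exists_eq_right, Subtype.forall]
    refine and_congr_right fun _ => and_congr_left fun _ =>
      ⟨fun h a => ⟨fun ⟨ha, _⟩ => ha, fun ha => ⟨ha, h a ha⟩⟩, fun h a ha => ?_⟩
    obtain ⟨_, hmem⟩ := (h a).2 ha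
    exact hmem
  refine card_bij (fun l _ => l.map Subtype.val) (fun l hl => (hmem l).1 hl)
    (fun l _ l' _ h => List.map_injective_iff.2 Subtype.val_injective h) fun l hl => ?_
  lift l to List {x : V // x ≠ v} using fun x hx => by
    have hx' := List.mem_toFinset.2 hx
    rw [(mem_linExts.1 hl).2.1] at hx'
    exact (mem_erase.1 hx').1
  exact ⟨l, (hmem l).2 hl, rfl⟩

end LinearExtensionsOfFintype

end

theorem stmt_10 {V : Type*} [Fintype V] [DecidableEq V] (P : PartialOrder V)
    (I : Finset V) (hI : IsAntichain P.le ↑I ∨ IsCutset P I) :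
    eCount V P = ∑ v ∈ I, eCount {x : V // x ≠ v} (delOrder P v) ↔
      IsAntichain P.le ↑I ∧ IsCutset P I := by
  let _ : PartialOrder V := P
  have hsum : ∑ v ∈ I, eCount {x : V // x ≠ v} (delOrder P v) = deletionSum univ I :=
    sum_congr rfl fun v _ => eCount_eq_card_linExts.trans (card_linExts_univ_subtype_ne v)
  rw [isCutset_iff_isCutsetIn_univ] at hI
  rw [eCount_eq_card_linExts, hsum, isCutset_iff_isCutsetIn_univ]
  have hIS := subset_univ I
  constructor
  · intro heq
    rcases hI with hA | hC
    · exact ⟨hA, isCutsetIn_of_deletionSum_eq hIS hA heq.symm⟩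
    · exact ⟨isAntichain_of_deletionSum_eq hIS hC heq.symm, hC⟩
  · rintro ⟨hA, hC⟩
    exact le_antisymm (card_linExts_le_of_isCutsetIn hIS hC) (deletionSum_le_of_isAntichain hIS hA)
end

section
/- Let G = (V,E) be a connected comparability graph. Among all acyclic orientations of E, the ones maximizing the number of linear extensions of the induced poset are exactly the transitive orientations of G (those orientations whose induced poset has comparability graph equal to G). -/
/-- `O` is a transitive orientation of `G`: the comparability graph of the poset induced
by `O` (via reachability) is exactly `G`. -/
def GraphOrientation.IsTransitive {V : Type*} {G : SimpleGraph V}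
    (O : GraphOrientation G) : Prop :=
  ∀ u v, (Relation.TransGen O.dir u v ∨ Relation.TransGen O.dir v u) ↔ G.Adj u v

/-!
Stanley's transfer map `f ↦ (v ↦ f v - max_{u < v} f u)` is a bijection between the integer
points of the `N`-th dilates of the order polytope and of the chain polytope of a finite poset
`P` with `n` elements. The number of integer points of `N` times the order polytope lies between
`e(P) · C(N + 1, n)` and `e(P) · C(N + n, n)`, so `e(P) = lim n! · #points / N ^ n`. The chain
polytope only depends on the chains of `P`, i.e. on the cliques of its comparability graph, and
it shrinks when comparabilities are added.

The poset of an acyclic orientation of `G` has a comparability graph containing `G`, with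
equality exactly for the transitive orientations. Hence all transitive orientations have the
same, maximal, number of linear extensions. If an acyclic orientation makes a non-edge `ab`
comparable, then the `N`-th chain polytope of a transitive orientation has about
`(N / (2n + 1)) ^ n` more integer points than that of the orientation, namely points that are
large at both `a` and `b`, so the orientation has strictly fewer linear extensions.
-/

open Finset Filter Topology Asymptotics Relation
open scoped Nat

namespace PosetPolytope

section Chains

variable {V : Type*} (r : V → V → Prop)

def IsChainWithTop (v : V) (s : Finset V) : Prop :=
  IsChain r (s : Set V) ∧ v ∈ s ∧ ∀ u ∈ s, u ≠ v → r u v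

variable {r}

theorem isChainWithTop_singleton (v : V) : IsChainWithTop r v {v} :=
  ⟨by simp, mem_singleton_self v, by simp⟩

theorem IsChainWithTop.insert [DecidableEq V] [IsStrictOrder V r] {u v : V} {s : Finset V}
    (hs : IsChainWithTop r u s) (huv : r u v) : v ∉ s ∧ IsChainWithTop r v (insert v s) := by
  have below : ∀ w ∈ s, r w v := fun w hw =>
    (eq_or_ne w u).elim (fun h => h ▸ huv) fun h => trans_of r (hs.2.2 w hw h) huv
  refine ⟨fun hv => irrefl_of r v (below v hv), ?_, mem_insert_self v s, ?_⟩
  · rw [coe_insert]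
    exact hs.1.insert fun w hw _ => Or.inr (below w hw)
  · exact fun w hw hwv => below w ((mem_insert.1 hw).resolve_left hwv)

theorem exists_top_of_isChain [Finite V] [IsStrictOrder V r] {s : Finset V}
    (hs : IsChain r (s : Set V)) (hne : s.Nonempty) : ∃ t ∈ s, ∀ u ∈ s, u ≠ t → r u t := by
  obtain ⟨t, ht, hmax⟩ :=
    (Finite.wellFounded_of_trans_of_irrefl (Function.swap r)).has_min (s : Set V) hne
  exact ⟨t, ht, fun u hu hut => (hs hu ht hut).resolve_right (hmax u hu)⟩

theorem IsChainWithTop.erase [DecidableEq V] [Finite V] [IsStrictOrder V r] {v : V} {s : Finset V}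
    (hs : IsChainWithTop r v s) (hne : (s.erase v).Nonempty) :
    ∃ u, r u v ∧ IsChainWithTop r u (s.erase v) := by
  have hchain : IsChain r (s.erase v : Set V) := hs.1.mono (coe_subset.2 (erase_subset v s))
  obtain ⟨u, hu, hutop⟩ := exists_top_of_isChain hchain hne
  exact ⟨u, hs.2.2 u (mem_of_mem_erase hu) (ne_of_mem_erase hu), hchain, hu, hutop⟩

theorem isChain_of_comparable {r' : V → V → Prop} (hcomp : ∀ u v, r' u v → r u v ∨ r v u)
    {s : Set V} (hs : IsChain r' s) : IsChain r s :=
  fun x hx y hy hxy => (hs hx hy hxy).elim (hcomp x y) fun h => (hcomp y x h).symm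

theorem card_inter_pair_le_one_of_isChain [DecidableEq V] {s : Finset V}
    (hs : IsChain r (s : Set V)) {a b : V} (ha : ¬ r a b) (hb : ¬ r b a) : #(s ∩ {a, b}) ≤ 1 := by
  refine card_le_one.2 fun x hx y hy => by_contra fun hxy => ?_
  simp only [mem_inter, mem_insert, mem_singleton] at hx hy
  obtain ⟨hx, rfl | rfl⟩ := hx <;> obtain ⟨hy, rfl | rfl⟩ := hy
  exacts [hxy rfl, (hs hx hy hxy).elim ha hb, (hs hx hy hxy).elim hb ha, hxy rfl]

end Chains

variable {V : Type*}

noncomputable def linExtCount [Fintype V] (r : V → V → Prop) : ℕ :=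
  Nat.card {ℓ : V ≃ Fin (Fintype.card V) // ∀ u v, r u v → ℓ u < ℓ v}

/- The integer points of the `N`-th dilates of Stanley's order polytope and chain polytope of
the strict order `r`. -/

def OrderPolytopePoints (r : V → V → Prop) (N : ℕ) : Type _ :=
  {f : V → ℕ // (∀ v, f v ≤ N) ∧ ∀ u v, r u v → f u ≤ f v}

def ChainPolytopePoints (r : V → V → Prop) (N : ℕ) : Type _ :=
  {g : V → ℕ // ∀ s : Finset V, IsChain r (s : Set V) → ∑ v ∈ s, g v ≤ N}

instance [Finite V] (r : V → V → Prop) (N : ℕ) : Finite (OrderPolytopePoints r N) :=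
  Finite.of_injective (β := V → Fin (N + 1)) (fun f v => ⟨f.1 v, Nat.lt_succ_of_le (f.2.1 v)⟩)
    fun _ _ h => Subtype.ext <| funext fun v => congrArg Fin.val (congrFun h v)

instance [Finite V] (r : V → V → Prop) (N : ℕ) : Finite (ChainPolytopePoints r N) :=
  Finite.of_injective (β := V → Fin (N + 1))
    (fun g v => ⟨g.1 v, Nat.lt_succ_of_le (by simpa using g.2 {v} (by simp))⟩)
    fun _ _ h => Subtype.ext <| funext fun v => congrArg Fin.val (congrFun h v)

section Transfer

open scoped Classical

variable [Fintype V] (r : V → V → Prop)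

noncomputable def predSup (f : V → ℕ) (v : V) : ℕ := (univ.filter (r · v)).sup f

noncomputable def transfer (f : V → ℕ) (v : V) : ℕ := f v - predSup r f v

noncomputable def maxChainSum (g : V → ℕ) (v : V) : ℕ :=
  (univ.filter (IsChainWithTop r v)).sup fun s => ∑ u ∈ s, g u

variable {r}

theorem le_predSup {f : V → ℕ} {u v : V} (h : r u v) : f u ≤ predSup r f v :=
  le_sup (by simpa using h)

theorem predSup_le {f : V → ℕ} (hf : ∀ u v, r u v → f u ≤ f v) (v : V) : predSup r f v ≤ f v :=
  Finset.sup_le fun u hu => hf u v (by simpa using hu)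

theorem sum_le_maxChainSum {g : V → ℕ} {v : V} {s : Finset V} (hs : IsChainWithTop r v s) :
    ∑ u ∈ s, g u ≤ maxChainSum r g v :=
  le_sup (f := fun s => ∑ u ∈ s, g u) (by simpa using hs)

theorem maxChainSum_le {g : V → ℕ} {N : ℕ}
    (hg : ∀ s : Finset V, IsChain r (s : Set V) → ∑ v ∈ s, g v ≤ N) (v : V) :
    maxChainSum r g v ≤ N :=
  Finset.sup_le fun s hs => hg s (by simp only [mem_filter] at hs; exact hs.2.1)

variable [IsStrictOrder V r]

theorem maxChainSum_mono {g : V → ℕ} {u v : V} (huv : r u v) :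
    maxChainSum r g u ≤ maxChainSum r g v :=
  Finset.sup_le fun s hs => by
    have hs' := ((by simpa using hs : IsChainWithTop r u s).insert huv).2
    exact (sum_le_sum_of_subset (subset_insert v s)).trans (sum_le_maxChainSum hs')

theorem maxChainSum_eq (g : V → ℕ) (v : V) :
    maxChainSum r g v = g v + predSup r (maxChainSum r g) v := by
  apply le_antisymm
  · refine Finset.sup_le fun s hs => ?_
    have hs : IsChainWithTop r v s := by simpa using hs
    rw [← add_sum_erase s g hs.2.1]
    rcases (s.erase v).eq_empty_or_nonempty with he | hne
    · simp [he]
    · obtain ⟨u, huv, hu⟩ := hs.erase hne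
      exact Nat.add_le_add_left ((sum_le_maxChainSum hu).trans (le_predSup huv)) _
  · have hgv : g v ≤ maxChainSum r g v := by
      simpa using sum_le_maxChainSum (g := g) (isChainWithTop_singleton (r := r) v)
    -- every chain with top `u < v` extends by `v`
    suffices predSup r (maxChainSum r g) v ≤ maxChainSum r g v - g v by omega
    refine Finset.sup_le fun u hu => Finset.sup_le fun s hs => ?_
    obtain ⟨hvs, hs'⟩ := (by simpa using hs : IsChainWithTop r u s).insert (by simpa using hu)
    have := sum_le_maxChainSum (g := g) hs'
    rw [sum_insert hvs] at this
    omega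

theorem sum_transfer_le {f : V → ℕ} (hf : ∀ u v, r u v → f u ≤ f v) {t : V} {s : Finset V}
    (hs : IsChainWithTop r t s) : ∑ v ∈ s, transfer r f v ≤ f t := by
  induction s using Finset.strongInduction generalizing t with
  | H s ih =>
    rw [← add_sum_erase s (transfer r f) hs.2.1]
    rcases (s.erase t).eq_empty_or_nonempty with he | hne
    · simp [he, transfer]
    · obtain ⟨u, hut, hu⟩ := hs.erase hne
      have hsum := ih (s.erase t) (erase_ssubset hs.2.1) hu
      have hu_le := le_predSup (f := f) hut
      have hpred := predSup_le hf t
      simp only [transfer] at hsum ⊢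
      omega

theorem transfer_maxChainSum (g : V → ℕ) : transfer r (maxChainSum r g) = g := by
  funext v
  rw [transfer, maxChainSum_eq g v, Nat.add_sub_cancel]

theorem maxChainSum_transfer {f : V → ℕ} (hf : ∀ u v, r u v → f u ≤ f v) :
    maxChainSum r (transfer r f) = f := by
  funext v
  induction v using (Finite.wellFounded_of_trans_of_irrefl r).induction with
  | _ v ih =>
    have hpred : predSup r (maxChainSum r (transfer r f)) v = predSup r f v :=
      sup_congr rfl fun u hu => ih u (by simpa using hu)
    rw [maxChainSum_eq, hpred, transfer, Nat.sub_add_cancel (predSup_le hf v)]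

variable (r) in
noncomputable def orderPolytopePointsEquiv (N : ℕ) :
    OrderPolytopePoints r N ≃ ChainPolytopePoints r N where
  toFun f := ⟨transfer r f.1, fun s hs => by
    rcases s.eq_empty_or_nonempty with rfl | hne
    · simp
    · obtain ⟨t, ht, htop⟩ := exists_top_of_isChain hs hne
      exact (sum_transfer_le f.2.2 ⟨hs, ht, htop⟩).trans (f.2.1 t)⟩
  invFun g := ⟨maxChainSum r g.1, maxChainSum_le g.2, fun _ _ h => maxChainSum_mono h⟩
  left_inv f := Subtype.ext (maxChainSum_transfer f.2.2)
  right_inv g := Subtype.ext (transfer_maxChainSum g.1)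

end Transfer

theorem card_orderEmbedding_fin (n m : ℕ) : Nat.card (Fin n ↪o Fin m) = m.choose n := by
  rw [Nat.card_congr Set.powersetCard.ofFinEmbEquiv, Set.powersetCard.card, Nat.card_fin]

theorem tendsto_choose_add_div (c n : ℕ) :
    Tendsto (fun N : ℕ => ((N + c).choose n : ℝ) / ((N : ℝ) ^ n / n !)) atTop (𝓝 1) := by
  have hshift : (fun N : ℕ => ((N + c : ℕ) : ℝ)) ~[atTop] fun N => (N : ℝ) :=
    (isEquivalent_of_tendsto_one (by
      simpa only [Pi.div_def, Nat.cast_add] using tendsto_natCast_div_add_atTop (c : ℝ))).symm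
  have hequiv : (fun N : ℕ => ((N + c).choose n : ℝ)) ~[atTop] fun N => (N : ℝ) ^ n / n ! :=
    ((isEquivalent_choose n).comp_tendsto (tendsto_add_atTop_nat c)).trans
      ((hshift.pow n).div IsEquivalent.refl)
  refine (isEquivalent_iff_tendsto_one ?_).1 hequiv
  filter_upwards [eventually_ge_atTop 1] with N hN
  have : (0 : ℝ) < N := by exact_mod_cast hN
  positivity

section Counting

variable [Fintype V] (r : V → V → Prop)

theorem exists_linExt [IsStrictOrder V r] :
    ∃ ℓ : V ≃ Fin (Fintype.card V), ∀ u v, r u v → ℓ u < ℓ v := by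
  let := partialOrderOfSO r
  let : Fintype (LinearExtension V) := ‹Fintype V›
  let e := monoEquivOfFin (LinearExtension V) (k := Fintype.card V) rfl
  have hmono : StrictMono (toLinearExtension : V → LinearExtension V) :=
    toLinearExtension.monotone.strictMono_of_injective fun _ _ h => h
  exact ⟨(Equiv.refl V).trans e.symm.toEquiv, fun u v h => e.symm.strictMono (hmono h)⟩

variable {r}

theorem exists_linExt_monotone [IsStrictOrder V r] {f : V → ℕ}
    (hf : ∀ u v, r u v → f u ≤ f v) : ∃ ℓ : V ≃ Fin (Fintype.card V),
      (∀ u v, r u v → ℓ u < ℓ v) ∧ ∀ u v, ℓ u < ℓ v → f u ≤ f v := by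
  -- a linear extension of the lexicographic order by `f`, then by `r`
  let lex : V → V → Prop := fun u v => f u < f v ∨ (f u = f v ∧ r u v)
  have : IsStrictOrder V lex :=
    { irrefl := fun v h => h.elim (lt_irrefl _) fun h => irrefl_of r v h.2
      trans := by
        rintro u v w (h₁ | ⟨h₁, h₁'⟩) (h₂ | ⟨h₂, h₂'⟩)
        · exact Or.inl (h₁.trans h₂)
        · exact Or.inl (h₂ ▸ h₁)
        · exact Or.inl (h₁ ▸ h₂)
        · exact Or.inr ⟨h₁.trans h₂, trans_of r h₁' h₂'⟩ }
  obtain ⟨ℓ, hℓ⟩ := exists_linExt lex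
  refine ⟨ℓ, fun u v h => hℓ u v ?_, fun u v h => not_lt.1 fun hvu => (hℓ v u (Or.inl hvu)).asymm h⟩
  exact (hf u v h).lt_or_eq.imp_right fun e => ⟨e, h⟩

theorem linExtCount_mul_choose_le_card (N : ℕ) :
    linExtCount r * (N + 1).choose (Fintype.card V) ≤ Nat.card (OrderPolytopePoints r N) := by
  set n := Fintype.card V
  let F : {ℓ : V ≃ Fin n // ∀ u v, r u v → ℓ u < ℓ v} × (Fin n ↪o Fin (N + 1)) →
      OrderPolytopePoints r N := fun p =>
    ⟨fun v => p.2 (p.1.1 v), fun v => Nat.lt_succ_iff.1 (p.2 _).isLt,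
      fun u v h => (p.2.lt_iff_lt.2 (p.1.2 u v h)).le⟩
  have hF : Function.Injective F := by
    rintro ⟨ℓ, e⟩ ⟨ℓ', e'⟩ h
    have hcomp : e ∘ ℓ.1 = e' ∘ ℓ'.1 :=
      funext fun v => Fin.val_injective (congrFun (congrArg Subtype.val h) v)
    have he : e = e' := DFunLike.coe_injective <| (e.strictMono.range_inj e'.strictMono).1 <| by
      rw [← ℓ.1.surjective.range_comp, hcomp, ℓ'.1.surjective.range_comp]
    subst he
    have hℓ : ℓ = ℓ' := Subtype.ext <| Equiv.ext fun v => e.injective (congrFun hcomp v)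
    rw [hℓ]
  calc linExtCount r * (N + 1).choose n
      = Nat.card ({ℓ : V ≃ Fin n // ∀ u v, r u v → ℓ u < ℓ v} × (Fin n ↪o Fin (N + 1))) := by
        rw [Nat.card_prod, card_orderEmbedding_fin]; rfl
    _ ≤ _ := Nat.card_le_card_of_injective F hF

theorem card_le_linExtCount_mul_choose [IsStrictOrder V r] (N : ℕ) :
    Nat.card (OrderPolytopePoints r N) ≤
      linExtCount r * (N + Fintype.card V).choose (Fintype.card V) := by
  set n := Fintype.card V
  choose ℓ hℓ hsort using fun f : OrderPolytopePoints r N => exists_linExt_monotone f.2.2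
  -- the sorted values of `f`, spread out by adding their positions
  let w : OrderPolytopePoints r N → Fin n ↪o Fin (N + n) := fun f =>
    OrderEmbedding.ofStrictMono
      (fun i => ⟨f.1 ((ℓ f).symm i) + i, by have := f.2.1 ((ℓ f).symm i); omega⟩)
      fun i j hij => Fin.mk_lt_mk.2 <|
        Nat.add_lt_add_of_le_of_lt (hsort f _ _ (by simpa using hij)) hij
  let F : OrderPolytopePoints r N →
      {ℓ : V ≃ Fin n // ∀ u v, r u v → ℓ u < ℓ v} × (Fin n ↪o Fin (N + n)) :=
    fun f => (⟨ℓ f, hℓ f⟩, w f)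
  have hF : Function.Injective F := by
    intro f g h
    have hℓ' : ℓ f = ℓ g := congrArg (fun p => p.1.1) h
    refine Subtype.ext <| funext fun v => ?_
    have := congrArg (fun e : Fin n ↪o Fin (N + n) => (e (ℓ g v) : ℕ)) (congrArg Prod.snd h)
    change f.1 ((ℓ f).symm (ℓ g v)) + ℓ g v = g.1 ((ℓ g).symm (ℓ g v)) + ℓ g v at this
    rw [hℓ', Equiv.symm_apply_apply] at this
    omega
  calc Nat.card (OrderPolytopePoints r N)
      ≤ Nat.card ({ℓ : V ≃ Fin n // ∀ u v, r u v → ℓ u < ℓ v} × (Fin n ↪o Fin (N + n))) :=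
        Nat.card_le_card_of_injective F hF
    _ = _ := by rw [Nat.card_prod, card_orderEmbedding_fin]; rfl

variable (r) in
theorem tendsto_card_orderPolytopePoints_div [IsStrictOrder V r] :
    Tendsto (fun N : ℕ => (Nat.card (OrderPolytopePoints r N) : ℝ) /
      ((N : ℝ) ^ Fintype.card V / (Fintype.card V)!)) atTop (𝓝 (linExtCount r)) := by
  set n := Fintype.card V
  have hlow := (tendsto_choose_add_div 1 n).const_mul (linExtCount r : ℝ)
  have hupp := (tendsto_choose_add_div n n).const_mul (linExtCount r : ℝ)
  rw [mul_one] at hlow hupp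
  refine tendsto_of_tendsto_of_tendsto_of_le_of_le hlow hupp (fun N => ?_) fun N => ?_
  · rw [← mul_div_assoc]
    gcongr
    exact_mod_cast linExtCount_mul_choose_le_card N
  · rw [← mul_div_assoc]
    gcongr
    exact_mod_cast card_le_linExtCount_mul_choose N

end Counting

section Comparison

variable {r₁ r₂ : V → V → Prop}

def ChainPolytopePoints.inclusion (hcomp : ∀ u v, r₂ u v → r₁ u v ∨ r₁ v u) (N : ℕ) :
    ChainPolytopePoints r₁ N → ChainPolytopePoints r₂ N :=
  fun g => ⟨g.1, fun s hs => g.2 s (isChain_of_comparable hcomp hs)⟩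

theorem ChainPolytopePoints.inclusion_injective (hcomp : ∀ u v, r₂ u v → r₁ u v ∨ r₁ v u)
    (N : ℕ) : Function.Injective (inclusion hcomp N) :=
  fun _ _ h => by
    have := Subtype.ext_iff.1 h
    exact Subtype.ext this

variable [Fintype V]

theorem card_chainPolytopePoints_add_pow_le [Std.Irrefl r₁]
    (hcomp : ∀ u v, r₂ u v → r₁ u v ∨ r₁ v u) {a b : V} (hab : r₁ a b) (ha : ¬ r₂ a b)
    (hb : ¬ r₂ b a) (m : ℕ) :
    Nat.card (ChainPolytopePoints r₁ ((2 * Fintype.card V + 1) * m)) + m ^ Fintype.card V ≤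
      Nat.card (ChainPolytopePoints r₂ ((2 * Fintype.card V + 1) * m)) := by
  classical
  set n := Fintype.card V
  set N := (2 * n + 1) * m with hN
  have hne : a ≠ b := ne_of_irrefl hab
  -- no `r₂`-chain contains both `a` and `b`, so lifting them by `(n + 1) m` stays in the
  -- chain polytope of `r₂`, but leaves that of `r₁`
  let bump : (V → Fin m) → V → ℕ := fun h v =>
    h v + if v ∈ ({a, b} : Finset V) then (n + 1) * m else 0
  have hbump : ∀ h, ∀ s : Finset V, IsChain r₂ (s : Set V) → ∑ v ∈ s, bump h v ≤ N := by
    intro h s hs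
    have hsmall : ∑ v ∈ s, (h v : ℕ) ≤ n * m :=
      (sum_le_card_nsmul s _ m fun v _ => (h v).isLt.le).trans
        (Nat.mul_le_mul_right m (card_le_univ s))
    have hlift : ∑ v ∈ s, (if v ∈ ({a, b} : Finset V) then (n + 1) * m else 0) ≤ (n + 1) * m := by
      rw [sum_ite_mem, sum_const, smul_eq_mul]
      exact (Nat.mul_le_mul_right _ (card_inter_pair_le_one_of_isChain hs ha hb)).trans_eq
        (one_mul _)
    rw [sum_add_distrib]
    have : N = n * m + (n + 1) * m := by rw [hN]; ring
    omega
  have hsep : ∀ g : ChainPolytopePoints r₁ N, g.1 a + g.1 b ≤ N := fun g => by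
    simpa [sum_pair hne] using g.2 {a, b} (by simpa using IsChain.pair hab)
  let F : ChainPolytopePoints r₁ N ⊕ (V → Fin m) → ChainPolytopePoints r₂ N :=
    Sum.elim (ChainPolytopePoints.inclusion hcomp N) fun h => ⟨bump h, hbump h⟩
  have hF : Function.Injective F := by
    refine (ChainPolytopePoints.inclusion_injective hcomp N).sumElim (fun h h' e => ?_)
      fun g h e => ?_
    · exact funext fun v => Fin.ext (Nat.add_right_cancel (congrFun (congrArg Subtype.val e) v))
    · have hgh : g.1 = bump h := Subtype.ext_iff.1 e
      have hm := (h a).pos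
      have := hsep g
      simp only [hgh, bump, mem_insert, mem_singleton, true_or, or_true, if_true] at this
      have : N < 2 * ((n + 1) * m) := by rw [hN]; nlinarith
      omega
  have := Nat.card_le_card_of_injective F hF
  rwa [Nat.card_sum, Nat.card_fun, Nat.card_fin, Nat.card_eq_fintype_card (α := V)] at this

theorem linExtCount_add_le_of_card_add_le [IsStrictOrder V r₁] [IsStrictOrder V r₂] {c d : ℕ}
    (hc : 0 < c) (h : ∀ m, Nat.card (OrderPolytopePoints r₁ (c * m)) + d * m ^ Fintype.card V ≤
      Nat.card (OrderPolytopePoints r₂ (c * m))) :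
    (linExtCount r₁ : ℝ) + d * (Fintype.card V)! / c ^ Fintype.card V ≤ linExtCount r₂ := by
  set n := Fintype.card V
  have hcm : Tendsto (fun m : ℕ => c * m) atTop atTop :=
    tendsto_id.const_mul_atTop' hc
  refine le_of_tendsto_of_tendsto
    (((tendsto_card_orderPolytopePoints_div r₁).comp hcm).add_const _)
    ((tendsto_card_orderPolytopePoints_div r₂).comp hcm) ?_
  filter_upwards [eventually_ge_atTop 1] with m hm
  have hm' : (0 : ℝ) < m := by exact_mod_cast hm
  have hextra : (d : ℝ) * n ! / c ^ n = d * m ^ n / (((c * m : ℕ) : ℝ) ^ n / n !) := by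
    push_cast
    field_simp
    ring
  simp only [Function.comp_apply, hextra]
  rw [← add_div]
  gcongr
  exact_mod_cast h m

theorem linExtCount_le_of_comparable [IsStrictOrder V r₁] [IsStrictOrder V r₂]
    (hcomp : ∀ u v, r₂ u v → r₁ u v ∨ r₁ v u) : linExtCount r₁ ≤ linExtCount r₂ := by
  have key := linExtCount_add_le_of_card_add_le (r₁ := r₁) (r₂ := r₂) (c := 1) (d := 0) one_pos
    fun m => by
      rw [zero_mul, add_zero, Nat.card_congr (orderPolytopePointsEquiv r₁ _),
        Nat.card_congr (orderPolytopePointsEquiv r₂ _)]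
      exact Nat.card_le_card_of_injective _ (ChainPolytopePoints.inclusion_injective hcomp _)
  exact_mod_cast (by simpa using key)

theorem linExtCount_lt_of_comparable [IsStrictOrder V r₁] [IsStrictOrder V r₂]
    (hcomp : ∀ u v, r₂ u v → r₁ u v ∨ r₁ v u) {a b : V} (hab : r₁ a b) (ha : ¬ r₂ a b)
    (hb : ¬ r₂ b a) : linExtCount r₁ < linExtCount r₂ := by
  have key := linExtCount_add_le_of_card_add_le (r₁ := r₁) (r₂ := r₂)
    (c := 2 * Fintype.card V + 1) (d := 1) (by positivity) fun m => by
      rw [one_mul, Nat.card_congr (orderPolytopePointsEquiv r₁ _),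
        Nat.card_congr (orderPolytopePointsEquiv r₂ _)]
      exact card_chainPolytopePoints_add_pow_le hcomp hab ha hb m
  have hpos : (0 : ℝ) < ((1 : ℕ) : ℝ) * (Fintype.card V)! /
      ((2 * Fintype.card V + 1 : ℕ) : ℝ) ^ Fintype.card V := by
    positivity
  exact_mod_cast (lt_add_of_pos_right _ hpos).trans_le key

end Comparison

end PosetPolytope

namespace GraphOrientation

open PosetPolytope

variable {V : Type*} {G : SimpleGraph V}

theorem transGen_or_transGen_of_adj (O : GraphOrientation G) {u v : V} (h : G.Adj u v) :
    TransGen O.dir u v ∨ TransGen O.dir v u :=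
  (O.adj_dir u v h).imp TransGen.single TransGen.single

theorem Acyclic.isStrictOrder {O : GraphOrientation G} (hO : O.Acyclic) :
    IsStrictOrder V (TransGen O.dir) where
  irrefl := hO
  trans _ _ _ := TransGen.trans

theorem isTransitive_iff {O : GraphOrientation G} :
    O.IsTransitive ↔ ∀ u v, TransGen O.dir u v → G.Adj u v :=
  ⟨fun h u v huv => (h u v).1 (Or.inl huv), fun h u v =>
    ⟨fun huv => huv.elim (h u v) fun hvu => (h v u hvu).symm, O.transGen_or_transGen_of_adj⟩⟩

theorem IsTransitive.acyclic {O : GraphOrientation G} (hO : O.IsTransitive) : O.Acyclic :=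
  fun v h => G.irrefl (isTransitive_iff.1 hO v v h)

section OfPartialOrder

variable [PartialOrder V] (hP : ∀ u v, G.Adj u v ↔ u ≠ v ∧ (u ≤ v ∨ v ≤ u))

def ofPartialOrder : GraphOrientation G where
  dir u v := G.Adj u v ∧ u < v
  dir_adj _ _ h := h.1
  adj_dir u v h := ((hP u v).1 h).2.imp (fun huv => ⟨h, huv.lt_of_ne (G.ne_of_adj h)⟩)
    fun hvu => ⟨h.symm, hvu.lt_of_ne (G.ne_of_adj h).symm⟩
  asymm _ _ h h' := h.2.asymm h'.2

theorem isTransitive_ofPartialOrder : (ofPartialOrder hP).IsTransitive := by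
  have : IsTrans V (ofPartialOrder hP).dir := ⟨fun u v w huv hvw =>
    have huw := huv.2.trans hvw.2
    ⟨(hP u w).2 ⟨huw.ne, Or.inl huw.le⟩, huw⟩⟩
  refine isTransitive_iff.2 fun u v h => ?_
  rw [transGen_eq_self] at h
  exact h.1

end OfPartialOrder

variable [Fintype V]

theorem numLinExt_le_of_isTransitive {O O' : GraphOrientation G} (hO : O.IsTransitive)
    (hO' : O'.Acyclic) : O'.numLinExt ≤ O.numLinExt := by
  have := hO'.isStrictOrder
  have := hO.acyclic.isStrictOrder
  exact linExtCount_le_of_comparable fun u v h =>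
    O'.transGen_or_transGen_of_adj (isTransitive_iff.1 hO u v h)

theorem numLinExt_lt_of_isTransitive {O T : GraphOrientation G} (hO : O.Acyclic)
    (hT : T.IsTransitive) {a b : V} (hab : TransGen O.dir a b) (hnadj : ¬ G.Adj a b) :
    O.numLinExt < T.numLinExt := by
  have := hO.isStrictOrder
  have := hT.acyclic.isStrictOrder
  exact linExtCount_lt_of_comparable
    (fun u v h => O.transGen_or_transGen_of_adj (isTransitive_iff.1 hT u v h)) hab
    (fun h => hnadj (isTransitive_iff.1 hT a b h)) fun h => hnadj (isTransitive_iff.1 hT b a h).symm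

end GraphOrientation

theorem stmt_11_general {V : Type*} [Fintype V] (G : SimpleGraph V)
    (hcomp : ∃ P : PartialOrder V, ∀ u v, G.Adj u v ↔ u ≠ v ∧ (P.le u v ∨ P.le v u))
    (O : GraphOrientation G) (hO : O.Acyclic) :
    (∀ O' : GraphOrientation G, O'.Acyclic → O'.numLinExt ≤ O.numLinExt) ↔
      O.IsTransitive := by
  refine ⟨fun hmax => ?_, fun hOt O' hO' => GraphOrientation.numLinExt_le_of_isTransitive hOt hO'⟩
  obtain ⟨P, hP⟩ := hcomp
  let := P
  have hT := GraphOrientation.isTransitive_ofPartialOrder hP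
  refine GraphOrientation.isTransitive_iff.2 fun a b hab => by_contra fun hnadj => ?_
  exact (hmax _ hT.acyclic).not_gt (GraphOrientation.numLinExt_lt_of_isTransitive hO hT hab hnadj)

theorem stmt_11 {V : Type*} [Fintype V] (G : SimpleGraph V) (hconn : G.Connected)
    (hcomp : ∃ P : PartialOrder V, ∀ u v, G.Adj u v ↔ u ≠ v ∧ (P.le u v ∨ P.le v u))
    (O : GraphOrientation G) (hO : O.Acyclic) :
    (∀ O' : GraphOrientation G, O'.Acyclic → O'.numLinExt ≤ O.numLinExt) ↔
      O.IsTransitive :=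
  stmt_11_general G hcomp O hO
end
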